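/- arXiv:2501.08126 — 6 statements merged into one kernel-verified Lean document; each statement's English description precedes it below -/
import Mathlib

section
/- Let k be an algebraically closed field of characteristic p > 0 and let a, b, c, d ∈ k be such that the homogeneous polynomial g = a·s^{p+1} + b·s^p·t + c·s·t^p + d·t^{p+1} ∈ k[s,t] is nonzero and has at least three pairwise non-proportional zeros (u,v) ∈ k² \ {(0,0)}. Then there exists an invertible matrix σ = (α β; γ δ) ∈ GL₂(k) such that substituting s ↦ α·s + β·t and t ↦ γ·s + δ·t into g yields s^p·t − s·t^p. -/
open MvPolynomial

/-- Two nonzero vectors `z, w ∈ k²` are proportional if `w = λ • z` for some `λ ∈ k`. -/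
def Proportional {k : Type*} [Field k] (z w : k × k) : Prop :=
  ∃ l : k, w = (l * z.1, l * z.2)

lemma proportional_of_det {k : Type*} [Field k] {z w : k × k} (hz : z ≠ (0, 0))
    (h : z.1 * w.2 - w.1 * z.2 = 0) : Proportional z w := by
  obtain ⟨z1, z2⟩ := z
  obtain ⟨w1, w2⟩ := w
  dsimp only at h ⊢
  by_cases h1 : z1 = 0
  · have h2 : z2 ≠ 0 := fun h2 => hz (by rw [h1, h2])
    have hw1 : w1 = 0 := by
      have hw : w1 * z2 = 0 := by linear_combination w2 * h1 - h
      exact (mul_eq_zero.1 hw).resolve_right h2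
    refine ⟨w2 / z2, ?_⟩
    simp only [Prod.mk.injEq]
    constructor
    · rw [hw1, h1, mul_zero]
    · field_simp
  · refine ⟨w1 / z1, ?_⟩
    simp only [Prod.mk.injEq]
    constructor
    · field_simp
    · field_simp
      linear_combination h

lemma aeval_linear {k : Type*} [Field k] (A B w00 w01 w10 w11 : k) :
    aeval ![C w00 * X 0 + C w01 * X 1, C w10 * X 0 + C w11 * X 1]
      (C A * X 0 + C B * X 1 : MvPolynomial (Fin 2) k)
    = C (A * w00 + B * w10) * X 0 + C (A * w01 + B * w11) * X 1 := by
  simp only [map_add, map_mul, aeval_X, aeval_C, algebraMap_eq,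
    Matrix.cons_val_zero, Matrix.cons_val_one, Matrix.head_cons]
  ring

lemma expand_aeval {k : Type*} [Field k] (p : ℕ) [Fact p.Prime] [CharP k p]
    {σ' : Type*} (a b c d α β γ δ : k) (s t : MvPolynomial σ' k) :
    aeval ![C α * s + C β * t, C γ * s + C δ * t]
      (C a * X 0 ^ (p + 1) + C b * X 0 ^ p * X 1 + C c * X 0 * X 1 ^ p
        + C d * X 1 ^ (p + 1) : MvPolynomial (Fin 2) k)
    = C (a * α ^ (p+1) + b * α ^ p * γ + c * α * γ ^ p + d * γ ^ (p+1)) * s ^ (p+1)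
    + C (a * α ^ p * β + b * α ^ p * δ + c * β * γ ^ p + d * γ ^ p * δ) * s ^ p * t
    + C (a * α * β ^ p + b * β ^ p * γ + c * α * δ ^ p + d * γ * δ ^ p) * s * t ^ p
    + C (a * β ^ (p+1) + b * β ^ p * δ + c * β * δ ^ p + d * δ ^ (p+1)) * t ^ (p+1) := by
  simp only [map_add, map_mul, map_pow, aeval_X, aeval_C, algebraMap_eq,
    Matrix.cons_val_zero, Matrix.cons_val_one, Matrix.head_cons]
  rw [pow_succ (C α * s + C β * t), pow_succ (C γ * s + C δ * t)]
  rw [add_pow_char (C α * s) (C β * t) p, add_pow_char (C γ * s) (C δ * t) p]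
  ring

theorem normal_form_of_three_roots (k : Type*) [Field k] [IsAlgClosed k]
    (p : ℕ) (hp : 0 < p) [CharP k p] (a b c d : k)
    (g : MvPolynomial (Fin 2) k)
    (hg : g = C a * X 0 ^ (p + 1) + C b * X 0 ^ p * X 1 + C c * X 0 * X 1 ^ p
            + C d * X 1 ^ (p + 1))
    (hg0 : g ≠ 0)
    (z₁ z₂ z₃ : k × k)
    (hz₁ : z₁ ≠ (0, 0)) (hz₂ : z₂ ≠ (0, 0)) (hz₃ : z₃ ≠ (0, 0))
    (he₁ : eval ![z₁.1, z₁.2] g = 0) (he₂ : eval ![z₂.1, z₂.2] g = 0)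
    (he₃ : eval ![z₃.1, z₃.2] g = 0)
    (h₁₂ : ¬ Proportional z₁ z₂) (h₁₃ : ¬ Proportional z₁ z₃)
    (h₂₃ : ¬ Proportional z₂ z₃) :
    ∃ α β γ δ : k, α * δ - β * γ ≠ 0 ∧
      aeval ![C α * X 0 + C β * X 1, C γ * X 0 + C δ * X 1] g
        = X 0 ^ p * X 1 - X 0 * X 1 ^ p := by
  haveI : NeZero p := ⟨hp.ne'⟩
  haveI : Fact p.Prime := CharP.char_is_prime_of_pos k p
  obtain ⟨u₁, v₁⟩ := z₁
  obtain ⟨u₂, v₂⟩ := z₂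
  obtain ⟨u₃, v₃⟩ := z₃
  dsimp only at he₁ he₂ he₃
  rw [hg] at he₁ he₂ he₃
  simp only [eval_add, eval_mul, eval_pow, eval_C, eval_X,
    Matrix.cons_val_zero, Matrix.cons_val_one, Matrix.head_cons] at he₁ he₂ he₃
  -- determinant of (z₁, z₂) is nonzero
  have hΔ : u₁ * v₂ - u₂ * v₁ ≠ 0 := fun h =>
    h₁₂ (proportional_of_det hz₁ (show u₁ * v₂ - u₂ * v₁ = 0 from h))
  obtain ⟨x, hxdef⟩ : ∃ x : k, x = (u₃ * v₂ - u₂ * v₃) / (u₁ * v₂ - u₂ * v₁) := ⟨_, rfl⟩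
  obtain ⟨y, hydef⟩ : ∃ y : k, y = (u₁ * v₃ - u₃ * v₁) / (u₁ * v₂ - u₂ * v₁) := ⟨_, rfl⟩
  have hx : x ≠ 0 := by
    intro h
    rw [hxdef, div_eq_zero_iff] at h
    rcases h with h | h
    · exact h₂₃ (proportional_of_det hz₂ (show u₂ * v₃ - u₃ * v₂ = 0 by linear_combination -h))
    · exact hΔ h
  have hy : y ≠ 0 := by
    intro h
    rw [hydef, div_eq_zero_iff] at h
    rcases h with h | h
    · exact h₁₃ (proportional_of_det hz₁ (show u₁ * v₃ - u₃ * v₁ = 0 from h))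
    · exact hΔ h
  have hu₃ : u₃ = x * u₁ + y * u₂ := by rw [hxdef, hydef, div_mul_eq_mul_div, div_mul_eq_mul_div, ← add_div, eq_div_iff hΔ]; ring
  have hv₃ : v₃ = x * v₁ + y * v₂ := by rw [hxdef, hydef, div_mul_eq_mul_div, div_mul_eq_mul_div, ← add_div, eq_div_iff hΔ]; ring
  -- the four coefficients of the transformed polynomial (before scaling)
  have hA : a * (x*u₁)^(p+1) + b * (x*u₁)^p * (x*v₁) + c * (x*u₁) * (x*v₁)^p
      + d * (x*v₁)^(p+1) = 0 := by linear_combination x^(p+1) * he₁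
  have hD : a * (y*u₂)^(p+1) + b * (y*u₂)^p * (y*v₂) + c * (y*u₂) * (y*v₂)^p
      + d * (y*v₂)^(p+1) = 0 := by linear_combination y^(p+1) * he₂
  obtain ⟨B, hBdef⟩ : ∃ B : k, B = a * (x*u₁)^p * (y*u₂) + b * (x*u₁)^p * (y*v₂)
      + c * (y*u₂) * (x*v₁)^p + d * (x*v₁)^p * (y*v₂) := ⟨_, rfl⟩
  obtain ⟨Cc, hCdef⟩ : ∃ Cc : k, Cc = a * (x*u₁) * (y*u₂)^p + b * (y*u₂)^p * (x*v₁)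
      + c * (x*u₁) * (y*v₂)^p + d * (x*v₁) * (y*v₂)^p := ⟨_, rfl⟩
  have hBC : B + Cc = 0 := by
    rw [hu₃, hv₃] at he₃
    rw [pow_succ (x*u₁ + y*u₂), pow_succ (x*v₁ + y*v₂)] at he₃
    rw [add_pow_char (x*u₁) (y*u₂) p, add_pow_char (x*v₁) (y*v₂) p] at he₃
    rw [hBdef, hCdef]
    linear_combination he₃ - hA - hD
  -- B is nonzero, else g would vanish
  have hB : B ≠ 0 := by
    intro hB0
    have hC0 : Cc = 0 := by linear_combination hBC - hB0
    apply hg0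
    have hfwd : aeval (![C (x*u₁) * X 0 + C (y*u₂) * X 1,
        C (x*v₁) * X 0 + C (y*v₂) * X 1] : Fin 2 → MvPolynomial (Fin 2) k) g = 0 := by
      rw [hg, expand_aeval, hA, hD, ← hBdef, ← hCdef, hB0, hC0]
      simp
    obtain ⟨Δ', hΔ'def⟩ : ∃ D' : k, D' = (x*u₁) * (y*v₂) - (y*u₂) * (x*v₁) := ⟨_, rfl⟩
    have hΔ' : Δ' ≠ 0 := by
      intro h
      rw [hΔ'def] at h
      have : x * y * (u₁ * v₂ - u₂ * v₁) = 0 := by linear_combination h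
      rcases mul_eq_zero.1 this with h' | h'
      · rcases mul_eq_zero.1 h' with h'' | h''
        · exact hx h''
        · exact hy h''
      · exact hΔ h'
    -- the inverse substitution
    have hw0 : aeval (![C (Δ'⁻¹ * (y*v₂)) * X 0 + C (-(Δ'⁻¹ * (y*u₂))) * X 1,
          C (-(Δ'⁻¹ * (x*v₁))) * X 0 + C (Δ'⁻¹ * (x*u₁)) * X 1] : Fin 2 → MvPolynomial (Fin 2) k)
        (C (x*u₁) * X 0 + C (y*u₂) * X 1 : MvPolynomial (Fin 2) k) = X 0 := by
      have hc1 : (C Δ' : MvPolynomial (Fin 2) k)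
          = C x * C u₁ * (C y * C v₂) - C y * C u₂ * (C x * C v₁) := by
        rw [hΔ'def]; simp only [map_sub, map_mul]
      have hc2 : (C Δ'⁻¹ : MvPolynomial (Fin 2) k) * C Δ' = 1 := by
        rw [← map_mul, inv_mul_cancel₀ hΔ', map_one]
      simp only [map_add, map_mul, map_neg, aeval_X, aeval_C, algebraMap_eq,
        Matrix.cons_val_zero, Matrix.cons_val_one, Matrix.head_cons]
      linear_combination (X 0 : MvPolynomial (Fin 2) k) * hc2
        - (X 0 : MvPolynomial (Fin 2) k) * C Δ'⁻¹ * hc1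
    have hw1 : aeval (![C (Δ'⁻¹ * (y*v₂)) * X 0 + C (-(Δ'⁻¹ * (y*u₂))) * X 1,
          C (-(Δ'⁻¹ * (x*v₁))) * X 0 + C (Δ'⁻¹ * (x*u₁)) * X 1] : Fin 2 → MvPolynomial (Fin 2) k)
        (C (x*v₁) * X 0 + C (y*v₂) * X 1 : MvPolynomial (Fin 2) k) = X 1 := by
      have hc1 : (C Δ' : MvPolynomial (Fin 2) k)
          = C x * C u₁ * (C y * C v₂) - C y * C u₂ * (C x * C v₁) := by
        rw [hΔ'def]; simp only [map_sub, map_mul]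
      have hc2 : (C Δ'⁻¹ : MvPolynomial (Fin 2) k) * C Δ' = 1 := by
        rw [← map_mul, inv_mul_cancel₀ hΔ', map_one]
      simp only [map_add, map_mul, map_neg, aeval_X, aeval_C, algebraMap_eq,
        Matrix.cons_val_zero, Matrix.cons_val_one, Matrix.head_cons]
      linear_combination (X 1 : MvPolynomial (Fin 2) k) * hc2
        - (X 1 : MvPolynomial (Fin 2) k) * C Δ'⁻¹ * hc1
    have hcomp := comp_aeval_apply
      (f := (![C (x*u₁) * X 0 + C (y*u₂) * X 1,
        C (x*v₁) * X 0 + C (y*v₂) * X 1] : Fin 2 → MvPolynomial (Fin 2) k))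
      (aeval (![C (Δ'⁻¹ * (y*v₂)) * X 0 + C (-(Δ'⁻¹ * (y*u₂))) * X 1,
        C (-(Δ'⁻¹ * (x*v₁))) * X 0 + C (Δ'⁻¹ * (x*u₁)) * X 1] : Fin 2 → MvPolynomial (Fin 2) k)) g
    have hXeq : (fun i => aeval (![C (Δ'⁻¹ * (y*v₂)) * X 0 + C (-(Δ'⁻¹ * (y*u₂))) * X 1,
          C (-(Δ'⁻¹ * (x*v₁))) * X 0 + C (Δ'⁻¹ * (x*u₁)) * X 1] : Fin 2 → MvPolynomial (Fin 2) k)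
        ((![C (x*u₁) * X 0 + C (y*u₂) * X 1,
          C (x*v₁) * X 0 + C (y*v₂) * X 1] : Fin 2 → MvPolynomial (Fin 2) k) i))
        = (X : Fin 2 → MvPolynomial (Fin 2) k) := by
      funext i
      fin_cases i
      · exact hw0
      · exact hw1
    rw [hXeq, aeval_X_left_apply] at hcomp
    have hfin := hcomp.symm.trans (congrArg _ hfwd)
    rw [map_zero] at hfin
    exact hfin
  -- choose the scaling factor
  obtain ⟨μ, hμ⟩ := IsAlgClosed.exists_pow_nat_eq (k := k) B⁻¹ (n := p + 1) (by positivity)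
  have hμ0 : μ ≠ 0 := by
    intro h
    rw [h, zero_pow (Nat.succ_ne_zero p)] at hμ
    exact hB (inv_eq_zero.1 hμ.symm)
  have h1 : μ ^ (p+1) * B = 1 := by rw [hμ, inv_mul_cancel₀ hB]
  refine ⟨μ*(x*u₁), μ*(y*u₂), μ*(x*v₁), μ*(y*v₂), ?_, ?_⟩
  · intro h0
    have h1' : μ * μ * (x * (y * (u₁ * v₂ - u₂ * v₁))) = 0 := by linear_combination h0
    rcases mul_eq_zero.1 h1' with h' | h'
    · exact hμ0 ((mul_self_eq_zero).1 h')
    · rcases mul_eq_zero.1 h' with h'' | h''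
      · exact hx h''
      · rcases mul_eq_zero.1 h'' with h''' | h'''
        · exact hy h'''
        · exact hΔ h'''
  · rw [hg, expand_aeval]
    have hE1 : a * (μ*(x*u₁)) ^ (p+1) + b * (μ*(x*u₁)) ^ p * (μ*(x*v₁))
        + c * (μ*(x*u₁)) * (μ*(x*v₁)) ^ p + d * (μ*(x*v₁)) ^ (p+1) = 0 := by
      linear_combination μ^(p+1) * hA
    have hE4 : a * (μ*(y*u₂)) ^ (p+1) + b * (μ*(y*u₂)) ^ p * (μ*(y*v₂))
        + c * (μ*(y*u₂)) * (μ*(y*v₂)) ^ p + d * (μ*(y*v₂)) ^ (p+1) = 0 := by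
      linear_combination μ^(p+1) * hD
    have hE2 : a * (μ*(x*u₁)) ^ p * (μ*(y*u₂)) + b * (μ*(x*u₁)) ^ p * (μ*(y*v₂))
        + c * (μ*(y*u₂)) * (μ*(x*v₁)) ^ p + d * (μ*(x*v₁)) ^ p * (μ*(y*v₂)) = 1 := by
      linear_combination h1 - μ^(p+1) * hBdef
    have hE3 : a * (μ*(x*u₁)) * (μ*(y*u₂)) ^ p + b * (μ*(y*u₂)) ^ p * (μ*(x*v₁))
        + c * (μ*(x*u₁)) * (μ*(y*v₂)) ^ p + d * (μ*(x*v₁)) * (μ*(y*v₂)) ^ p = -1 := by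
      linear_combination μ^(p+1) * hBC - h1 - μ^(p+1) * hCdef
    rw [hE1, hE2, hE3, hE4]
    simp only [map_zero, map_one, map_neg]
    ring
end

section
/- Let k be a field of characteristic 5, and let a₄, a₆ ∈ k[s,t,x,y] be homogeneous polynomials of degrees 4 and 6 respectively involving only the variables s and t. Set f = y² − (x³ + a₄·x + a₆). Then f⁴ lies in the ideal (s⁵, t⁵, x⁵, y⁵) of k[s,t,x,y] if and only if a₄ = 0 and there exist a, b, c, d ∈ k with a₆ = a·s⁶ + b·s⁵·t + c·s·t⁵ + d·t⁶. -/
/-!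
Write `g = x³ + a₄x + a₆`, which does not involve `y`. The ideal `(s⁵, t⁵, x⁵, y⁵)` is a monomial
ideal, so a polynomial lies in it iff it has no monomial with all exponents below `5`. In the
binomial expansion of `f⁴ = (y² − g)⁴` only `6y⁴g²` contributes to monomials of `y`-degree `4`,
and in `g² = x⁶ + 2a₄x⁴ + 2a₆x³ + ⋯` only `2a₄x⁴` (resp. `2a₆x³`) contributes to monomials of
`x`-degree `4` (resp. `3`). Since `12 ≠ 0` in characteristic `5`, `f⁴ ∈ (s⁵, t⁵, x⁵, y⁵)` forces
`a₄` and `a₆` into the ideal too; by degree this kills `a₄` and leaves only `s⁶, s⁵t, st⁵, t⁶` in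
`a₆`. Conversely, if `a₄ = 0` and `a₆ ∈ (s⁵, t⁵)`, an explicit identity puts `f⁴` in the ideal.
-/

open MvPolynomial

namespace MvPolynomial

variable {σ R : Type*}

section CommSemiring

variable [CommSemiring R]

theorem coeff_eq_zero_of_mem_supported {s : Set σ} {p : MvPolynomial σ R}
    (hp : p ∈ supported R s) {i : σ} (hi : i ∉ s) {m : σ →₀ ℕ} (hm : m i ≠ 0) :
    coeff m p = 0 := by
  by_contra h
  exact hi (mem_supported.1 hp ((mem_vars_iff_mem_support i).2
    ⟨m, mem_support_iff.2 h, Finsupp.mem_support_iff.2 hm⟩))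

theorem rename_mem_supported_range {τ : Type*} (f : σ → τ) (p : MvPolynomial σ R) :
    rename f p ∈ supported R (Set.range f) := by
  refine mem_supported.2 fun j hj => ?_
  obtain ⟨i, -, rfl⟩ := mem_vars_rename f p hj
  exact ⟨i, rfl⟩

theorem mem_span_X_pow_iff {n : ℕ} {p : MvPolynomial σ R} :
    p ∈ Ideal.span (Set.range fun i => (X i ^ n : MvPolynomial σ R)) ↔
      ∀ m : σ →₀ ℕ, (∀ i, m i < n) → coeff m p = 0 := by
  have hrange : (Set.range fun i => (X i ^ n : MvPolynomial σ R))
      = (fun s => monomial s (1 : R)) '' Set.range fun i => Finsupp.single i n := by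
    rw [← Set.range_comp]; simp only [Function.comp_def, X_pow_eq_monomial]
  rw [hrange, mem_ideal_span_monomial_image]
  refine forall_congr' fun m => ?_
  simp only [mem_support_iff, Set.exists_range_iff, Finsupp.single_le_iff]
  rw [← not_imp_not]
  simp only [not_exists, not_le, not_not]

theorem IsHomogeneous.eq_zero_of_mem_span_X_pow {n N : ℕ} {p : MvPolynomial σ R}
    (hp : p.IsHomogeneous n) (hn : n < N)
    (hI : p ∈ Ideal.span (Set.range fun i => (X i ^ N : MvPolynomial σ R))) : p = 0 := by
  ext m
  by_contra h
  refine h (mem_span_X_pow_iff.1 hI m fun i => ?_)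
  have hdeg : m.degree = n := by rw [Finsupp.degree_eq_weight_one]; exact hp h
  exact ((m.le_degree i).trans hdeg.le).trans_lt hn

theorem coeff_add_single_mul_X_pow {j : σ} {q : MvPolynomial σ R}
    (hq : q ∈ supported R {j}ᶜ) {d : σ →₀ ℕ} (hd : d j = 0) (k n : ℕ) :
    coeff (d + Finsupp.single j k) (q * X j ^ n) = if n = k then coeff d q else 0 := by
  have hle : Finsupp.single j n ≤ d + Finsupp.single j k ↔ n ≤ k := by
    simp [Finsupp.single_le_iff, hd]
  rw [X_pow_eq_monomial, coeff_mul_monomial', mul_one]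
  split_ifs with hdiv hnk hnk
  · subst hnk; rw [add_tsub_cancel_right]
  · refine coeff_eq_zero_of_mem_supported hq (Set.notMem_compl_iff.2 rfl) ?_
    have := hle.1 hdiv
    simp only [Finsupp.coe_tsub, Finsupp.coe_add, Pi.sub_apply, Pi.add_apply, hd,
      Finsupp.single_eq_same, zero_add]
    omega
  · exact absurd (hle.2 hnk.le) hdiv
  · rfl

end CommSemiring

section CommRing

variable [CommRing R] {j : σ} {d : σ →₀ ℕ}

theorem coeff_add_single_X_sq_sub_pow_four {g : MvPolynomial σ R}
    (hg : g ∈ supported R {j}ᶜ) (hd : d j = 0) :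
    coeff (d + Finsupp.single j 4) ((X j ^ 2 - g) ^ 4) = 6 * coeff d (g ^ 2) := by
  have expand : (X j ^ 2 - g) ^ 4 = g ^ 0 * X j ^ 8 - C 4 * (g ^ 1 * X j ^ 6)
      + C 6 * (g ^ 2 * X j ^ 4) - C 4 * (g ^ 3 * X j ^ 2) + g ^ 4 * X j ^ 0 := by
    simp only [map_ofNat]; ring
  have coeff_pow_mul (i n : ℕ) := coeff_add_single_mul_X_pow (pow_mem hg i) hd 4 n
  rw [expand]
  simp only [coeff_add, coeff_sub, coeff_C_mul, coeff_pow_mul]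
  norm_num

theorem coeff_add_single_cubic_sq {a b : MvPolynomial σ R}
    (ha : a ∈ supported R {j}ᶜ) (hb : b ∈ supported R {j}ᶜ) (hd : d j = 0) :
    coeff (d + Finsupp.single j 4) ((X j ^ 3 + a * X j + b) ^ 2) = 2 * coeff d a ∧
      coeff (d + Finsupp.single j 3) ((X j ^ 3 + a * X j + b) ^ 2) = 2 * coeff d b := by
  have expand : (X j ^ 3 + a * X j + b) ^ 2 = a ^ 0 * X j ^ 6 + C 2 * (a * X j ^ 4)
      + C 2 * (b * X j ^ 3) + a ^ 2 * X j ^ 2 + C 2 * (a * b * X j ^ 1) + b ^ 2 * X j ^ 0 := by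
    simp only [map_ofNat]; ring
  have coeff_mul (q) (hq : q ∈ supported R {j}ᶜ) (k n : ℕ) :=
    coeff_add_single_mul_X_pow hq hd k n
  rw [expand]
  simp only [coeff_add, coeff_C_mul, coeff_mul _ ha, coeff_mul _ hb, coeff_mul _ (pow_mem ha _),
    coeff_mul _ (pow_mem hb _), coeff_mul _ (mul_mem ha hb)]
  norm_num

end CommRing

end MvPolynomial

theorem weierstrass_pow_four_mem {A : Type*} [CommRing A] {I : Ideal A} {x y b : A}
    (hx : x ^ 5 ∈ I) (hy : y ^ 5 ∈ I) (hb : b ∈ I) : (y ^ 2 - (x ^ 3 + b)) ^ 4 ∈ I := by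
  have expand : (y ^ 2 - (x ^ 3 + b)) ^ 4 = y ^ 5 * (y ^ 3 - 4 * y * x ^ 3)
      + x ^ 5 * (6 * x * y ^ 4 - 4 * x ^ 4 * y ^ 2 + x ^ 7)
      + b * (b ^ 3 + 6 * (y ^ 2 - x ^ 3) ^ 2 * b
        - 4 * (y ^ 2 - x ^ 3) ^ 3 - 4 * (y ^ 2 - x ^ 3) * b ^ 2) := by ring
  rw [expand]
  exact I.add_mem (I.add_mem (I.mul_mem_right _ hy) (I.mul_mem_right _ hx)) (I.mul_mem_right _ hb)

section Weierstrass

variable {R : Type*} [CommRing R] {a₄ a₆ : MvPolynomial (Fin 4) R}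

theorem coeff_weierstrass_pow_four (ha₄ : a₄ ∈ supported R {0, 1}) (ha₆ : a₆ ∈ supported R {0, 1})
    {d : Fin 4 →₀ ℕ} (hd₂ : d 2 = 0) (hd₃ : d 3 = 0) :
    coeff (d + Finsupp.single 2 4 + Finsupp.single 3 4)
        ((X 3 ^ 2 - (X 2 ^ 3 + a₄ * X 2 + a₆)) ^ 4) = 12 * coeff d a₄ ∧
      coeff (d + Finsupp.single 2 3 + Finsupp.single 3 4)
        ((X 3 ^ 2 - (X 2 ^ 3 + a₄ * X 2 + a₆)) ^ 4) = 12 * coeff d a₆ := by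
  have h₂ : supported R ({0, 1} : Set (Fin 4)) ≤ supported R {2}ᶜ :=
    supported_mono (by simp [Set.subset_def])
  have h₃ : supported R ({0, 1} : Set (Fin 4)) ≤ supported R {3}ᶜ :=
    supported_mono (by simp [Set.subset_def])
  have hX₂ : (X 2 : MvPolynomial (Fin 4) R) ∈ supported R {3}ᶜ :=
    Algebra.subset_adjoin (Set.mem_image_of_mem X (by simp))
  have hg : X 2 ^ 3 + a₄ * X 2 + a₆ ∈ supported R {3}ᶜ :=
    add_mem (add_mem (pow_mem hX₂ 3) (mul_mem (h₃ ha₄) hX₂)) (h₃ ha₆)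
  have hd (c : ℕ) : (d + Finsupp.single 2 c : Fin 4 →₀ ℕ) 3 = 0 := by simp [hd₃]
  obtain ⟨hc₄, hc₃⟩ := coeff_add_single_cubic_sq (h₂ ha₄) (h₂ ha₆) hd₂
  rw [coeff_add_single_X_sq_sub_pow_four hg (hd 4), coeff_add_single_X_sq_sub_pow_four hg (hd 3),
    hc₄, hc₃]
  constructor <;> ring

theorem mem_span_X_pow_five_of_weierstrass_pow_four_mem [NoZeroDivisors R] (h12 : (12 : R) ≠ 0)
    (ha₄ : a₄ ∈ supported R {0, 1}) (ha₆ : a₆ ∈ supported R {0, 1})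
    (h : (X 3 ^ 2 - (X 2 ^ 3 + a₄ * X 2 + a₆)) ^ 4 ∈
      Ideal.span (Set.range fun i => (X i ^ 5 : MvPolynomial (Fin 4) R))) :
    a₄ ∈ Ideal.span (Set.range fun i => (X i ^ 5 : MvPolynomial (Fin 4) R)) ∧
      a₆ ∈ Ideal.span (Set.range fun i => (X i ^ 5 : MvPolynomial (Fin 4) R)) := by
  rw [mem_span_X_pow_iff] at h
  have of_coeff_eq_zero {p : MvPolynomial (Fin 4) R} (hp : p ∈ supported R {0, 1})
      (hcoeff : ∀ m : Fin 4 →₀ ℕ, (∀ i, m i < 5) → m 2 = 0 → m 3 = 0 → coeff m p = 0) :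
      p ∈ Ideal.span (Set.range fun i => (X i ^ 5 : MvPolynomial (Fin 4) R)) := by
    refine mem_span_X_pow_iff.2 fun m hm => ?_
    by_cases hm₂ : m 2 = 0
    · by_cases hm₃ : m 3 = 0
      · exact hcoeff m hm hm₂ hm₃
      · exact coeff_eq_zero_of_mem_supported hp (by simp) hm₃
    · exact coeff_eq_zero_of_mem_supported hp (by simp) hm₂
  have shift_lt (m : Fin 4 →₀ ℕ) (hm : ∀ i, m i < 5) (hm₂ : m 2 = 0) (hm₃ : m 3 = 0) (c : ℕ)
      (hc : c ≤ 4) : ∀ i, (m + Finsupp.single 2 c + Finsupp.single 3 4 : Fin 4 →₀ ℕ) i < 5 := by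
    intro i; fin_cases i <;> simp [hm₂, hm₃, hm, Nat.lt_succ_of_le hc]
  refine ⟨of_coeff_eq_zero ha₄ fun m hm hm₂ hm₃ => ?_, of_coeff_eq_zero ha₆ fun m hm hm₂ hm₃ => ?_⟩
  · have := h _ (shift_lt m hm hm₂ hm₃ 4 le_rfl)
    rw [(coeff_weierstrass_pow_four ha₄ ha₆ hm₂ hm₃).1] at this
    exact (mul_eq_zero.1 this).resolve_left h12
  · have := h _ (shift_lt m hm hm₂ hm₃ 3 (by norm_num))
    rw [(coeff_weierstrass_pow_four ha₄ ha₆ hm₂ hm₃).2] at this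
    exact (mul_eq_zero.1 this).resolve_left h12

theorem exists_eq_of_isHomogeneous_six_mem_span {p : MvPolynomial (Fin 4) R}
    (hp : p.IsHomogeneous 6) (hs : p ∈ supported R {0, 1})
    (hI : p ∈ Ideal.span (Set.range fun i => (X i ^ 5 : MvPolynomial (Fin 4) R))) :
    ∃ a b c d : R,
      p = C a * X 0 ^ 6 + C b * X 0 ^ 5 * X 1 + C c * X 0 * X 1 ^ 5 + C d * X 1 ^ 6 := by
  set e : ℕ → Fin 4 →₀ ℕ := fun i => Finsupp.single 0 i + Finsupp.single 1 (6 - i)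
  have he₀ (i : ℕ) : e i 0 = i := by simp [e]
  have hsupp : p.support ⊆ ({6, 5, 1, 0} : Finset ℕ).image e := by
    intro m hm
    have hc := mem_support_iff.1 hm
    have hm₂ : m 2 = 0 := by
      by_contra h; exact hc (coeff_eq_zero_of_mem_supported hs (by simp) h)
    have hm₃ : m 3 = 0 := by
      by_contra h; exact hc (coeff_eq_zero_of_mem_supported hs (by simp) h)
    have hdeg : m 0 + m 1 = 6 := by
      have : m.degree = 6 := by rw [Finsupp.degree_eq_weight_one]; exact hp hc
      rw [Finsupp.degree_eq_sum, Fin.sum_univ_four] at this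
      omega
    have hbig : 5 ≤ m 0 ∨ 5 ≤ m 1 := by
      by_contra! h
      exact hc (mem_span_X_pow_iff.1 hI m (by intro i; fin_cases i <;> simp <;> omega))
    refine Finset.mem_image.2
      ⟨m 0, by simp only [Finset.mem_insert, Finset.mem_singleton]; omega, ?_⟩
    ext i
    fin_cases i <;> simp [e, hm₂, hm₃, show m 1 = 6 - m 0 by omega]
  refine ⟨coeff (e 6) p, coeff (e 5) p, coeff (e 1) p, coeff (e 0) p, ?_⟩
  conv_lhs => rw [as_sum p, Finset.sum_subset hsupp fun m _ hm => by
    rw [notMem_support_iff.1 hm, monomial_zero]]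
  rw [Finset.sum_image fun i _ j _ hij => by rw [← he₀ i, hij, he₀]]
  rw [Finset.sum_insert (by decide), Finset.sum_insert (by decide), Finset.sum_insert (by decide),
    Finset.sum_singleton]
  simp only [e, Nat.reduceSub, monomial_add_single, ← C_mul_X_pow_eq_monomial]
  ring

end Weierstrass

theorem char5_fedder_condition (k : Type*) [Field k] [CharP k 5]
    (a₄ a₆ : MvPolynomial (Fin 4) k)
    (h₄deg : a₄.IsHomogeneous 4) (h₆deg : a₆.IsHomogeneous 6)
    (h₄st : a₄ ∈ Set.range (rename (Fin.castLE (by norm_num : 2 ≤ 4)) :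
      MvPolynomial (Fin 2) k → MvPolynomial (Fin 4) k))
    (h₆st : a₆ ∈ Set.range (rename (Fin.castLE (by norm_num : 2 ≤ 4)) :
      MvPolynomial (Fin 2) k → MvPolynomial (Fin 4) k))
    (f : MvPolynomial (Fin 4) k)
    (hf : f = X 3 ^ 2 - (X 2 ^ 3 + a₄ * X 2 + a₆)) :
    f ^ 4 ∈ Ideal.span {(X 0 ^ 5 : MvPolynomial (Fin 4) k), X 1 ^ 5, X 2 ^ 5, X 3 ^ 5} ↔
      a₄ = 0 ∧ ∃ a b c d : k,
        a₆ = C a * X 0 ^ 6 + C b * X 0 ^ 5 * X 1 + C c * X 0 * X 1 ^ 5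
            + C d * X 1 ^ 6 := by
  have supported_of_mem_range {a : MvPolynomial (Fin 4) k}
      (ha : a ∈ Set.range (rename (Fin.castLE (by norm_num : 2 ≤ 4)))) :
      a ∈ supported k {0, 1} := by
    obtain ⟨p, rfl⟩ := ha
    convert rename_mem_supported_range _ p
    ext i; fin_cases i <;> simp [Fin.ext_iff]
  have span_eq : Ideal.span {(X 0 ^ 5 : MvPolynomial (Fin 4) k), X 1 ^ 5, X 2 ^ 5, X 3 ^ 5}
      = Ideal.span (Set.range fun i => X i ^ 5) := by
    congr 1; ext; simp [Fin.exists_fin_succ, eq_comm]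
  have h12 : (12 : k) ≠ 0 := by
    exact_mod_cast (CharP.cast_eq_zero_iff k 5 12).not.mpr (by decide)
  rw [span_eq, hf]
  constructor
  · intro h
    obtain ⟨h₄, h₆⟩ := mem_span_X_pow_five_of_weierstrass_pow_four_mem h12
      (supported_of_mem_range h₄st) (supported_of_mem_range h₆st) h
    exact ⟨h₄deg.eq_zero_of_mem_span_X_pow (by norm_num) h₄,
      exists_eq_of_isHomogeneous_six_mem_span h₆deg (supported_of_mem_range h₆st) h₆⟩
  · rintro ⟨rfl, a, b, c, d, rfl⟩
    rw [zero_mul, add_zero]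
    have mem (i : Fin 4) : (X i ^ 5 : MvPolynomial (Fin 4) k) ∈
        Ideal.span (Set.range fun i => X i ^ 5) := Ideal.subset_span ⟨i, rfl⟩
    refine weierstrass_pow_four_mem (mem 2) (mem 3) ?_
    have factor : (C a * X 0 ^ 6 + C b * X 0 ^ 5 * X 1 + C c * X 0 * X 1 ^ 5 + C d * X 1 ^ 6 :
        MvPolynomial (Fin 4) k)
        = X 0 ^ 5 * (C a * X 0 + C b * X 1) + X 1 ^ 5 * (C c * X 0 + C d * X 1) := by ring
    rw [factor]
    exact add_mem (Ideal.mul_mem_right _ _ (mem 0)) (Ideal.mul_mem_right _ _ (mem 1))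
end

section
/- Let k be an algebraically closed field of characteristic 5, let a₄, a₆ ∈ k[s,t,x,y] be homogeneous polynomials of degrees 4 and 6 respectively involving only the variables s and t, and set f = y² − (x³ + a₄·x + a₆). Then the quotient ring k[s,t,x,y]/(f) is not F-split if and only if a₄ = 0 and there exist a, b, c, d ∈ k with a₆ = a·s⁶ + b·s⁵·t + c·s·t⁵ + d·t⁶. -/
open MvPolynomial

/-- A commutative ring `R` of characteristic `p` is *F-split* if the Frobenius
`r ↦ r ^ p` admits a splitting as a map of `R`-modules: there is an additive map
`φ : R → R` with `φ (a ^ p * b) = a * φ b` for all `a b : R` and `φ 1 = 1`. -/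
def IsFSplit (R : Type*) [CommRing R] (p : ℕ) : Prop :=
  ∃ φ : R →+ R, φ 1 = 1 ∧ ∀ a b : R, φ (a ^ p * b) = a * φ b

set_option maxHeartbeats 1000000
set_option synthInstance.maxHeartbeats 1000000


namespace FA
variable {k : Type*} [CommRing k]

/-- weighted degree of an exponent, weights (1,1,2,3) -/
def wt (e : Fin 4 →₀ ℕ) : ℕ := e 0 + e 1 + 2 * e 2 + 3 * e 3

lemma wt_add (u e : Fin 4 →₀ ℕ) : wt (u + e) = wt u + wt e := by
  simp [wt, Finsupp.add_apply]; ring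

/-- weighted-homogeneity (in the weak sense) -/
def Hg (n : ℕ) (P : MvPolynomial (Fin 4) k) : Prop := ∀ e, coeff e P ≠ 0 → wt e = n

lemma Hg_mul {m n : ℕ} {P Q : MvPolynomial (Fin 4) k} (hP : Hg m P) (hQ : Hg n Q) :
    Hg (m + n) (P * Q) := by
  intro e he
  by_contra hne
  apply he
  rw [coeff_mul]
  apply Finset.sum_eq_zero
  rintro ⟨u, v⟩ huv
  rw [Finset.HasAntidiagonal.mem_antidiagonal] at huv
  by_cases h1 : coeff u P = 0
  · simp [h1]
  by_cases h2 : coeff v Q = 0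
  · simp [h2]
  exact absurd (by rw [← huv, wt_add, hP u h1, hQ v h2]) hne

lemma Hg_add {n : ℕ} {P Q : MvPolynomial (Fin 4) k} (hP : Hg n P) (hQ : Hg n Q) :
    Hg n (P + Q) := by
  intro e he
  rw [coeff_add] at he
  rcases ne_or_eq (coeff e P) 0 with h | h
  · exact hP e h
  · exact hQ e (by simpa [h] using he)

lemma Hg_neg {n : ℕ} {P : MvPolynomial (Fin 4) k} (hP : Hg n P) : Hg n (-P) := by
  intro e he; exact hP e (by simpa using he)

lemma Hg_sub {n : ℕ} {P Q : MvPolynomial (Fin 4) k} (hP : Hg n P) (hQ : Hg n Q) :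
    Hg n (P - Q) := by
  rw [sub_eq_add_neg]; exact Hg_add hP (Hg_neg hQ)

lemma Hg_monomial (e : Fin 4 →₀ ℕ) (c : k) : Hg (wt e) (monomial e c) := by
  intro d hd
  rw [coeff_monomial] at hd
  split at hd
  · subst ‹e = d›; rfl
  · exact absurd rfl hd

lemma Hg_one : Hg 0 (1 : MvPolynomial (Fin 4) k) := by
  have := Hg_monomial (0 : Fin 4 →₀ ℕ) (1 : k)
  simpa [wt] using this

lemma Hg_pow {n : ℕ} {P : MvPolynomial (Fin 4) k} (hP : Hg n P) (m : ℕ) :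
    Hg (m * n) (P ^ m) := by
  induction m with
  | zero => simpa using Hg_one
  | succ m ih =>
      have := Hg_mul ih hP
      rw [pow_succ]
      convert this using 1
      ring

lemma Hg_X (i : Fin 4) : Hg (wt (Finsupp.single i 1)) (X i : MvPolynomial (Fin 4) k) := by
  rw [X]; exact Hg_monomial _ _

end FA

namespace FA
variable {k : Type*} [CommRing k]

/-- supported on the s,t variables only -/
def Zst (P : MvPolynomial (Fin 4) k) : Prop := ∀ e, coeff e P ≠ 0 → e 2 = 0 ∧ e 3 = 0

/-- no y variable -/
def Yfree (P : MvPolynomial (Fin 4) k) : Prop := ∀ e, coeff e P ≠ 0 → e 3 = 0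

lemma Zst.yfree {P : MvPolynomial (Fin 4) k} (h : Zst P) : Yfree P := fun e he => (h e he).2

lemma Yfree_mul {P Q : MvPolynomial (Fin 4) k} (hP : Yfree P) (hQ : Yfree Q) :
    Yfree (P * Q) := by
  intro e he
  by_contra hne
  apply he
  rw [coeff_mul]
  apply Finset.sum_eq_zero
  rintro ⟨u, v⟩ huv
  rw [Finset.HasAntidiagonal.mem_antidiagonal] at huv
  by_cases h1 : coeff u P = 0
  · simp [h1]
  by_cases h2 : coeff v Q = 0
  · simp [h2]
  exact absurd (by rw [← huv]; simp [Finsupp.add_apply, hP u h1, hQ v h2]) hne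

lemma Zst_mul {P Q : MvPolynomial (Fin 4) k} (hP : Zst P) (hQ : Zst Q) :
    Zst (P * Q) := by
  intro e he
  by_contra hne
  apply he
  rw [coeff_mul]
  apply Finset.sum_eq_zero
  rintro ⟨u, v⟩ huv
  rw [Finset.HasAntidiagonal.mem_antidiagonal] at huv
  by_cases h1 : coeff u P = 0
  · simp [h1]
  by_cases h2 : coeff v Q = 0
  · simp [h2]
  exfalso
  apply hne
  subst huv
  refine ⟨?_, ?_⟩
  · simp [Finsupp.add_apply, (hP u h1).1, (hQ v h2).1]
  · simp [Finsupp.add_apply, (hP u h1).2, (hQ v h2).2]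

lemma Yfree_add {P Q : MvPolynomial (Fin 4) k} (hP : Yfree P) (hQ : Yfree Q) :
    Yfree (P + Q) := by
  intro e he
  rw [coeff_add] at he
  rcases ne_or_eq (coeff e P) 0 with h | h
  · exact hP e h
  · exact hQ e (by simpa [h] using he)

lemma Yfree_X2 : Yfree (X 2 : MvPolynomial (Fin 4) k) := by
  intro e he
  rw [X, coeff_monomial] at he
  split at he
  · subst ‹Finsupp.single 2 1 = e›; simp
  · exact absurd rfl he

lemma Yfree_pow {P : MvPolynomial (Fin 4) k} (hP : Yfree P) (m : ℕ) : Yfree (P ^ m) := by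
  induction m with
  | zero =>
      intro e he
      rw [pow_zero, ← C_1, coeff_C] at he
      split at he
      · subst ‹0 = e›; simp
      · exact absurd rfl he
  | succ m ih => rw [pow_succ]; exact Yfree_mul ih hP

/-- membership in the image of k[s,t] gives Zst -/
lemma Zst_of_range {P : MvPolynomial (Fin 4) k}
    (h : P ∈ Set.range (rename (Fin.castLE (by norm_num : 2 ≤ 4)) :
      MvPolynomial (Fin 2) k → MvPolynomial (Fin 4) k)) : Zst P := by
  obtain ⟨q, rfl⟩ := h
  intro e he
  obtain ⟨u, rfl, -⟩ := coeff_rename_ne_zero _ _ _ he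
  constructor
  · apply Finsupp.mapDomain_notin_range
    rintro ⟨i, hi⟩
    have h1 : (i : ℕ) < 2 := i.2
    rw [Fin.ext_iff] at hi
    have h2 : (Fin.castLE (by norm_num : 2 ≤ 4) i : ℕ) = (i : ℕ) := rfl
    have h3 : ((2 : Fin 4) : ℕ) = 2 := rfl
    rw [h2, h3] at hi
    omega
  · apply Finsupp.mapDomain_notin_range
    rintro ⟨i, hi⟩
    have h1 : (i : ℕ) < 2 := i.2
    rw [Fin.ext_iff] at hi
    have h2 : (Fin.castLE (by norm_num : 2 ≤ 4) i : ℕ) = (i : ℕ) := rfl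
    have h3 : ((3 : Fin 4) : ℕ) = 3 := rfl
    rw [h2, h3] at hi
    omega

end FA

namespace FA
open scoped Classical

variable {k : Type*} [Field k] [IsAlgClosed k] [CharP k 5]

instance fact5 : Fact (Nat.Prime 5) := ⟨by norm_num⟩

noncomputable def tau : k ≃+* k := (frobeniusEquiv k 5).symm

lemma tau_pow5 (c : k) : tau (c ^ 5) = c := by
  have : frobeniusEquiv k 5 c = c ^ 5 := rfl
  rw [tau, ← this, RingEquiv.symm_apply_apply]

noncomputable def div5 (e : Fin 4 →₀ ℕ) : Fin 4 →₀ ℕ := e.mapRange (· / 5) (Nat.zero_div 5)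

lemma div5_apply (e : Fin 4 →₀ ℕ) (i : Fin 4) : div5 e i = e i / 5 :=
  Finsupp.mapRange_apply

def ok (e : Fin 4 →₀ ℕ) : Prop := ∀ i, e i % 5 = 4

noncomputable def rho : MvPolynomial (Fin 4) k →+ MvPolynomial (Fin 4) k :=
  Finsupp.liftAddHom (fun e =>
    if ok e then
      (monomial (div5 e) : k →ₗ[k] MvPolynomial (Fin 4) k).toAddMonoidHom.comp
        (tau : k ≃+* k).toAddMonoidHom
    else 0) |>.comp AddMonoidAlgebra.coeffAddEquiv.toAddMonoidHom

lemma rho_monomial (e : Fin 4 →₀ ℕ) (c : k) :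
    rho (monomial e c) = if ok e then monomial (div5 e) (tau c) else 0 := by
  rw [← single_eq_monomial]
  rw [show (rho : MvPolynomial (Fin 4) k →+ MvPolynomial (Fin 4) k) (AddMonoidAlgebra.single e c)
      = _ from Finsupp.liftAddHom_apply_single _ e c]
  split <;> simp

end FA

namespace FA
variable {k : Type*} [Field k] [IsAlgClosed k] [CharP k 5]

lemma rho_frob (a b : MvPolynomial (Fin 4) k) : rho (a ^ 5 * b) = a * rho b := by
  induction a using MvPolynomial.induction_on' with
  | add p q hp hq =>
      have : (p + q) ^ 5 = p ^ 5 + q ^ 5 := add_pow_char _ _ _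
      rw [this, add_mul, map_add, hp, hq, add_mul]
  | monomial u c =>
      induction b using MvPolynomial.induction_on' with
      | add p q hp hq => rw [mul_add, map_add, hp, hq, map_add, mul_add]
      | monomial e d =>
          rw [monomial_pow, monomial_mul, rho_monomial, rho_monomial]
          have hok : ok (5 • u + e) ↔ ok e := by
            constructor <;> intro h i <;> have hi := h i <;>
              simp only [Finsupp.add_apply, Finsupp.smul_apply, smul_eq_mul] at hi ⊢ <;> omega
          have hdiv : div5 (5 • u + e) = u + div5 e := by
            ext i
            simp only [div5_apply, Finsupp.add_apply, Finsupp.smul_apply, smul_eq_mul]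
            omega
          by_cases h : ok e
          · rw [if_pos (hok.mpr h), if_pos h, hdiv, map_mul, tau_pow5, ← monomial_mul]
          · rw [if_neg (fun hh => h (hok.mp hh)), if_neg h, mul_zero]

lemma tau_eq_zero_iff (c : k) : tau c = 0 ↔ c = 0 := by
  constructor
  · intro h; have := congrArg (frobeniusEquiv k 5) h
    rwa [tau, RingEquiv.apply_symm_apply, map_zero] at this
  · rintro rfl; exact map_zero _

end FA

namespace FA
variable {k : Type*} [Field k] [IsAlgClosed k] [CharP k 5]

noncomputable def vv : Fin 4 →₀ ℕ := Finsupp.equivFunOnFinite.symm (fun _ => 4)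

lemma vv_apply (i : Fin 4) : vv i = 4 := rfl

lemma rho_hom28 {P : MvPolynomial (Fin 4) k} (hP : Hg 28 P) :
    rho P = C (tau (coeff vv P)) := by
  conv_lhs => rw [P.as_sum]
  rw [map_sum]
  have key : ∀ e ∈ P.support, rho (monomial e (coeff e P))
      = if e = vv then C (tau (coeff vv P)) else 0 := by
    intro e he
    rw [mem_support_iff] at he
    rw [rho_monomial]
    by_cases hok : ok e
    · have hevv : e = vv := by
        have hw := hP e he
        have h0 := hok 0; have h1 := hok 1; have h2 := hok 2; have h3 := hok 3
        unfold wt at hw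
        have g0 : e 0 = 4 := by omega
        have g1 : e 1 = 4 := by omega
        have g2 : e 2 = 4 := by omega
        have g3 : e 3 = 4 := by omega
        ext i
        match i with
        | 0 => rw [g0]; rfl
        | 1 => rw [g1]; rfl
        | 2 => rw [g2]; rfl
        | 3 => rw [g3]; rfl
      have hdiv : div5 vv = 0 := by
        ext i; rw [div5_apply, vv_apply]; simp
      rw [if_pos hok, if_pos hevv, hevv, hdiv]
      simp [monomial_zero']
    · have hne : e ≠ vv := by
        intro h; apply hok; subst h; intro i; rw [vv_apply]
      rw [if_neg hok, if_neg hne]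
  rw [Finset.sum_congr rfl key]
  rw [Finset.sum_ite_eq' P.support vv]
  split
  · rfl
  · rw [notMem_support_iff.mp ‹vv ∉ P.support›]
    simp

end FA



-- quotient assembly machinery
set_option synthInstance.maxHeartbeats 1000000 in
section
variable {k : Type*} [Field k] (f : MvPolynomial (Fin 4) k)
  (φS : MvPolynomial (Fin 4) k →+ MvPolynomial (Fin 4) k)

theorem isFSplit_of_poly_split
    (h1 : φS 1 - 1 ∈ Ideal.span {f})
    (h2 : ∀ a b : MvPolynomial (Fin 4) k, φS (a ^ 5 * b) = a * φS b)
    (h3 : ∀ s : MvPolynomial (Fin 4) k, φS (f * s) ∈ Ideal.span {f}) :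
    IsFSplit (MvPolynomial (Fin 4) k ⧸ Ideal.span {f}) 5 := by
  set I := Ideal.span {f} with hI
  let mkl : MvPolynomial (Fin 4) k →ₗ[k] (MvPolynomial (Fin 4) k ⧸ I) :=
    (Ideal.Quotient.mkₐ k I).toLinearMap
  have hsurj : LinearMap.range mkl = ⊤ :=
    LinearMap.range_eq_top.mpr (Ideal.Quotient.mkₐ_surjective k I)
  obtain ⟨g, hg⟩ := mkl.exists_rightInverse_of_surjective hsurj
  have hgsec : ∀ r : MvPolynomial (Fin 4) k ⧸ I, Ideal.Quotient.mk I (g r) = r := by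
    intro r
    have := LinearMap.ext_iff.mp hg r
    simpa [mkl] using this
  have hkey : ∀ A B : MvPolynomial (Fin 4) k, Ideal.Quotient.mk I A = Ideal.Quotient.mk I B →
      Ideal.Quotient.mk I (φS A) = Ideal.Quotient.mk I (φS B) := by
    intro A B h
    rw [Ideal.Quotient.eq] at h ⊢
    obtain ⟨s, hs⟩ := Ideal.mem_span_singleton.mp h
    rw [← map_sub, hs]
    exact h3 s
  refine ⟨((Ideal.Quotient.mk I).toAddMonoidHom.comp φS).comp g.toAddMonoidHom, ?_, ?_⟩
  · show Ideal.Quotient.mk I (φS (g 1)) = 1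
    have := hkey (g 1) 1 (by rw [hgsec]; exact (map_one (Ideal.Quotient.mk I)).symm)
    rw [this]
    rwa [← Ideal.Quotient.eq] at h1
  · intro a b
    show Ideal.Quotient.mk I (φS (g (a ^ 5 * b))) = a * Ideal.Quotient.mk I (φS (g b))
    have step : Ideal.Quotient.mk I (g (a ^ 5 * b)) = Ideal.Quotient.mk I ((g a) ^ 5 * g b) := by
      rw [hgsec, map_mul, map_pow, hgsec, hgsec]
    rw [hkey _ _ step, h2, map_mul, hgsec]
end

namespace FA
variable {k : Type*} [Field k] [IsAlgClosed k] [CharP k 5]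

theorem isFSplit_of_coeff_witness {f : MvPolynomial (Fin 4) k} (hf6 : Hg 6 f)
    {e : Fin 4 →₀ ℕ} (hle : e ≤ vv) (hc : coeff e (f ^ 4) ≠ 0) :
    IsFSplit (MvPolynomial (Fin 4) k ⧸ Ideal.span {f}) 5 := by
  have hf24 : Hg 24 (f ^ 4) := by simpa using Hg_pow hf6 4
  have hwte : wt e = 24 := hf24 e hc
  have hle' : ∀ i, e i ≤ vv i := fun i => Finsupp.le_def.mp hle i
  set r : k := (coeff e (f ^ 4))⁻¹ with hr
  set M : MvPolynomial (Fin 4) k := monomial (vv - e) r with hM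
  set φS : MvPolynomial (Fin 4) k →+ MvPolynomial (Fin 4) k :=
    rho.comp (AddMonoidHom.mulLeft (M * f ^ 4)) with hφS
  have hφS_apply : ∀ b, φS b = rho (M * f ^ 4 * b) := fun b => rfl
  apply isFSplit_of_poly_split f φS
  · -- φS 1 = 1
    have hwt4 : wt (vv - e) = 4 := by
      have h0 := hle' 0; have h1 := hle' 1; have h2 := hle' 2; have h3 := hle' 3
      rw [vv_apply] at h0 h1 h2 h3
      unfold wt at hwte ⊢
      rw [Finsupp.tsub_apply, Finsupp.tsub_apply, Finsupp.tsub_apply, Finsupp.tsub_apply]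
      rw [vv_apply, vv_apply, vv_apply, vv_apply]
      omega
    have hHg28 : Hg 28 (M * f ^ 4) := by
      have := Hg_mul (Hg_monomial (vv - e) r) hf24
      rwa [hwt4] at this
    have hcoeff : coeff vv (M * f ^ 4) = 1 := by
      rw [hM, coeff_monomial_mul', if_pos tsub_le_self, tsub_tsub_cancel_of_le hle]
      exact inv_mul_cancel₀ hc
    have : φS 1 = 1 := by
      rw [hφS_apply, mul_one, rho_hom28 hHg28, hcoeff, map_one, map_one]
    rw [this, sub_self]
    exact Ideal.zero_mem _
  · intro a b
    rw [hφS_apply, hφS_apply]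
    rw [show M * f ^ 4 * (a ^ 5 * b) = a ^ 5 * (M * f ^ 4 * b) by ring]
    exact rho_frob a _
  · intro s
    rw [hφS_apply]
    rw [show M * f ^ 4 * (f * s) = f ^ 5 * (M * s) by ring]
    rw [rho_frob f (M * s)]
    exact Ideal.mem_span_singleton.mpr ⟨rho (M * s), rfl⟩

end FA

namespace FA
variable {k : Type*} [CommRing k]

lemma homog_sum {P : MvPolynomial (Fin 4) k} {n : ℕ} (h : P.IsHomogeneous n)
    {e : Fin 4 →₀ ℕ} (he : coeff e P ≠ 0) : e 0 + e 1 + e 2 + e 3 = n := by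
  have hw := h he
  rw [Finsupp.weight_apply, Finsupp.sum_fintype] at hw
  · rw [Fin.sum_univ_four] at hw
    simpa using hw
  · intro i; simp

end FA

namespace FA
variable {k : Type*} [CommRing k]


/-- the exponent of `s^j t^(6-j)` -/
noncomputable def mm (j : ℕ) : Fin 4 →₀ ℕ := Finsupp.single 0 j + Finsupp.single 1 (6 - j)

lemma mm_apply0 (j : ℕ) : mm j 0 = j := by
  simp [mm, Finsupp.add_apply, Finsupp.single_apply]

lemma mm_apply1 (j : ℕ) : mm j 1 = 6 - j := by
  simp [mm, Finsupp.add_apply, Finsupp.single_apply]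

lemma mm_apply2 (j : ℕ) : mm j 2 = 0 := by
  simp [mm, Finsupp.add_apply, Finsupp.single_apply]

lemma mm_apply3 (j : ℕ) : mm j 3 = 0 := by
  simp [mm, Finsupp.add_apply, Finsupp.single_apply]

lemma eq_mm {e : Fin 4 →₀ ℕ} (h2 : e 2 = 0) (h3 : e 3 = 0) (hs : e 0 + e 1 = 6) :
    e = mm (e 0) := by
  ext i
  match i with
  | 0 => rw [mm_apply0]
  | 1 => rw [mm_apply1]; omega
  | 2 => rw [mm_apply2, h2]
  | 3 => rw [mm_apply3, h3]

lemma a6_decomp (a₆ : MvPolynomial (Fin 4) k) (h6 : a₆.IsHomogeneous 6) (hZ : Zst a₆)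
    (hβ2 : coeff (mm 2) a₆ = 0) (hβ3 : coeff (mm 3) a₆ = 0) (hβ4 : coeff (mm 4) a₆ = 0) :
    ∃ a b c d : k, a₆ = C a * X 0 ^ 6 + C b * X 0 ^ 5 * X 1 + C c * X 0 * X 1 ^ 5
      + C d * X 1 ^ 6 := by
  refine ⟨coeff (mm 6) a₆, coeff (mm 5) a₆, coeff (mm 1) a₆, coeff (mm 0) a₆, ?_⟩
  have hmm6 : mm 6 = Finsupp.single 0 6 := by
    ext i
    match i with
    | 0 => rw [mm_apply0]; simp [Finsupp.single_apply]
    | 1 => rw [mm_apply1]; simp [Finsupp.single_apply]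
    | 2 => rw [mm_apply2]; simp [Finsupp.single_apply]
    | 3 => rw [mm_apply3]; simp [Finsupp.single_apply]
  have hmm5 : mm 5 = Finsupp.single 0 5 + Finsupp.single 1 1 := rfl
  have hmm1 : mm 1 = Finsupp.single 0 1 + Finsupp.single 1 5 := rfl
  have hmm0 : mm 0 = Finsupp.single 1 6 := by
    ext i
    match i with
    | 0 => rw [mm_apply0]; simp [Finsupp.single_apply]
    | 1 => rw [mm_apply1]; simp [Finsupp.single_apply]
    | 2 => rw [mm_apply2]; simp [Finsupp.single_apply]
    | 3 => rw [mm_apply3]; simp [Finsupp.single_apply]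
  have r6 : (C (coeff (mm 6) a₆) * X 0 ^ 6 : MvPolynomial (Fin 4) k)
      = monomial (mm 6) (coeff (mm 6) a₆) := by
    rw [C_mul_X_pow_eq_monomial, hmm6]
  have r5 : (C (coeff (mm 5) a₆) * X 0 ^ 5 * X 1 : MvPolynomial (Fin 4) k)
      = monomial (mm 5) (coeff (mm 5) a₆) := by
    rw [C_mul_X_pow_eq_monomial,
      show (X 1 : MvPolynomial (Fin 4) k) = monomial (Finsupp.single 1 1) 1 from rfl,
      monomial_mul, mul_one, ← hmm5]
  have r1 : (C (coeff (mm 1) a₆) * X 0 * X 1 ^ 5 : MvPolynomial (Fin 4) k)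
      = monomial (mm 1) (coeff (mm 1) a₆) := by
    rw [show (C (coeff (mm 1) a₆) * X 0 : MvPolynomial (Fin 4) k)
        = monomial (Finsupp.single 0 1) (coeff (mm 1) a₆) by
          rw [← pow_one (X 0 : MvPolynomial (Fin 4) k), C_mul_X_pow_eq_monomial],
      X_pow_eq_monomial, monomial_mul, mul_one, ← hmm1]
  have r0 : (C (coeff (mm 0) a₆) * X 1 ^ 6 : MvPolynomial (Fin 4) k)
      = monomial (mm 0) (coeff (mm 0) a₆) := by
    rw [C_mul_X_pow_eq_monomial, hmm0]
  rw [r6, r5, r1, r0]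
  apply MvPolynomial.ext
  intro e
  rw [coeff_add, coeff_add, coeff_add, coeff_monomial, coeff_monomial, coeff_monomial,
    coeff_monomial]
  by_cases he : coeff e a₆ = 0
  · rw [he]
    have t : ∀ j : ℕ, (if mm j = e then coeff (mm j) a₆ else 0) = 0 := by
      intro j
      split
      · rw [‹mm j = e›, he]
      · rfl
    rw [t 6, t 5, t 1, t 0]
    simp
  · have h23 := hZ e he
    have hsum : e 0 + e 1 = 6 := by
      have := homog_sum h6 he
      omega
    have hemm : e = mm (e 0) := eq_mm h23.1 h23.2 hsum
    have hne : ∀ j : ℕ, j ≠ e 0 → mm j ≠ e := by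
      intro j hj h
      apply hj
      have := DFunLike.congr_fun h 0
      rw [mm_apply0] at this
      rw [this, hemm, mm_apply0]
    have he0le : e 0 ≤ 6 := by omega
    have hnot : e 0 ≠ 2 ∧ e 0 ≠ 3 ∧ e 0 ≠ 4 := by
      refine ⟨?_, ?_, ?_⟩ <;> intro h <;>
        [ (apply he; rw [hemm, h]; exact hβ2);
          (apply he; rw [hemm, h]; exact hβ3);
          (apply he; rw [hemm, h]; exact hβ4) ]
    interval_cases h0 : e 0
    · rw [if_neg (hne 6 (by omega)), if_neg (hne 5 (by omega)), if_neg (hne 1 (by omega)),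
        if_pos hemm.symm, ← hemm]
      simp
    · rw [if_neg (hne 6 (by omega)), if_neg (hne 5 (by omega)), if_pos hemm.symm,
        if_neg (hne 0 (by omega)), ← hemm]
      simp
    · exact absurd rfl hnot.1
    · exact absurd rfl hnot.2.1
    · exact absurd rfl hnot.2.2
    · rw [if_neg (hne 6 (by omega)), if_pos hemm.symm, if_neg (hne 1 (by omega)),
        if_neg (hne 0 (by omega)), ← hemm]
      simp
    · rw [if_pos hemm.symm, if_neg (hne 5 (by omega)), if_neg (hne 1 (by omega)),
        if_neg (hne 0 (by omega)), ← hemm]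
      simp

end FA

namespace FA
variable {k : Type*} [CommRing k]

lemma Yfree_coeff {P : MvPolynomial (Fin 4) k} (h : Yfree P) {d : Fin 4 →₀ ℕ}
    (hd : d 3 ≠ 0) : coeff d P = 0 := by
  by_contra hc; exact hd (h d hc)

lemma Zst_coeff2 {P : MvPolynomial (Fin 4) k} (h : Zst P) {d : Fin 4 →₀ ℕ}
    (hd : d 2 ≠ 0) : coeff d P = 0 := by
  by_contra hc; exact hd (h d hc).1

lemma coeff_f4 (a₄ a₆ : MvPolynomial (Fin 4) k) (hZ4 : Zst a₄) (hZ6 : Zst a₆)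
    (D : Fin 4 →₀ ℕ) (hD3 : D 3 = 0) :
    coeff (D + Finsupp.single 3 4) ((X 3 ^ 2 - (X 2 ^ 3 + a₄ * X 2 + a₆)) ^ 4)
      = 6 * coeff D ((X 2 ^ 3 + a₄ * X 2 + a₆) ^ 2) := by
  set G : MvPolynomial (Fin 4) k := X 2 ^ 3 + a₄ * X 2 + a₆ with hG
  have hYG : Yfree G := by
    apply Yfree_add
    apply Yfree_add
    · exact Yfree_pow Yfree_X2 3
    · exact Yfree_mul (Zst.yfree hZ4) Yfree_X2
    · exact Zst.yfree hZ6
  set E : Fin 4 →₀ ℕ := D + Finsupp.single 3 4 with hE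
  have hE3 : E 3 = 4 := by
    simp [hE, Finsupp.add_apply, Finsupp.single_apply, hD3]
  have hexp : (X 3 ^ 2 - G) ^ 4
      = monomial (Finsupp.single 3 8) (1:k)
        + monomial (Finsupp.single 3 6) (1:k) * ((-4 : MvPolynomial (Fin 4) k) * G)
        + monomial (Finsupp.single 3 4) (1:k) * ((6 : MvPolynomial (Fin 4) k) * G ^ 2)
        + monomial (Finsupp.single 3 2) (1:k) * ((-4 : MvPolynomial (Fin 4) k) * G ^ 3)
        + G ^ 4 := by
    simp only [← X_pow_eq_monomial]
    ring
  rw [hexp]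
  rw [coeff_add, coeff_add, coeff_add, coeff_add]
  rw [coeff_monomial, if_neg (by
    intro h
    have := DFunLike.congr_fun h 3
    rw [hE3] at this
    simp [Finsupp.single_apply] at this)]
  rw [coeff_monomial_mul', if_neg (by
    rw [Finsupp.single_le_iff, hE3]; omega)]
  rw [coeff_monomial_mul', if_pos (show Finsupp.single 3 4 ≤ E by
    rw [Finsupp.single_le_iff, hE3])]
  rw [coeff_monomial_mul', if_pos (show Finsupp.single 3 2 ≤ E by
    rw [Finsupp.single_le_iff, hE3]; omega)]
  have hE2 : E - Finsupp.single 3 4 = D := by rw [hE]; exact add_tsub_cancel_right _ _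
  have hcast6 : ((6 : MvPolynomial (Fin 4) k)) = C (6 : k) := by
    rw [map_ofNat]
  have hcast4 : ((-4 : MvPolynomial (Fin 4) k)) = C (-4 : k) := by
    rw [map_neg, map_ofNat]
  have hzero3 : coeff (E - Finsupp.single 3 2) ((-4 : MvPolynomial (Fin 4) k) * G ^ 3) = 0 := by
    rw [hcast4, coeff_C_mul]
    rw [Yfree_coeff (Yfree_pow hYG 3) (by simp [Finsupp.tsub_apply, Finsupp.single_apply, hE3])]
    ring
  have hzero4 : coeff E (G ^ 4) = 0 :=
    Yfree_coeff (Yfree_pow hYG 4) (by rw [hE3]; omega)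
  rw [hzero3, hzero4, hE2, hcast6, coeff_C_mul]
  ring

end FA

namespace FA
variable {k : Type*} [CommRing k]

lemma coeff_G2_x4 (a₄ a₆ : MvPolynomial (Fin 4) k) (hZ4 : Zst a₄) (hZ6 : Zst a₆)
    (e₀ : Fin 4 →₀ ℕ) (h2 : e₀ 2 = 0) (h3 : e₀ 3 = 0) :
    coeff (e₀ + Finsupp.single 2 4) ((X 2 ^ 3 + a₄ * X 2 + a₆) ^ 2)
      = 2 * coeff e₀ a₄ := by
  set D : Fin 4 →₀ ℕ := e₀ + Finsupp.single 2 4 with hD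
  have hD2 : D 2 = 4 := by simp [hD, Finsupp.add_apply, Finsupp.single_apply, h2]
  have hexp : (X 2 ^ 3 + a₄ * X 2 + a₆ : MvPolynomial (Fin 4) k) ^ 2
      = monomial (Finsupp.single 2 6) (1:k)
        + monomial (Finsupp.single 2 4) (1:k) * ((2 : MvPolynomial (Fin 4) k) * a₄)
        + monomial (Finsupp.single 2 2) (1:k) * (a₄ ^ 2)
        + monomial (Finsupp.single 2 3) (1:k) * ((2 : MvPolynomial (Fin 4) k) * a₆)
        + monomial (Finsupp.single 2 1) (1:k) * ((2 : MvPolynomial (Fin 4) k) * (a₄ * a₆))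
        + a₆ ^ 2 := by
    simp only [← X_pow_eq_monomial]
    ring
  rw [hexp]
  rw [coeff_add, coeff_add, coeff_add, coeff_add, coeff_add]
  have hc2 : ((2 : MvPolynomial (Fin 4) k)) = C (2 : k) := by rw [map_ofNat]
  rw [coeff_monomial, if_neg (by
    intro h
    have := DFunLike.congr_fun h 2
    rw [hD2] at this
    simp [Finsupp.single_apply] at this)]
  rw [coeff_monomial_mul', if_pos (show Finsupp.single 2 4 ≤ D by
    rw [Finsupp.single_le_iff, hD2])]
  rw [coeff_monomial_mul', if_pos (show Finsupp.single 2 2 ≤ D by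
    rw [Finsupp.single_le_iff, hD2]; omega)]
  rw [coeff_monomial_mul', if_pos (show Finsupp.single 2 3 ≤ D by
    rw [Finsupp.single_le_iff, hD2]; omega)]
  rw [coeff_monomial_mul', if_pos (show Finsupp.single 2 1 ≤ D by
    rw [Finsupp.single_le_iff, hD2]; omega)]
  have z1 : coeff (D - Finsupp.single 2 2) (a₄ ^ 2) = 0 := by
    rw [sq]
    exact Zst_coeff2 (Zst_mul hZ4 hZ4)
      (by simp [Finsupp.tsub_apply, hD2, Finsupp.single_apply])
  have z2 : coeff (D - Finsupp.single 2 3) ((2 : MvPolynomial (Fin 4) k) * a₆) = 0 := by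
    rw [hc2, coeff_C_mul,
      Zst_coeff2 hZ6 (by simp [Finsupp.tsub_apply, hD2, Finsupp.single_apply]), mul_zero]
  have z3 : coeff (D - Finsupp.single 2 1)
      ((2 : MvPolynomial (Fin 4) k) * (a₄ * a₆)) = 0 := by
    rw [hc2, coeff_C_mul,
      Zst_coeff2 (Zst_mul hZ4 hZ6) (by simp [Finsupp.tsub_apply, hD2, Finsupp.single_apply]),
      mul_zero]
  have z4 : coeff D (a₆ ^ 2) = 0 := by
    rw [sq]
    exact Zst_coeff2 (Zst_mul hZ6 hZ6) (by rw [hD2]; omega)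
  have hme : D - Finsupp.single 2 4 = e₀ := by rw [hD]; exact add_tsub_cancel_right _ _
  rw [z1, z2, z3, z4, hme, hc2, coeff_C_mul]
  ring

lemma coeff_G2_x3 (a₄ a₆ : MvPolynomial (Fin 4) k) (hZ4 : Zst a₄) (hZ6 : Zst a₆)
    (e₀ : Fin 4 →₀ ℕ) (h2 : e₀ 2 = 0) (h3 : e₀ 3 = 0) :
    coeff (e₀ + Finsupp.single 2 3) ((X 2 ^ 3 + a₄ * X 2 + a₆) ^ 2)
      = 2 * coeff e₀ a₆ := by
  set D : Fin 4 →₀ ℕ := e₀ + Finsupp.single 2 3 with hD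
  have hD2 : D 2 = 3 := by simp [hD, Finsupp.add_apply, Finsupp.single_apply, h2]
  have hexp : (X 2 ^ 3 + a₄ * X 2 + a₆ : MvPolynomial (Fin 4) k) ^ 2
      = monomial (Finsupp.single 2 6) (1:k)
        + monomial (Finsupp.single 2 4) (1:k) * ((2 : MvPolynomial (Fin 4) k) * a₄)
        + monomial (Finsupp.single 2 2) (1:k) * (a₄ ^ 2)
        + monomial (Finsupp.single 2 3) (1:k) * ((2 : MvPolynomial (Fin 4) k) * a₆)
        + monomial (Finsupp.single 2 1) (1:k) * ((2 : MvPolynomial (Fin 4) k) * (a₄ * a₆))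
        + a₆ ^ 2 := by
    simp only [← X_pow_eq_monomial]
    ring
  rw [hexp]
  rw [coeff_add, coeff_add, coeff_add, coeff_add, coeff_add]
  have hc2 : ((2 : MvPolynomial (Fin 4) k)) = C (2 : k) := by rw [map_ofNat]
  rw [coeff_monomial, if_neg (by
    intro h
    have := DFunLike.congr_fun h 2
    rw [hD2] at this
    simp [Finsupp.single_apply] at this)]
  rw [coeff_monomial_mul', if_neg (by
    rw [Finsupp.single_le_iff, hD2]; omega)]
  rw [coeff_monomial_mul', if_pos (show Finsupp.single 2 2 ≤ D by
    rw [Finsupp.single_le_iff, hD2]; omega)]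
  rw [coeff_monomial_mul', if_pos (show Finsupp.single 2 3 ≤ D by
    rw [Finsupp.single_le_iff, hD2])]
  rw [coeff_monomial_mul', if_pos (show Finsupp.single 2 1 ≤ D by
    rw [Finsupp.single_le_iff, hD2]; omega)]
  have z1 : coeff (D - Finsupp.single 2 2) (a₄ ^ 2) = 0 := by
    rw [sq]
    exact Zst_coeff2 (Zst_mul hZ4 hZ4)
      (by simp [Finsupp.tsub_apply, hD2, Finsupp.single_apply])
  have z3 : coeff (D - Finsupp.single 2 1)
      ((2 : MvPolynomial (Fin 4) k) * (a₄ * a₆)) = 0 := by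
    rw [hc2, coeff_C_mul,
      Zst_coeff2 (Zst_mul hZ4 hZ6) (by simp [Finsupp.tsub_apply, hD2, Finsupp.single_apply]),
      mul_zero]
  have z4 : coeff D (a₆ ^ 2) = 0 := by
    rw [sq]
    exact Zst_coeff2 (Zst_mul hZ6 hZ6) (by rw [hD2]; omega)
  have hme : D - Finsupp.single 2 3 = e₀ := by rw [hD]; exact add_tsub_cancel_right _ _
  rw [z1, z3, z4, hme, hc2, coeff_C_mul]
  ring

end FA

set_option maxHeartbeats 1000000
set_option synthInstance.maxHeartbeats 1000000

namespace FA
variable {k : Type*} [Field k]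

lemma eps_ne_zero' : (DualNumber.eps : DualNumber k) ≠ 0 := by
  intro h
  have := congrArg TrivSqZeroExt.snd h
  simpa using this

lemma not_fsplit_of_special (a b c d : k) (f : MvPolynomial (Fin 4) k)
    (hf : f = X 3 ^ 2 - (X 2 ^ 3 + 0 * X 2
      + (C a * X 0 ^ 6 + C b * X 0 ^ 5 * X 1 + C c * X 0 * X 1 ^ 5 + C d * X 1 ^ 6))) :
    ¬ IsFSplit (MvPolynomial (Fin 4) k ⧸ Ideal.span {f}) 5 := by
  rintro ⟨φ, hφ1, hφ⟩
  let mk : MvPolynomial (Fin 4) k →+* MvPolynomial (Fin 4) k ⧸ Ideal.span {f} :=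
    Ideal.Quotient.mk (Ideal.span {f})
  set A6 : MvPolynomial (Fin 4) k := C a * X 0 ^ 6 + C b * X 0 ^ 5 * X 1
      + C c * X 0 * X 1 ^ 5 + C d * X 1 ^ 6 with hA6
  set Q : MvPolynomial (Fin 4) k := X 3 * (2 * C a * X 0 * X 2 ^ 3 + 2 * C b * X 1 * X 2 ^ 3
      + C a ^ 2 * X 0 ^ 7 + 2 * C a * C b * X 0 ^ 6 * X 1 + C b ^ 2 * X 0 ^ 5 * X 1 ^ 2
      + 2 * C a * C c * X 0 ^ 2 * X 1 ^ 5 + 2 * (C a * C d + C b * C c) * X 0 * X 1 ^ 6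
      + 2 * C b * C d * X 1 ^ 7) with hQ
  set T : MvPolynomial (Fin 4) k := X 3 * (2 * C c * X 0 * X 2 ^ 3 + 2 * C d * X 1 * X 2 ^ 3
      + C c ^ 2 * X 0 ^ 2 * X 1 ^ 5 + 2 * C c * C d * X 0 * X 1 ^ 6 + C d ^ 2 * X 1 ^ 7) with hT
  set W : MvPolynomial (Fin 4) k := X 3 ^ 3 + X 3 * (X 2 ^ 3 + A6) with hW
  have key : (X 3 : MvPolynomial (Fin 4) k) ^ 5
      = X 2 ^ 5 * (X 3 * X 2) + X 0 ^ 5 * Q + X 1 ^ 5 * T + f * W := by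
    rw [hf, hQ, hT, hW, hA6]
    ring
  have hmkf : mk f = 0 := Ideal.Quotient.eq_zero_iff_mem.mpr (Ideal.subset_span rfl)
  have hy5 : (mk (X 3)) ^ 5 = (mk (X 2)) ^ 5 * mk (X 3 * X 2)
      + (mk (X 0)) ^ 5 * mk Q + (mk (X 1)) ^ 5 * mk T := by
    have := congrArg mk key
    simp only [map_add, map_mul, map_pow, hmkf, zero_mul, add_zero] at this
    exact this
  have hy : mk (X 3) = mk (X 2) * φ (mk (X 3 * X 2)) + mk (X 0) * φ (mk Q)
      + mk (X 1) * φ (mk T) := by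
    have h0 : mk (X 3) = φ ((mk (X 3)) ^ 5) := by
      have := hφ (mk (X 3)) 1
      rw [mul_one, hφ1, mul_one] at this
      exact this.symm
    rw [h0, hy5, map_add, map_add, hφ, hφ, hφ]
  -- evaluation map to dual numbers
  let pt : Fin 4 → DualNumber k := ![0, 0, 0, DualNumber.eps]
  have haf : (aeval pt) f = 0 := by
    rw [hf, hA6]
    simp [pt, DualNumber.eps_mul_eps, sq]
  have hker : ∀ u ∈ Ideal.span {f},
      (aeval pt : MvPolynomial (Fin 4) k →ₐ[k] DualNumber k) u = 0 := by
    intro u hu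
    rw [Ideal.mem_span_singleton] at hu
    obtain ⟨w, rfl⟩ := hu
    rw [map_mul, haf, zero_mul]
  let χ : (MvPolynomial (Fin 4) k ⧸ Ideal.span {f}) →+* DualNumber k :=
    Ideal.Quotient.lift (Ideal.span {f}) ((aeval pt : MvPolynomial (Fin 4) k →ₐ[k] DualNumber k) :
      MvPolynomial (Fin 4) k →+* DualNumber k) hker
  have hχ : ∀ P : MvPolynomial (Fin 4) k, χ (mk P) = aeval pt P := fun P => rfl
  set u1 := φ (mk (X 3 * X 2)) with hu1
  set u2 := φ (mk Q) with hu2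
  set u3 := φ (mk T) with hu3
  have := congrArg χ hy
  rw [map_add, map_add, map_mul, map_mul, map_mul, hχ, hχ, hχ, hχ] at this
  have h0' : (aeval pt) (X 0 : MvPolynomial (Fin 4) k) = 0 := by simp [pt]
  have h1' : (aeval pt) (X 1 : MvPolynomial (Fin 4) k) = 0 := by simp [pt]
  have h2' : (aeval pt) (X 2 : MvPolynomial (Fin 4) k) = 0 := by simp [pt]
  have h3' : (aeval pt) (X 3 : MvPolynomial (Fin 4) k) = DualNumber.eps := by simp [pt]
  simp only [h0', h1', h2', h3', zero_mul, add_zero, zero_add] at this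
  exact eps_ne_zero' this

end FA

open FA in
theorem char5_not_Fsplit_iff (k : Type*) [Field k] [IsAlgClosed k] [CharP k 5]
    (a₄ a₆ : MvPolynomial (Fin 4) k)
    (h₄deg : a₄.IsHomogeneous 4) (h₆deg : a₆.IsHomogeneous 6)
    (h₄st : a₄ ∈ Set.range (rename (Fin.castLE (by norm_num : 2 ≤ 4)) :
      MvPolynomial (Fin 2) k → MvPolynomial (Fin 4) k))
    (h₆st : a₆ ∈ Set.range (rename (Fin.castLE (by norm_num : 2 ≤ 4)) :
      MvPolynomial (Fin 2) k → MvPolynomial (Fin 4) k))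
    (f : MvPolynomial (Fin 4) k)
    (hf : f = X 3 ^ 2 - (X 2 ^ 3 + a₄ * X 2 + a₆)) :
    ¬ IsFSplit (MvPolynomial (Fin 4) k ⧸ Ideal.span {f}) 5 ↔
      a₄ = 0 ∧ ∃ a b c d : k,
        a₆ = C a * X 0 ^ 6 + C b * X 0 ^ 5 * X 1 + C c * X 0 * X 1 ^ 5
            + C d * X 1 ^ 6 := by
  have hZ4 : Zst a₄ := Zst_of_range h₄st
  have hZ6 : Zst a₆ := Zst_of_range h₆st
  haveI : Fact (Nat.Prime 5) := ⟨by norm_num⟩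
  have h5k : (5 : k) = 0 := by exact_mod_cast CharP.cast_eq_zero k 5
  have h6one : (6 : k) = 1 := by linear_combination h5k
  have h2ne : (2 : k) ≠ 0 := by
    intro h
    have h2 : ((2 : ℕ) : k) = 0 := by exact_mod_cast h
    rw [CharP.cast_eq_zero_iff k 5] at h2
    norm_num at h2
  -- weighted homogeneity of f
  have hH4 : Hg 4 a₄ := by
    intro e he
    have h23 := hZ4 e he
    have hs := homog_sum h₄deg he
    unfold wt
    omega
  have hH6 : Hg 6 a₆ := by
    intro e he
    have h23 := hZ6 e he
    have hs := homog_sum h₆deg he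
    unfold wt
    omega
  have hwt32 : wt (Finsupp.single 3 2) = 6 := by
    simp [wt, Finsupp.single_apply]
  have hwt23 : wt (Finsupp.single 2 3) = 6 := by
    simp [wt, Finsupp.single_apply]
  have hwt21 : wt (Finsupp.single 2 1) = 2 := by
    simp [wt, Finsupp.single_apply]
  have hHgf : Hg 6 f := by
    rw [hf]
    apply Hg_sub
    · rw [X_pow_eq_monomial]
      have := Hg_monomial (Finsupp.single 3 2) (1 : k)
      rwa [hwt32] at this
    apply Hg_add
    apply Hg_add
    · rw [X_pow_eq_monomial]
      have := Hg_monomial (Finsupp.single 2 3) (1 : k)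
      rwa [hwt23] at this
    · have hx : Hg 2 (X 2 : MvPolynomial (Fin 4) k) := by
        have := Hg_monomial (Finsupp.single 2 1) (1 : k)
        rwa [hwt21] at this
      have := Hg_mul hH4 hx
      norm_num at this
      exact this
    · exact hH6
  constructor
  · -- hard direction, by contradiction
    intro hns
    by_contra hR
    apply hns
    by_cases ha4 : a₄ = 0
    · -- then some middle coefficient of a₆ is nonzero
      have hex : ¬ ∃ a b c d : k,
          a₆ = C a * X 0 ^ 6 + C b * X 0 ^ 5 * X 1 + C c * X 0 * X 1 ^ 5 + C d * X 1 ^ 6 := by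
        intro h
        exact hR ⟨ha4, h⟩
      obtain ⟨j, hj2, hj4, hjc⟩ : ∃ j, 2 ≤ j ∧ j ≤ 4 ∧ coeff (mm j) a₆ ≠ 0 := by
        by_contra hno
        push_neg at hno
        exact hex (a6_decomp a₆ h₆deg hZ6 (hno 2 (by norm_num) (by norm_num))
          (hno 3 (by norm_num) (by norm_num)) (hno 4 (by norm_num) (by norm_num)))
      have hD3 : ((mm j + Finsupp.single 2 3 : Fin 4 →₀ ℕ)) 3 = 0 := by
        simp [Finsupp.add_apply, Finsupp.single_apply, mm_apply3]
      have hc1 : coeff ((mm j + Finsupp.single 2 3) + Finsupp.single 3 4) (f ^ 4)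
          = 6 * coeff (mm j + Finsupp.single 2 3) ((X 2 ^ 3 + a₄ * X 2 + a₆) ^ 2) := by
        rw [hf]
        exact coeff_f4 a₄ a₆ hZ4 hZ6 _ hD3
      have hc2 : coeff (mm j + Finsupp.single 2 3) ((X 2 ^ 3 + a₄ * X 2 + a₆) ^ 2)
          = 2 * coeff (mm j) a₆ :=
        coeff_G2_x3 a₄ a₆ hZ4 hZ6 (mm j) (mm_apply2 j) (mm_apply3 j)
      have hne : coeff ((mm j + Finsupp.single 2 3) + Finsupp.single 3 4) (f ^ 4) ≠ 0 := by
        rw [hc1, hc2, h6one, one_mul]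
        exact mul_ne_zero h2ne hjc
      have hle : (mm j + Finsupp.single 2 3) + Finsupp.single 3 4 ≤ vv := by
        rw [Finsupp.le_def]
        intro i
        rw [vv_apply]
        match i with
        | 0 =>
            simp [Finsupp.add_apply, Finsupp.single_apply, mm_apply0]
            omega
        | 1 =>
            simp [Finsupp.add_apply, Finsupp.single_apply, mm_apply1]
            omega
        | 2 =>
            simp [Finsupp.add_apply, Finsupp.single_apply, mm_apply2]
        | 3 =>
            simp [Finsupp.add_apply, Finsupp.single_apply, mm_apply3]
      exact isFSplit_of_coeff_witness hHgf hle hne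
    · -- a₄ ≠ 0
      obtain ⟨e₀, he₀⟩ := MvPolynomial.ne_zero_iff.mp ha4
      have h23 := hZ4 e₀ he₀
      have hs := homog_sum h₄deg he₀
      have hD3 : ((e₀ + Finsupp.single 2 4 : Fin 4 →₀ ℕ)) 3 = 0 := by
        simp [Finsupp.add_apply, Finsupp.single_apply, h23.2]
      have hc1 : coeff ((e₀ + Finsupp.single 2 4) + Finsupp.single 3 4) (f ^ 4)
          = 6 * coeff (e₀ + Finsupp.single 2 4) ((X 2 ^ 3 + a₄ * X 2 + a₆) ^ 2) := by
        rw [hf]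
        exact coeff_f4 a₄ a₆ hZ4 hZ6 _ hD3
      have hc2 : coeff (e₀ + Finsupp.single 2 4) ((X 2 ^ 3 + a₄ * X 2 + a₆) ^ 2)
          = 2 * coeff e₀ a₄ :=
        coeff_G2_x4 a₄ a₆ hZ4 hZ6 e₀ h23.1 h23.2
      have hne : coeff ((e₀ + Finsupp.single 2 4) + Finsupp.single 3 4) (f ^ 4) ≠ 0 := by
        rw [hc1, hc2, h6one, one_mul]
        exact mul_ne_zero h2ne he₀
      have hle : (e₀ + Finsupp.single 2 4) + Finsupp.single 3 4 ≤ vv := by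
        rw [Finsupp.le_def]
        intro i
        rw [vv_apply]
        match i with
        | 0 =>
            simp [Finsupp.add_apply, Finsupp.single_apply]
            omega
        | 1 =>
            simp [Finsupp.add_apply, Finsupp.single_apply]
            omega
        | 2 =>
            simp [Finsupp.add_apply, Finsupp.single_apply, h23.1]
        | 3 =>
            simp [Finsupp.add_apply, Finsupp.single_apply, h23.2]
      exact isFSplit_of_coeff_witness hHgf hle hne
  · rintro ⟨ha4, a, b, c, d, ha6⟩
    apply not_fsplit_of_special a b c d f
    rw [hf, ha4, ha6]
end

section
/- Let k be a field of characteristic 3, and let a₂, a₄, a₆ ∈ k[s,t,x,y] be homogeneous polynomials of degrees 2, 4 and 6 respectively involving only the variables s and t. Set f = y² − (x³ + a₂·x² + a₄·x + a₆). Then f² lies in the ideal (s³, t³, x³, y³) of k[s,t,x,y] if and only if a₂ = 0 and there exist a, b, c, d ∈ k with a₄ = a·s⁴ + b·s³·t + c·s·t³ + d·t⁴. -/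
open MvPolynomial

namespace C3F

variable {k : Type*} [Field k]

lemma degree_eq4 (d : Fin 4 →₀ ℕ) : d.degree = d 0 + d 1 + d 2 + d 3 := by
  have : d.degree = ∑ i : Fin 4, d i := by
    rw [Finsupp.degree]
    exact Finset.sum_subset (Finset.subset_univ _)
      (fun x _ hx => Finsupp.notMem_support_iff.mp hx)
  rw [this, Fin.sum_univ_four]

lemma supp_st {p : MvPolynomial (Fin 4) k}
    (h : p ∈ Set.range (rename (Fin.castLE (by norm_num : 2 ≤ 4)) :
      MvPolynomial (Fin 2) k → MvPolynomial (Fin 4) k))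
    {m : Fin 4 →₀ ℕ} (hm : coeff m p ≠ 0) : m 2 = 0 ∧ m 3 = 0 := by
  obtain ⟨q, rfl⟩ := h
  obtain ⟨u, hu, -⟩ := coeff_rename_ne_zero _ _ _ hm
  subst hu
  have key : ∀ j : Fin 4, j ∉ Set.range (Fin.castLE (by norm_num : 2 ≤ 4) : Fin 2 → Fin 4) →
      Finsupp.mapDomain (Fin.castLE (by norm_num : 2 ≤ 4)) u j = 0 :=
    fun j hj => Finsupp.mapDomain_notin_range _ _ hj
  constructor <;> apply key <;> rintro ⟨j, hj⟩ <;>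
    · have h1 := congrArg Fin.val hj
      have h2 := j.isLt
      simp at h1
      omega

lemma coeff_st_zero {p : MvPolynomial (Fin 4) k}
    (h : p ∈ Set.range (rename (Fin.castLE (by norm_num : 2 ≤ 4)) :
      MvPolynomial (Fin 2) k → MvPolynomial (Fin 4) k))
    {m : Fin 4 →₀ ℕ} (hm : m 2 ≠ 0 ∨ m 3 ≠ 0) : coeff m p = 0 := by
  by_contra hc
  obtain ⟨h2, h3⟩ := supp_st h hc
  tauto

lemma mem_I_iff (p : MvPolynomial (Fin 4) k) :
    p ∈ Ideal.span {(X 0 ^ 3 : MvPolynomial (Fin 4) k), X 1 ^ 3, X 2 ^ 3, X 3 ^ 3} ↔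
      ∀ m ∈ p.support, ∃ i : Fin 4, 3 ≤ m i := by
  have hset : ({(X 0 ^ 3 : MvPolynomial (Fin 4) k), X 1 ^ 3, X 2 ^ 3, X 3 ^ 3} :
      Set (MvPolynomial (Fin 4) k)) =
      (fun s => monomial s (1 : k)) '' {Finsupp.single 0 3, Finsupp.single 1 3,
        Finsupp.single 2 3, Finsupp.single 3 3} := by
    simp [Set.image_insert_eq, X_pow_eq_monomial]
  rw [hset, mem_ideal_span_monomial_image]
  constructor
  · intro h m hm
    obtain ⟨si, hsi, hle⟩ := h m hm
    simp only [Set.mem_insert_iff, Set.mem_singleton_iff] at hsi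
    rcases hsi with rfl | rfl | rfl | rfl
    exacts [⟨0, Finsupp.single_le_iff.mp hle⟩, ⟨1, Finsupp.single_le_iff.mp hle⟩,
      ⟨2, Finsupp.single_le_iff.mp hle⟩, ⟨3, Finsupp.single_le_iff.mp hle⟩]
  · intro h m hm
    obtain ⟨i, hi⟩ := h m hm
    refine ⟨Finsupp.single i 3, ?_, Finsupp.single_le_iff.mpr hi⟩
    fin_cases i <;> simp

/-- exponent vector s^i t^j -/
noncomputable def e (i j : ℕ) : Fin 4 →₀ ℕ := Finsupp.single 0 i + Finsupp.single 1 j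

@[simp] lemma e_apply0 (i j : ℕ) : e i j 0 = i := by simp [e, Finsupp.single_apply]
@[simp] lemma e_apply1 (i j : ℕ) : e i j 1 = j := by simp [e, Finsupp.single_apply]
@[simp] lemma e_apply2 (i j : ℕ) : e i j 2 = 0 := by simp [e, Finsupp.single_apply]
@[simp] lemma e_apply3 (i j : ℕ) : e i j 3 = 0 := by simp [e, Finsupp.single_apply]

lemma e_eq_iff {i j i' j' : ℕ} : e i j = e i' j' ↔ i = i' ∧ j = j' := by
  constructor
  · intro h
    constructor
    · have := congrArg (fun f => f 0) h; simpa using this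
    · have := congrArg (fun f => f 1) h; simpa using this
  · rintro ⟨rfl, rfl⟩; rfl

lemma eq_e_of (d : Fin 4 →₀ ℕ) (h2 : d 2 = 0) (h3 : d 3 = 0) : d = e (d 0) (d 1) := by
  ext i
  fin_cases i <;> simp [h2, h3]

lemma rhs_eq (a b c d : k) :
    C a * X 0 ^ 4 + C b * X 0 ^ 3 * X 1 + C c * X 0 * X 1 ^ 3 + C d * X 1 ^ 4
      = monomial (e 4 0) a + monomial (e 3 1) b + monomial (e 1 3) c
        + monomial (e 0 4) d := by
  have hX1 : (X 1 : MvPolynomial (Fin 4) k) = monomial (Finsupp.single 1 1) 1 := by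
    rw [← X_pow_eq_monomial, pow_one]
  have hX0 : (X 0 : MvPolynomial (Fin 4) k) = monomial (Finsupp.single 0 1) 1 := by
    rw [← X_pow_eq_monomial, pow_one]
  have t1 : (C a * X 0 ^ 4 : MvPolynomial (Fin 4) k) = monomial (e 4 0) a := by
    rw [C_mul_X_pow_eq_monomial]
    have : e 4 0 = Finsupp.single 0 4 := by simp [e]
    rw [this]
  have t2 : (C b * X 0 ^ 3 * X 1 : MvPolynomial (Fin 4) k) = monomial (e 3 1) b := by
    rw [C_mul_X_pow_eq_monomial, hX1, monomial_mul, mul_one]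
    rfl
  have t3 : (C c * X 0 * X 1 ^ 3 : MvPolynomial (Fin 4) k) = monomial (e 1 3) c := by
    rw [X_pow_eq_monomial, hX0, mul_assoc, monomial_mul, one_mul, C_mul_monomial, mul_one]
    rfl
  have t4 : (C d * X 1 ^ 4 : MvPolynomial (Fin 4) k) = monomial (e 0 4) d := by
    rw [C_mul_X_pow_eq_monomial]
    have : e 0 4 = Finsupp.single 1 4 := by simp [e]
    rw [this]
  rw [t1, t2, t3, t4]

end C3F

theorem char3_fedder_condition (k : Type*) [Field k] [CharP k 3]
    (a₂ a₄ a₆ : MvPolynomial (Fin 4) k)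
    (h₂deg : a₂.IsHomogeneous 2) (h₄deg : a₄.IsHomogeneous 4) (h₆deg : a₆.IsHomogeneous 6)
    (h₂st : a₂ ∈ Set.range (rename (Fin.castLE (by norm_num : 2 ≤ 4)) :
      MvPolynomial (Fin 2) k → MvPolynomial (Fin 4) k))
    (h₄st : a₄ ∈ Set.range (rename (Fin.castLE (by norm_num : 2 ≤ 4)) :
      MvPolynomial (Fin 2) k → MvPolynomial (Fin 4) k))
    (h₆st : a₆ ∈ Set.range (rename (Fin.castLE (by norm_num : 2 ≤ 4)) :
      MvPolynomial (Fin 2) k → MvPolynomial (Fin 4) k))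
    (f : MvPolynomial (Fin 4) k)
    (hf : f = X 3 ^ 2 - (X 2 ^ 3 + a₂ * X 2 ^ 2 + a₄ * X 2 + a₆)) :
    f ^ 2 ∈ Ideal.span {(X 0 ^ 3 : MvPolynomial (Fin 4) k), X 1 ^ 3, X 2 ^ 3, X 3 ^ 3} ↔
      a₂ = 0 ∧ ∃ a b c d : k,
        a₄ = C a * X 0 ^ 4 + C b * X 0 ^ 3 * X 1 + C c * X 0 * X 1 ^ 3
            + C d * X 1 ^ 4 := by
  have h2ne : (2 : k) ≠ 0 := by
    have h3 : (3 : k) = 0 := CharP.cast_eq_zero k 3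
    intro h
    have : (1 : k) = 0 := by linear_combination h3 - h
    exact one_ne_zero this
  constructor
  · intro hmem
    rw [C3F.mem_I_iff] at hmem
    set g : MvPolynomial (Fin 4) k := X 2 ^ 3 + a₂ * X 2 ^ 2 + a₄ * X 2 + a₆ with hg
    -- coefficients of g vanish when the y-exponent is nonzero
    have hgy : ∀ u : Fin 4 →₀ ℕ, u 3 ≠ 0 → coeff u g = 0 := by
      intro u hu
      rw [hg]
      rw [coeff_add, coeff_add, coeff_add]
      have hX : (X 2 : MvPolynomial (Fin 4) k) = monomial (Finsupp.single 2 1) 1 := by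
        rw [← X_pow_eq_monomial, pow_one]
      have hsub : ∀ n : ℕ, ((u - Finsupp.single (2 : Fin 4) n : Fin 4 →₀ ℕ)) 3 = u 3 := by
        intro n
        rw [Finsupp.tsub_apply, Finsupp.single_apply]
        simp
      have t1 : coeff u (X 2 ^ 3 : MvPolynomial (Fin 4) k) = 0 := by
        rw [X_pow_eq_monomial, coeff_monomial, if_neg]
        intro h
        apply hu
        rw [← h, Finsupp.single_apply]
        simp
      have t2 : coeff u (a₂ * X 2 ^ 2) = 0 := by
        rw [X_pow_eq_monomial, coeff_mul_monomial']
        split_ifs with h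
        · rw [C3F.coeff_st_zero h₂st (Or.inr (by rw [hsub]; exact hu)), zero_mul]
        · rfl
      have t3 : coeff u (a₄ * X 2) = 0 := by
        rw [hX, coeff_mul_monomial']
        split_ifs with h
        · rw [C3F.coeff_st_zero h₄st (Or.inr (by rw [hsub]; exact hu)), zero_mul]
        · rfl
      have t4 : coeff u a₆ = 0 := C3F.coeff_st_zero h₆st (Or.inr hu)
      rw [t1, t2, t3, t4]
      ring
    -- the key coefficient extraction lemma
    have key : ∀ m' : Fin 4 →₀ ℕ, m' 3 = 0 → (∀ i, m' i ≤ 2) → coeff m' g = 0 := by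
      intro m' h3 hle
      set m₀ := m' + Finsupp.single 3 2 with hm₀
      have hb : ∀ i : Fin 4, m₀ i ≤ 2 := by
        intro i
        rw [hm₀, Finsupp.add_apply]
        rcases eq_or_ne i 3 with rfl | hne
        · rw [h3, Finsupp.single_eq_same]
        · rw [Finsupp.single_eq_of_ne' (Ne.symm hne), add_zero]
          exact hle i
      have hnot : m₀ ∉ (f ^ 2).support := by
        intro hin
        obtain ⟨i, hi⟩ := hmem m₀ hin
        have := hb i
        omega
      have hc0 : coeff m₀ (f ^ 2) = 0 := notMem_support_iff.mp hnot
      have hf2 : f ^ 2 = X 3 ^ 2 * X 3 ^ 2 - g * X 3 ^ 2 - g * X 3 ^ 2 + g * g := by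
        rw [hf, hg]; ring
      rw [hf2] at hc0
      simp only [coeff_add, coeff_sub] at hc0
      have e1 : coeff m₀ (X 3 ^ 2 * X 3 ^ 2 : MvPolynomial (Fin 4) k) = 0 := by
        have hXX : (X 3 ^ 2 * X 3 ^ 2 : MvPolynomial (Fin 4) k)
            = monomial (Finsupp.single 3 4) 1 := by
          rw [← pow_add, X_pow_eq_monomial]
        rw [hXX, coeff_monomial, if_neg]
        intro h
        have := congrArg (fun v => v 3) h
        simp only [hm₀, Finsupp.add_apply, Finsupp.single_eq_same, h3] at this
        omega
      have e2 : coeff m₀ (g * X 3 ^ 2) = coeff m' g := by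
        rw [X_pow_eq_monomial, hm₀, coeff_mul_monomial, mul_one]
      have e3 : coeff m₀ (g * g) = 0 := by
        rw [coeff_mul]
        apply Finset.sum_eq_zero
        rintro ⟨u, v⟩ huv
        rw [Finset.HasAntidiagonal.mem_antidiagonal] at huv
        have huv3 : u 3 ≠ 0 ∨ v 3 ≠ 0 := by
          by_contra hcon
          push_neg at hcon
          have := congrArg (fun w => w 3) huv
          simp only [hm₀, Finsupp.add_apply, Finsupp.single_eq_same, h3,
            hcon.1, hcon.2] at this
          omega
        rcases huv3 with h | h
        · rw [hgy u h, zero_mul]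
        · rw [hgy v h, mul_zero]
      rw [e1, e2, e3] at hc0
      have h2c : (2 : k) * coeff m' g = 0 := by linear_combination -hc0
      rcases mul_eq_zero.mp h2c with h | h
      · exact absurd h h2ne
      · exact h
    -- a₂ = 0
    have ha₂ : a₂ = 0 := by
      ext dd
      rw [coeff_zero]
      by_contra hd
      obtain ⟨hd2, hd3⟩ := C3F.supp_st h₂st hd
      have hdeg : dd.degree = 2 := by
        by_contra hne
        exact hd (h₂deg.coeff_eq_zero hne)
      have hddle : ∀ i, dd i ≤ 2 := fun i => hdeg ▸ Finsupp.le_degree i dd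
      set m' := dd + Finsupp.single 2 2 with hm'
      have h3' : m' 3 = 0 := by
        rw [hm', Finsupp.add_apply, hd3, Finsupp.single_apply]
        simp
      have hle : ∀ i, m' i ≤ 2 := by
        intro i
        rw [hm', Finsupp.add_apply]
        rcases eq_or_ne i 2 with rfl | hne
        · rw [hd2, Finsupp.single_eq_same]
        · rw [Finsupp.single_eq_of_ne' (Ne.symm hne), add_zero]
          exact hddle i
      have hkey := key m' h3' hle
      rw [hg, coeff_add, coeff_add, coeff_add] at hkey
      have t1 : coeff m' (X 2 ^ 3 : MvPolynomial (Fin 4) k) = 0 := by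
        rw [X_pow_eq_monomial, coeff_monomial, if_neg]
        intro h
        have := congrArg (fun v => v 2) h
        simp only [hm', Finsupp.add_apply, Finsupp.single_eq_same, hd2] at this
        omega
      have t2 : coeff m' (a₂ * X 2 ^ 2) = coeff dd a₂ := by
        rw [X_pow_eq_monomial, hm', coeff_mul_monomial, mul_one]
      have t3 : coeff m' (a₄ * X 2) = 0 := by
        have hsplit : m' = (dd + Finsupp.single 2 1) + Finsupp.single 2 1 := by
          rw [hm', add_assoc, ← Finsupp.single_add]
        rw [hsplit, coeff_mul_X]
        apply C3F.coeff_st_zero h₄st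
        left
        rw [Finsupp.add_apply, hd2, Finsupp.single_eq_same]
        simp
      have t4 : coeff m' a₆ = 0 := by
        apply C3F.coeff_st_zero h₆st
        left
        rw [hm', Finsupp.add_apply, hd2, Finsupp.single_eq_same]
        simp
      rw [t1, t2, t3, t4] at hkey
      apply hd
      linear_combination hkey
    -- the s²t² coefficient of a₄ vanishes
    have ha22 : coeff (C3F.e 2 2) a₄ = 0 := by
      set m' := C3F.e 2 2 + Finsupp.single 2 1 with hm'
      have h3' : m' 3 = 0 := by
        rw [hm', Finsupp.add_apply, C3F.e_apply3, Finsupp.single_apply]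
        simp
      have hle : ∀ i, m' i ≤ 2 := by
        intro i
        rw [hm', Finsupp.add_apply]
        fin_cases i <;> simp [Finsupp.single_apply]
      have hkey := key m' h3' hle
      rw [hg, ha₂, coeff_add, coeff_add, coeff_add] at hkey
      have t1 : coeff m' (X 2 ^ 3 : MvPolynomial (Fin 4) k) = 0 := by
        rw [X_pow_eq_monomial, coeff_monomial, if_neg]
        intro h
        have := congrArg (fun v => v 2) h
        simp only [hm', Finsupp.add_apply, Finsupp.single_eq_same, C3F.e_apply2] at this
        omega
      have t2 : coeff m' ((0 : MvPolynomial (Fin 4) k) * X 2 ^ 2) = 0 := by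
        rw [zero_mul, coeff_zero]
      have t3 : coeff m' (a₄ * X 2) = coeff (C3F.e 2 2) a₄ := by
        rw [hm', coeff_mul_X]
      have t4 : coeff m' a₆ = 0 := by
        apply C3F.coeff_st_zero h₆st
        left
        rw [hm', Finsupp.add_apply, C3F.e_apply2, Finsupp.single_eq_same]
        simp
      rw [t1, t2, t3, t4] at hkey
      linear_combination hkey
    -- reconstruct a₄
    refine ⟨ha₂, coeff (C3F.e 4 0) a₄, coeff (C3F.e 3 1) a₄, coeff (C3F.e 1 3) a₄,
      coeff (C3F.e 0 4) a₄, ?_⟩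
    have hsupp : ∀ dd : Fin 4 →₀ ℕ, coeff dd a₄ ≠ 0 →
        dd = C3F.e (dd 0) (dd 1) ∧ dd 0 + dd 1 = 4 := by
      intro dd hdd
      obtain ⟨h2, h3⟩ := C3F.supp_st h₄st hdd
      have hdeg : dd.degree = 4 := by
        by_contra hne
        exact hdd (h₄deg.coeff_eq_zero hne)
      rw [C3F.degree_eq4, h2, h3, add_zero, add_zero] at hdeg
      exact ⟨C3F.eq_e_of dd h2 h3, hdeg⟩
    rw [C3F.rhs_eq]
    ext m
    simp only [coeff_add, coeff_monomial]
    by_cases h40 : C3F.e 4 0 = m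
    · rw [← h40]
      simp [C3F.e_eq_iff]
    by_cases h31 : C3F.e 3 1 = m
    · rw [← h31]
      simp [C3F.e_eq_iff]
    by_cases h13 : C3F.e 1 3 = m
    · rw [← h13]
      simp [C3F.e_eq_iff]
    by_cases h04 : C3F.e 0 4 = m
    · rw [← h04]
      simp [C3F.e_eq_iff]
    rw [if_neg h40, if_neg h31, if_neg h13, if_neg h04]
    simp only [add_zero]
    by_contra hne
    obtain ⟨hm_eq, hsum⟩ := hsupp m hne
    have hp4 : m 0 ≤ 4 := by omega
    interval_cases hp : (m 0)
    · rw [show m 1 = 4 by omega] at hm_eq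
      exact h04 hm_eq.symm
    · rw [show m 1 = 3 by omega] at hm_eq
      exact h13 hm_eq.symm
    · rw [show m 1 = 2 by omega] at hm_eq
      exact hne (by rw [hm_eq]; exact ha22)
    · rw [show m 1 = 1 by omega] at hm_eq
      exact h31 hm_eq.symm
    · rw [show m 1 = 0 by omega] at hm_eq
      exact h40 hm_eq.symm
  · rintro ⟨rfl, a, b, c, d, rfl⟩
    subst hf
    set I := Ideal.span {(X 0 ^ 3 : MvPolynomial (Fin 4) k), X 1 ^ 3, X 2 ^ 3, X 3 ^ 3} with hI
    have hX0 : (X 0 ^ 3 : MvPolynomial (Fin 4) k) ∈ I :=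
      Ideal.subset_span (Set.mem_insert _ _)
    have hX1 : (X 1 ^ 3 : MvPolynomial (Fin 4) k) ∈ I :=
      Ideal.subset_span (Set.mem_insert_of_mem _ (Set.mem_insert _ _))
    have hX2 : (X 2 ^ 3 : MvPolynomial (Fin 4) k) ∈ I :=
      Ideal.subset_span (Set.mem_insert_of_mem _ (Set.mem_insert_of_mem _ (Set.mem_insert _ _)))
    have hX3 : (X 3 ^ 3 : MvPolynomial (Fin 4) k) ∈ I :=
      Ideal.subset_span (Set.mem_insert_of_mem _ (Set.mem_insert_of_mem _
        (Set.mem_insert_of_mem _ rfl)))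
    have ha₆ : a₆ ∈ I := by
      rw [hI, C3F.mem_I_iff]
      intro m hm
      rw [mem_support_iff] at hm
      obtain ⟨h2, h3⟩ := C3F.supp_st h₆st hm
      have hdeg : m.degree = 6 := by
        by_contra hne
        exact hm (h₆deg.coeff_eq_zero hne)
      rw [C3F.degree_eq4, h2, h3, add_zero, add_zero] at hdeg
      rcases le_or_gt 3 (m 0) with h | h
      · exact ⟨0, h⟩
      · exact ⟨1, by omega⟩
    have ha₄ : (C a * X 0 ^ 4 + C b * X 0 ^ 3 * X 1 + C c * X 0 * X 1 ^ 3
        + C d * X 1 ^ 4 : MvPolynomial (Fin 4) k) ∈ I := by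
      refine Ideal.add_mem _ (Ideal.add_mem _ (Ideal.add_mem _ ?_ ?_) ?_) ?_
      · rw [show (C a * X 0 ^ 4 : MvPolynomial (Fin 4) k) = C a * X 0 * X 0 ^ 3 by ring]
        exact Ideal.mul_mem_left _ _ hX0
      · rw [show (C b * X 0 ^ 3 * X 1 : MvPolynomial (Fin 4) k) = C b * X 1 * X 0 ^ 3 by ring]
        exact Ideal.mul_mem_left _ _ hX0
      · rw [show (C c * X 0 * X 1 ^ 3 : MvPolynomial (Fin 4) k) = C c * X 0 * X 1 ^ 3 by ring]
        exact Ideal.mul_mem_left _ _ hX1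
      · rw [show (C d * X 1 ^ 4 : MvPolynomial (Fin 4) k) = C d * X 1 * X 1 ^ 3 by ring]
        exact Ideal.mul_mem_left _ _ hX1
    set A : MvPolynomial (Fin 4) k := C a * X 0 ^ 4 + C b * X 0 ^ 3 * X 1
      + C c * X 0 * X 1 ^ 3 + C d * X 1 ^ 4 with hA
    have hgI : (X 2 ^ 3 + 0 * X 2 ^ 2 + A * X 2 + a₆ : MvPolynomial (Fin 4) k) ∈ I := by
      refine Ideal.add_mem _ (Ideal.add_mem _ (Ideal.add_mem _ hX2 ?_) ?_) ha₆
      · rw [zero_mul]; exact Ideal.zero_mem _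
      · exact Ideal.mul_mem_right _ _ ha₄
    have hf2 : (X 3 ^ 2 - (X 2 ^ 3 + 0 * X 2 ^ 2 + A * X 2 + a₆)) ^ 2
        = X 3 * X 3 ^ 3
          + ((X 2 ^ 3 + 0 * X 2 ^ 2 + A * X 2 + a₆) - 2 * X 3 ^ 2)
            * (X 2 ^ 3 + 0 * X 2 ^ 2 + A * X 2 + a₆) := by
      ring
    rw [hf2]
    exact Ideal.add_mem _ (Ideal.mul_mem_left _ _ hX3) (Ideal.mul_mem_left _ _ hgI)
end

section
/- Let k be an algebraically closed field of characteristic 3, let a₂, a₄, a₆ ∈ k[s,t,x,y] be homogeneous polynomials of degrees 2, 4 and 6 respectively involving only the variables s and t, and set f = y² − (x³ + a₂·x² + a₄·x + a₆). Then the quotient ring k[s,t,x,y]/(f) is not F-split if and only if a₂ = 0 and there exist a, b, c, d ∈ k with a₄ = a·s⁴ + b·s³·t + c·s·t³ + d·t⁴. -/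
open MvPolynomial

noncomputable section FSplitAux

variable {k : Type*} [Field k] [CharP k 3] [PerfectRing k 3]

instance : Fact (Nat.Prime 3) := ⟨by norm_num⟩

def rInv (k : Type*) [Field k] [CharP k 3] [PerfectRing k 3] : k →+* k :=
  ((frobeniusEquiv k 3).symm : k ≃+* k)

lemma rInv_cube (c : k) : rInv k (c ^ 3) = c := frobeniusEquiv_symm_apply_frobenius k 3 c

lemma cube_rInv (c : k) : (rInv k c) ^ 3 = c := frobeniusEquiv_symm_pow_p k 3 c

lemma rInv_eq_one {c : k} (h : rInv k c = 1) : c = 1 := by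
  have := congrArg (fun x => x ^ 3) h
  simpa [cube_rInv] using this

lemma shift_inj (ε : Fin 4 →₀ ℕ) : Function.Injective (fun n : Fin 4 →₀ ℕ => 3 • n + ε) := by
  intro a b h
  ext i
  have := DFunLike.congr_fun h i
  simp only [Finsupp.add_apply, Finsupp.smul_apply, smul_eq_mul] at this
  omega

def T (ε : Fin 4 →₀ ℕ) : MvPolynomial (Fin 4) k →+ MvPolynomial (Fin 4) k :=
  (AddMonoidAlgebra.coeffAddEquiv.symm.toAddMonoidHom).comp
  ((Finsupp.mapRange.addMonoidHom (rInv k).toAddMonoidHom).comp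
    ((Finsupp.comapDomain.addMonoidHom (shift_inj ε)).comp
      (AddMonoidAlgebra.coeffAddEquiv : MvPolynomial (Fin 4) k ≃+ _).toAddMonoidHom))

lemma coeff_T (ε : Fin 4 →₀ ℕ) (p : MvPolynomial (Fin 4) k) (n : Fin 4 →₀ ℕ) :
    coeff n (T ε p) = rInv k (coeff (3 • n + ε) p) := rfl

/-- the exponent vector (2,2,2,2) -/
def EE : Fin 4 →₀ ℕ := Finsupp.equivFunOnFinite.symm (fun _ => 2)

@[simp] lemma EE_apply (i : Fin 4) : EE i = 2 := rfl

lemma T_monomial_eq (ε n : Fin 4 →₀ ℕ) (c : k) :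
    T ε (monomial (3 • n + ε) c) = monomial n (rInv k c) := by
  apply MvPolynomial.ext
  intro m
  rw [coeff_T, coeff_monomial, coeff_monomial]
  by_cases h : n = m
  · subst h; simp
  · rw [if_neg, if_neg h]
    · simp
    · intro hc
      exact h (shift_inj ε hc)

lemma T_monomial_ne (ε m : Fin 4 →₀ ℕ) (c : k) (h : ∀ n, m ≠ 3 • n + ε) :
    T ε (monomial m c) = 0 := by
  apply MvPolynomial.ext
  intro n
  rw [coeff_T, coeff_monomial]
  rw [if_neg (fun hc => h n hc)]
  simp

lemma T_cube (ε : Fin 4 →₀ ℕ) (hε : ∀ i, ε i ≤ 2) (h p : MvPolynomial (Fin 4) k) :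
    T ε (h ^ 3 * p) = h * T ε p := by
  induction h using MvPolynomial.induction_on' with
  | add q₁ q₂ ih₁ ih₂ =>
    rw [add_pow_char _ (p := 3), add_mul, map_add, ih₁, ih₂, add_mul]
  | monomial α c =>
    apply MvPolynomial.ext
    intro n
    rw [monomial_pow, coeff_T, coeff_monomial_mul', coeff_monomial_mul']
    by_cases hle : α ≤ n
    · have hle3 : (3 • α : Fin 4 →₀ ℕ) ≤ 3 • n + ε := by
        intro i
        have := hle i
        simp only [Finsupp.add_apply, Finsupp.smul_apply, smul_eq_mul]
        omega
      rw [if_pos hle3, if_pos hle]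
      have harg : (3 • n + ε) - 3 • α = 3 • (n - α) + ε := by
        ext i
        have := hle i
        simp only [Finsupp.tsub_apply, Finsupp.add_apply, Finsupp.smul_apply, smul_eq_mul]
        omega
      rw [harg, map_mul, ← coeff_T, rInv_cube]
    · have hle3 : ¬ ((3 • α : Fin 4 →₀ ℕ) ≤ 3 • n + ε) := by
        intro hc
        apply hle
        intro i
        have := hc i
        have := hε i
        simp only [Finsupp.add_apply, Finsupp.smul_apply, smul_eq_mul] at *
        omega
      rw [if_neg hle3, if_neg hle, map_zero]

lemma T_shift (ε : Fin 4 →₀ ℕ) (hε : ε ≤ EE) (p : MvPolynomial (Fin 4) k) :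
    T EE (p * monomial (EE - ε) 1) = T ε p := by
  apply MvPolynomial.ext
  intro n
  rw [coeff_T, coeff_T, coeff_mul_monomial']
  have h1 : EE - ε ≤ 3 • n + EE := by
    intro i
    simp only [Finsupp.tsub_apply, Finsupp.add_apply, Finsupp.smul_apply, smul_eq_mul, EE_apply]
    omega
  rw [if_pos h1, mul_one]
  have h2 : (3 • n + EE) - (EE - ε) = 3 • n + ε := by
    ext i
    have := hε i
    simp only [Finsupp.tsub_apply, Finsupp.add_apply, Finsupp.smul_apply, smul_eq_mul,
      EE_apply] at *
    omega
  rw [h2]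

end FSplitAux

noncomputable section FSplitAux2
variable {k : Type*} [Field k] [CharP k 3] [PerfectRing k 3]

lemma mod3_decomp (m : Fin 4 →₀ ℕ) :
    ∃ n ε : Fin 4 →₀ ℕ, ε ≤ EE ∧ m = 3 • n + ε := by
  refine ⟨Finsupp.mapRange (· / 3) (by norm_num) m,
    Finsupp.mapRange (· % 3) (by norm_num) m, ?_, ?_⟩
  · intro i
    simp only [Finsupp.mapRange_apply, EE_apply]
    omega
  · ext i
    simp only [Finsupp.add_apply, Finsupp.smul_apply, Finsupp.mapRange_apply, smul_eq_mul]
    omega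

lemma decomposition (p : MvPolynomial (Fin 4) k) :
    ∑ ε ∈ Finset.Iic EE, (T ε p) ^ 3 * monomial ε 1 = p := by
  induction p using MvPolynomial.induction_on' with
  | add q₁ q₂ ih₁ ih₂ =>
    calc ∑ ε ∈ Finset.Iic EE, (T ε (q₁ + q₂)) ^ 3 * monomial ε 1
        = ∑ ε ∈ Finset.Iic EE,
            ((T ε q₁) ^ 3 * monomial ε 1 + (T ε q₂) ^ 3 * monomial ε 1) := by
          apply Finset.sum_congr rfl
          intro ε _
          rw [map_add, add_pow_char _ (p := 3), add_mul]
      _ = q₁ + q₂ := by rw [Finset.sum_add_distrib, ih₁, ih₂]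
  | monomial m c =>
    obtain ⟨n, ε₀, hε₀, rfl⟩ := mod3_decomp m
    rw [Finset.sum_eq_single ε₀]
    · rw [T_monomial_eq, monomial_pow, monomial_mul, cube_rInv, mul_one]
    · intro ε hε hne
      rw [T_monomial_ne, zero_pow (by norm_num), zero_mul]
      intro n' hc
      apply hne
      ext i
      have h1 := DFunLike.congr_fun hc i
      have h2 := (Finset.mem_Iic.mp hε) i
      have h3 := hε₀ i
      simp only [Finsupp.add_apply, Finsupp.smul_apply, smul_eq_mul, EE_apply] at *
      omega
    · intro hc
      exact absurd (Finset.mem_Iic.mpr hε₀) hc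

end FSplitAux2

noncomputable section FSplitGeo
variable {k : Type*} [Field k] [CharP k 3] [PerfectRing k 3]

abbrev STOnly (a : MvPolynomial (Fin 4) k) : Prop :=
  ∀ m : Fin 4 →₀ ℕ, coeff m a ≠ 0 → m 2 = 0 ∧ m 3 = 0

lemma stOnly_of_mem {a : MvPolynomial (Fin 4) k}
    (ha : a ∈ Set.range (rename (Fin.castLE (by norm_num : 2 ≤ 4)) :
      MvPolynomial (Fin 2) k → MvPolynomial (Fin 4) k)) : STOnly a := by
  obtain ⟨q, rfl⟩ := ha
  intro m hm
  obtain ⟨u, hu, -⟩ := coeff_rename_ne_zero _ _ _ hm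
  have h2 : (2 : Fin 4) ∉ Set.range (Fin.castLE (by norm_num : 2 ≤ 4)) := by
    rintro ⟨j, hj⟩
    have hval := congrArg Fin.val hj
    rw [Fin.coe_castLE, show (((2 : Fin 4)) : ℕ) = 2 from rfl] at hval
    have := j.isLt
    omega
  have h3 : (3 : Fin 4) ∉ Set.range (Fin.castLE (by norm_num : 2 ≤ 4)) := by
    rintro ⟨j, hj⟩
    have hval := congrArg Fin.val hj
    rw [Fin.coe_castLE, show (((3 : Fin 4)) : ℕ) = 3 from rfl] at hval
    have := j.isLt
    omega
  constructor
  · rw [← hu]; exact Finsupp.mapDomain_notin_range _ _ h2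
  · rw [← hu]; exact Finsupp.mapDomain_notin_range _ _ h3

lemma fin4_all {P : Fin 4 → Prop} (h0 : P 0) (h1 : P 1) (h2 : P 2) (h3 : P 3) :
    ∀ l, P l := by
  intro l
  fin_cases l <;> assumption

lemma degree4 (m : Fin 4 →₀ ℕ) : m.degree = m 0 + m 1 + m 2 + m 3 := by
  have : m.degree = ∑ i : Fin 4, m i := by
    rw [Finsupp.degree]
    apply Finset.sum_subset (Finset.subset_univ _)
    intro i _ hi
    exact Finsupp.notMem_support_iff.mp hi
  rw [this, Fin.sum_univ_four]

lemma homog_coeff_ne_zero {a : MvPolynomial (Fin 4) k} {d : ℕ} (hd : a.IsHomogeneous d)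
    {m : Fin 4 →₀ ℕ} (hm : coeff m a ≠ 0) : m 0 + m 1 + m 2 + m 3 = d := by
  have := hd hm
  rw [show (Finsupp.weight 1 : (Fin 4 →₀ ℕ) →+ ℕ) = Finsupp.weight (fun _ => 1) from rfl,
    ← Finsupp.degree_eq_weight_one] at this
  rw [← degree4, this]

/-- projection onto the s,t part of an exponent vector -/
def stv (u : Fin 4 →₀ ℕ) : Fin 4 →₀ ℕ := Finsupp.single 0 (u 0) + Finsupp.single 1 (u 1)

@[simp] lemma stv_0 (u : Fin 4 →₀ ℕ) : stv u 0 = u 0 := by simp [stv]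
@[simp] lemma stv_1 (u : Fin 4 →₀ ℕ) : stv u 1 = u 1 := by simp [stv]
@[simp] lemma stv_2 (u : Fin 4 →₀ ℕ) : stv u 2 = 0 := by simp [stv]
@[simp] lemma stv_3 (u : Fin 4 →₀ ℕ) : stv u 3 = 0 := by simp [stv]

lemma coeff_st_mul_monomial {a : MvPolynomial (Fin 4) k} (hst : STOnly a) (i j : ℕ)
    (u : Fin 4 →₀ ℕ) :
    coeff u (a * X 2 ^ i * X 3 ^ j) =
      if u 2 = i ∧ u 3 = j then coeff (stv u) a else 0 := by
  have key : a * X 2 ^ i * X 3 ^ j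
      = a * monomial (Finsupp.single 2 i + Finsupp.single 3 j) 1 := by
    rw [X_pow_eq_monomial, X_pow_eq_monomial, mul_assoc, monomial_mul, mul_one]
  rw [key, coeff_mul_monomial']
  have hs2 : (Finsupp.single 2 i + Finsupp.single 3 j : Fin 4 →₀ ℕ) 2 = i := by
    simp [Finsupp.single_apply]
  have hs3 : (Finsupp.single 2 i + Finsupp.single 3 j : Fin 4 →₀ ℕ) 3 = j := by
    simp [Finsupp.single_apply]
  have hs0 : (Finsupp.single 2 i + Finsupp.single 3 j : Fin 4 →₀ ℕ) 0 = 0 := by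
    simp [Finsupp.single_apply]
  have hs1 : (Finsupp.single 2 i + Finsupp.single 3 j : Fin 4 →₀ ℕ) 1 = 0 := by
    simp [Finsupp.single_apply]
  by_cases hle : (Finsupp.single 2 i + Finsupp.single 3 j : Fin 4 →₀ ℕ) ≤ u
  · rw [if_pos hle]
    have hi : i ≤ u 2 := by have := Finsupp.le_def.mp hle 2; rwa [hs2] at this
    have hj : j ≤ u 3 := by have := Finsupp.le_def.mp hle 3; rwa [hs3] at this
    by_cases hc : u 2 = i ∧ u 3 = j
    · rw [if_pos hc]
      have : u - (Finsupp.single 2 i + Finsupp.single 3 j) = stv u := by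
        apply DFunLike.ext
        apply fin4_all <;>
          simp only [Finsupp.tsub_apply, hs0, hs1, hs2, hs3, stv_0, stv_1, stv_2, stv_3] <;>
          omega
      rw [this, mul_one]
    · rw [if_neg hc, mul_one]
      by_contra hne
      obtain ⟨e2, e3⟩ := hst _ hne
      rw [Finsupp.tsub_apply, hs2] at e2
      rw [Finsupp.tsub_apply, hs3] at e3
      omega
  · rw [if_neg hle, if_neg]
    rintro ⟨hc2, hc3⟩
    apply hle
    rw [Finsupp.le_def]
    apply fin4_all <;> simp only [hs0, hs1, hs2, hs3] <;> omega

end FSplitGeo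

noncomputable section FSplitGeo2
set_option linter.unusedSectionVars false
variable {k : Type*} [Field k] [CharP k 3] [PerfectRing k 3]

lemma stOnly_one : STOnly (1 : MvPolynomial (Fin 4) k) := by
  intro m hm
  rw [coeff_one] at hm
  split_ifs at hm with h
  · rw [← h]; simp
  · exact absurd rfl hm

lemma stOnly_mul {a b : MvPolynomial (Fin 4) k} (ha : STOnly a) (hb : STOnly b) :
    STOnly (a * b) := by
  intro m hm
  have hmem : m ∈ (a * b).support := MvPolynomial.mem_support_iff.mpr hm
  have := MvPolynomial.support_mul a b hmem
  rw [Finset.mem_add] at this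
  obtain ⟨p, hp, q, hq, rfl⟩ := this
  have h1 := ha p (MvPolynomial.mem_support_iff.mp hp)
  have h2 := hb q (MvPolynomial.mem_support_iff.mp hq)
  simp only [Finsupp.add_apply]
  omega

lemma stOnly_add {a b : MvPolynomial (Fin 4) k} (ha : STOnly a) (hb : STOnly b) :
    STOnly (a + b) := by
  intro m hm
  rw [coeff_add] at hm
  by_cases h : coeff m a = 0
  · exact hb m (by rw [h, zero_add] at hm; exact hm)
  · exact ha m h

lemma coeff_st_homog_vanish {a : MvPolynomial (Fin 4) k} {d : ℕ} (hst : STOnly a)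
    (hd : a.IsHomogeneous d) (i j : ℕ) (u : Fin 4 →₀ ℕ)
    (hcond : u 0 + u 1 ≠ d ∨ u 2 ≠ i ∨ u 3 ≠ j) :
    coeff u (a * X 2 ^ i * X 3 ^ j) = 0 := by
  rw [coeff_st_mul_monomial hst]
  split_ifs with hc
  · obtain ⟨hc2, hc3⟩ := hc
    rcases hcond with hcond | hcond | hcond
    · by_contra hne
      have := homog_coeff_ne_zero hd hne
      rw [stv_0, stv_1, stv_2, stv_3] at this
      omega
    · exact absurd hc2 hcond
    · exact absurd hc3 hcond
  · rfl

lemma coeff_st_homog_val {a : MvPolynomial (Fin 4) k} (hst : STOnly a)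
    (i j : ℕ) (u : Fin 4 →₀ ℕ) (h2 : u 2 = i) (h3 : u 3 = j) :
    coeff u (a * X 2 ^ i * X 3 ^ j) = coeff (stv u) a := by
  rw [coeff_st_mul_monomial hst, if_pos ⟨h2, h3⟩]

section Master
variable {a₂ a₄ a₆ f : MvPolynomial (Fin 4) k}
  (h₂deg : a₂.IsHomogeneous 2) (h₄deg : a₄.IsHomogeneous 4) (h₆deg : a₆.IsHomogeneous 6)
  (h₂st : STOnly a₂) (h₄st : STOnly a₄) (h₆st : STOnly a₆)
  (hf : f = X 3 ^ 2 - (X 2 ^ 3 + a₂ * X 2 ^ 2 + a₄ * X 2 + a₆))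

include h₂deg h₄deg h₆deg h₂st h₄st h₆st hf

lemma master_coeff_f_sq (u : Fin 4 →₀ ℕ)
    (h0 : u 0 ≤ 2) (h1 : u 1 ≤ 2) (h2 : u 2 ≤ 2) (h3 : u 3 ≤ 2) :
    coeff u (f ^ 2) =
      coeff u (a₂ * X 2 ^ 2 * X 3 ^ 2) + coeff u (a₄ * X 2 ^ 1 * X 3 ^ 2) := by
  have h3S : (3 : MvPolynomial (Fin 4) k) = 0 := by
    exact_mod_cast CharP.cast_eq_zero (MvPolynomial (Fin 4) k) 3
  have expand : f ^ 2 =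
      a₂ * X 2 ^ 2 * X 3 ^ 2 + a₄ * X 2 ^ 1 * X 3 ^ 2
      + (1 * X 2 ^ 0 * X 3 ^ 4
      + 1 * X 2 ^ 3 * X 3 ^ 2
      + a₆ * X 2 ^ 0 * X 3 ^ 2
      + 1 * X 2 ^ 6 * X 3 ^ 0
      + (a₂ * a₂) * X 2 ^ 4 * X 3 ^ 0
      + (a₄ * a₄) * X 2 ^ 2 * X 3 ^ 0
      + (a₆ * a₆) * X 2 ^ 0 * X 3 ^ 0
      + (a₂ + a₂) * X 2 ^ 5 * X 3 ^ 0
      + (a₄ + a₄) * X 2 ^ 4 * X 3 ^ 0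
      + (a₆ + a₆) * X 2 ^ 3 * X 3 ^ 0
      + (a₂ * a₄ + a₂ * a₄) * X 2 ^ 3 * X 3 ^ 0
      + (a₂ * a₆ + a₂ * a₆) * X 2 ^ 2 * X 3 ^ 0
      + (a₄ * a₆ + a₄ * a₆) * X 2 ^ 1 * X 3 ^ 0) := by
    rw [hf]
    linear_combination (-(X 3 ^ 2 * (X 2 ^ 3 + a₂ * X 2 ^ 2 + a₄ * X 2 + a₆))) * h3S
  rw [expand]
  rw [coeff_add, coeff_add]
  repeat rw [coeff_add (R := k)]
  rw [coeff_st_homog_vanish stOnly_one (isHomogeneous_one _ _) 0 4 u (by omega),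
    coeff_st_homog_vanish stOnly_one (isHomogeneous_one _ _) 3 2 u (by omega),
    coeff_st_homog_vanish h₆st h₆deg 0 2 u (by omega),
    coeff_st_homog_vanish stOnly_one (isHomogeneous_one _ _) 6 0 u (by omega),
    coeff_st_homog_vanish (stOnly_mul h₂st h₂st) (h₂deg.mul h₂deg) 4 0 u (by omega),
    coeff_st_homog_vanish (stOnly_mul h₄st h₄st) (h₄deg.mul h₄deg) 2 0 u (by omega),
    coeff_st_homog_vanish (stOnly_mul h₆st h₆st) (h₆deg.mul h₆deg) 0 0 u (by omega),
    coeff_st_homog_vanish (stOnly_add h₂st h₂st) (h₂deg.add h₂deg) 5 0 u (by omega),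
    coeff_st_homog_vanish (stOnly_add h₄st h₄st) (h₄deg.add h₄deg) 4 0 u (by omega),
    coeff_st_homog_vanish (stOnly_add h₆st h₆st) (h₆deg.add h₆deg) 3 0 u (by omega),
    coeff_st_homog_vanish (stOnly_add (stOnly_mul h₂st h₄st) (stOnly_mul h₂st h₄st))
      ((h₂deg.mul h₄deg).add (h₂deg.mul h₄deg)) 3 0 u (by omega),
    coeff_st_homog_vanish (stOnly_add (stOnly_mul h₂st h₆st) (stOnly_mul h₂st h₆st))
      ((h₂deg.mul h₆deg).add (h₂deg.mul h₆deg)) 2 0 u (by omega),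
    coeff_st_homog_vanish (stOnly_add (stOnly_mul h₄st h₆st) (stOnly_mul h₄st h₆st))
      ((h₄deg.mul h₆deg).add (h₄deg.mul h₆deg)) 1 0 u (by omega)]
  norm_num

end Master
end FSplitGeo2

noncomputable section FSplitWH
set_option linter.unusedSectionVars false
variable {k : Type*} [Field k] [CharP k 3] [PerfectRing k 3]

/-- weighted degree with weights 1,1,2,3 -/
def wdeg (m : Fin 4 →₀ ℕ) : ℕ := m 0 + m 1 + 2 * m 2 + 3 * m 3

lemma wdeg_add (m n : Fin 4 →₀ ℕ) : wdeg (m + n) = wdeg m + wdeg n := by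
  simp only [wdeg, Finsupp.add_apply]; ring

/-- weighted-homogeneous of degree d -/
def WH (p : MvPolynomial (Fin 4) k) (d : ℕ) : Prop :=
  ∀ m : Fin 4 →₀ ℕ, coeff m p ≠ 0 → wdeg m = d

lemma WH_mul {p q : MvPolynomial (Fin 4) k} {d e : ℕ} (hp : WH p d) (hq : WH q e) :
    WH (p * q) (d + e) := by
  intro m hm
  have hmem := MvPolynomial.support_mul p q (MvPolynomial.mem_support_iff.mpr hm)
  rw [Finset.mem_add] at hmem
  obtain ⟨u, hu, v, hv, rfl⟩ := hmem
  rw [wdeg_add, hp u (MvPolynomial.mem_support_iff.mp hu),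
    hq v (MvPolynomial.mem_support_iff.mp hv)]

lemma WH_add {p q : MvPolynomial (Fin 4) k} {d : ℕ} (hp : WH p d) (hq : WH q d) :
    WH (p + q) d := by
  intro m hm
  rw [coeff_add] at hm
  by_cases h : coeff m p = 0
  · exact hq m (by rw [h, zero_add] at hm; exact hm)
  · exact hp m h

lemma WH_sub {p q : MvPolynomial (Fin 4) k} {d : ℕ} (hp : WH p d) (hq : WH q d) :
    WH (p - q) d := by
  intro m hm
  rw [coeff_sub] at hm
  by_cases h : coeff m p = 0
  · refine hq m ?_
    intro hc
    rw [h, hc, sub_zero] at hm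
    exact hm rfl
  · exact hp m h

lemma WH_monomial (s : Fin 4 →₀ ℕ) (c : k) : WH (monomial s c) (wdeg s) := by
  intro m hm
  rw [coeff_monomial] at hm
  split_ifs at hm with h
  · rw [← h]
  · exact absurd rfl hm

lemma WH_X_pow (i : Fin 4) (n : ℕ) : WH ((X i : MvPolynomial (Fin 4) k) ^ n)
    (wdeg (Finsupp.single i n)) := by
  rw [X_pow_eq_monomial]
  exact WH_monomial _ _

lemma WH_st_homog {a : MvPolynomial (Fin 4) k} {d : ℕ} (hst : STOnly a)
    (hd : a.IsHomogeneous d) : WH a d := by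
  intro m hm
  obtain ⟨e2, e3⟩ := hst m hm
  have := homog_coeff_ne_zero hd hm
  simp only [wdeg, e2, e3]
  omega

lemma wdeg_single (i : Fin 4) (n : ℕ) : wdeg (Finsupp.single i n) =
    (if i = 0 then 1 else if i = 1 then 1 else if i = 2 then 2 else 3) * n := by
  fin_cases i <;> simp [wdeg, Finsupp.single_apply] <;> ring

section MasterWH
variable {a₂ a₄ a₆ f : MvPolynomial (Fin 4) k}
  (h₂deg : a₂.IsHomogeneous 2) (h₄deg : a₄.IsHomogeneous 4) (h₆deg : a₆.IsHomogeneous 6)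
  (h₂st : STOnly a₂) (h₄st : STOnly a₄) (h₆st : STOnly a₆)
  (hf : f = X 3 ^ 2 - (X 2 ^ 3 + a₂ * X 2 ^ 2 + a₄ * X 2 + a₆))

include h₂deg h₄deg h₆deg h₂st h₄st h₆st hf

lemma WH_f : WH f 6 := by
  rw [hf]
  apply WH_sub
  · have := WH_X_pow (k := k) 3 2
    rw [wdeg_single] at this
    simpa using this
  · apply WH_add
    apply WH_add
    apply WH_add
    · have := WH_X_pow (k := k) 2 3
      rw [wdeg_single] at this
      simpa using this
    · have := WH_mul (WH_st_homog h₂st h₂deg) (WH_X_pow (k := k) 2 2)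
      rw [wdeg_single] at this
      simpa using this
    · have h1 := WH_mul (WH_st_homog h₄st h₄deg) (WH_X_pow (k := k) 2 1)
      rw [wdeg_single] at h1
      simpa using h1
    · exact WH_st_homog h₆st h₆deg

lemma coeff_shift_vf_sq (v : MvPolynomial (Fin 4) k) (dv : ℕ) (hv : WH v dv)
    (hdv : dv = 2) (n : Fin 4 →₀ ℕ) (hn : n ≠ 0) :
    coeff (3 • n + EE) (v * f ^ 2) = 0 := by
  have hwh : WH (v * f ^ 2) 14 := by
    have h2 : WH (f ^ 2) 12 := by
      have := WH_mul (WH_f h₂deg h₄deg h₆deg h₂st h₄st h₆st hf)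
        (WH_f h₂deg h₄deg h₆deg h₂st h₄st h₆st hf)
      rw [show f * f = f ^ 2 by ring] at this
      exact this
    have := WH_mul hv h2
    rw [hdv] at this
    exact this
  by_contra hc
  have := hwh _ hc
  have hwd : wdeg (3 • n + EE) = 3 * wdeg n + 14 := by
    simp only [wdeg, Finsupp.add_apply, Finsupp.smul_apply, smul_eq_mul, EE_apply]
    ring
  rw [hwd] at this
  have hn0 : wdeg n = 0 := by omega
  apply hn
  ext i
  have : ∀ j : Fin 4, n j = 0 := by
    apply fin4_all <;> simp only [wdeg] at hn0 <;> omega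
  exact this i

end MasterWH
end FSplitWH

noncomputable section FSplitCoeffs
set_option linter.unusedSectionVars false
variable {k : Type*} [Field k] [CharP k 3] [PerfectRing k 3]
variable {a₂ a₄ a₆ f : MvPolynomial (Fin 4) k}
  (h₂deg : a₂.IsHomogeneous 2) (h₄deg : a₄.IsHomogeneous 4) (h₆deg : a₆.IsHomogeneous 6)
  (h₂st : STOnly a₂) (h₄st : STOnly a₄) (h₆st : STOnly a₆)
  (hf : f = X 3 ^ 2 - (X 2 ^ 3 + a₂ * X 2 ^ 2 + a₄ * X 2 + a₆))

include h₂deg h₄deg h₆deg h₂st h₄st h₆st hf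

lemma coeff_f2_caseA (m₀ : Fin 4 →₀ ℕ) (hm2 : m₀ 2 = 0) (hm3 : m₀ 3 = 0)
    (hsum : m₀ 0 + m₀ 1 = 2) :
    coeff (m₀ + Finsupp.single 2 2 + Finsupp.single 3 2) (f ^ 2) = coeff m₀ a₂ := by
  set u : Fin 4 →₀ ℕ := m₀ + Finsupp.single 2 2 + Finsupp.single 3 2 with hu
  have hu0 : u 0 = m₀ 0 := by simp [hu, Finsupp.single_apply]
  have hu1 : u 1 = m₀ 1 := by simp [hu, Finsupp.single_apply]
  have hu2 : u 2 = 2 := by simp [hu, Finsupp.single_apply, hm2]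
  have hu3 : u 3 = 2 := by simp [hu, Finsupp.single_apply, hm3]
  rw [master_coeff_f_sq h₂deg h₄deg h₆deg h₂st h₄st h₆st hf u (by omega) (by omega)
    (by omega) (by omega)]
  rw [coeff_st_homog_vanish h₄st h₄deg 1 2 u (by omega), add_zero]
  rw [coeff_st_homog_val h₂st 2 2 u hu2 hu3]
  congr 1
  apply DFunLike.ext
  apply fin4_all <;> simp only [stv_0, stv_1, stv_2, stv_3, hu0, hu1, hm2, hm3]

lemma coeff_f2_caseB :
    coeff (Finsupp.single 0 2 + Finsupp.single 1 2 + Finsupp.single 2 1 + Finsupp.single 3 2)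
      (f ^ 2) = coeff (Finsupp.single 0 2 + Finsupp.single 1 2) a₄ := by
  set u : Fin 4 →₀ ℕ := Finsupp.single 0 2 + Finsupp.single 1 2 + Finsupp.single 2 1
    + Finsupp.single 3 2 with hu
  have hu0 : u 0 = 2 := by simp [hu, Finsupp.single_apply]
  have hu1 : u 1 = 2 := by simp [hu, Finsupp.single_apply]
  have hu2 : u 2 = 1 := by simp [hu, Finsupp.single_apply]
  have hu3 : u 3 = 2 := by simp [hu, Finsupp.single_apply]
  rw [master_coeff_f_sq h₂deg h₄deg h₆deg h₂st h₄st h₆st hf u (by omega) (by omega)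
    (by omega) (by omega)]
  rw [coeff_st_homog_vanish h₂st h₂deg 2 2 u (by omega), zero_add]
  rw [coeff_st_homog_val h₄st 1 2 u hu2 hu3]
  congr 1
  apply DFunLike.ext
  apply fin4_all <;> simp [stv, hu0, hu1, Finsupp.single_apply]

lemma coeff_f2_vanish_le (ha₂ : a₂ = 0) {a b c d : k}
    (ha₄ : a₄ = C a * X 0 ^ 4 + C b * X 0 ^ 3 * X 1 + C c * X 0 * X 1 ^ 3 + C d * X 1 ^ 4)
    (u : Fin 4 →₀ ℕ) (h0 : u 0 ≤ 2) (h1 : u 1 ≤ 2) (h2 : u 2 ≤ 2) (h3 : u 3 ≤ 2) :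
    coeff u (f ^ 2) = 0 := by
  rw [master_coeff_f_sq h₂deg h₄deg h₆deg h₂st h₄st h₆st hf u h0 h1 h2 h3]
  rw [ha₂, zero_mul, zero_mul, coeff_zero, zero_add]
  by_cases hc : u 2 = 1 ∧ u 3 = 2
  · rw [coeff_st_homog_val h₄st 1 2 u hc.1 hc.2, ha₄]
    have e1 : (C a * X 0 ^ 4 : MvPolynomial (Fin 4) k)
        = monomial (Finsupp.single 0 4) a := by
      rw [X_pow_eq_monomial, C_mul_monomial, mul_one]
    have e2 : (C b * X 0 ^ 3 * X 1 : MvPolynomial (Fin 4) k)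
        = monomial (Finsupp.single 0 3 + Finsupp.single 1 1) b := by
      rw [X_pow_eq_monomial, C_mul_monomial, mul_one,
        show (X 1 : MvPolynomial (Fin 4) k) = X 1 ^ 1 by ring, X_pow_eq_monomial,
        monomial_mul, mul_one]
    have e3 : (C c * X 0 * X 1 ^ 3 : MvPolynomial (Fin 4) k)
        = monomial (Finsupp.single 0 1 + Finsupp.single 1 3) c := by
      rw [show (X 0 : MvPolynomial (Fin 4) k) = X 0 ^ 1 by ring, X_pow_eq_monomial,
        C_mul_monomial, mul_one, X_pow_eq_monomial, monomial_mul, mul_one]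
    have e4 : (C d * X 1 ^ 4 : MvPolynomial (Fin 4) k)
        = monomial (Finsupp.single 1 4) d := by
      rw [X_pow_eq_monomial, C_mul_monomial, mul_one]
    rw [e1, e2, e3, e4, coeff_add, coeff_add, coeff_add]
    rw [coeff_monomial, coeff_monomial, coeff_monomial, coeff_monomial]
    rw [if_neg, if_neg, if_neg, if_neg]
    · norm_num
    · intro hcon
      have := DFunLike.congr_fun hcon 1
      simp [Finsupp.single_apply] at this
      omega
    · intro hcon
      have := DFunLike.congr_fun hcon 1
      simp [Finsupp.single_apply] at this
      omega
    · intro hcon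
      have := DFunLike.congr_fun hcon 0
      simp [Finsupp.single_apply] at this
      omega
    · intro hcon
      have := DFunLike.congr_fun hcon 0
      simp [Finsupp.single_apply] at this
      omega
  · rw [coeff_st_mul_monomial h₄st, if_neg hc]

lemma f_expand : f = 1 * X 2 ^ 0 * X 3 ^ 2 - (1 * X 2 ^ 3 * X 3 ^ 0 + a₂ * X 2 ^ 2 * X 3 ^ 0
    + a₄ * X 2 ^ 1 * X 3 ^ 0 + a₆ * X 2 ^ 0 * X 3 ^ 0) := by
  rw [hf]; ring

lemma constantCoeff_f : coeff 0 f = 0 := by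
  rw [f_expand h₂deg h₄deg h₆deg h₂st h₄st h₆st hf, coeff_sub, coeff_add, coeff_add, coeff_add]
  rw [coeff_st_homog_vanish stOnly_one (isHomogeneous_one _ _) 0 2 0 (by simp),
    coeff_st_homog_vanish stOnly_one (isHomogeneous_one _ _) 3 0 0 (by simp),
    coeff_st_homog_vanish h₂st h₂deg 2 0 0 (by simp),
    coeff_st_homog_vanish h₄st h₄deg 1 0 0 (by simp),
    coeff_st_homog_vanish h₆st h₆deg 0 0 0 (by simp)]
  norm_num

lemma coeff_f_y2 : coeff (Finsupp.single 3 2) f = 1 := by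
  set u : Fin 4 →₀ ℕ := Finsupp.single 3 2 with hu
  have hu0 : u 0 = 0 := by simp [hu, Finsupp.single_apply]
  have hu1 : u 1 = 0 := by simp [hu, Finsupp.single_apply]
  have hu2 : u 2 = 0 := by simp [hu, Finsupp.single_apply]
  have hu3 : u 3 = 2 := by simp [hu, Finsupp.single_apply]
  rw [f_expand h₂deg h₄deg h₆deg h₂st h₄st h₆st hf, coeff_sub, coeff_add, coeff_add, coeff_add]
  rw [coeff_st_homog_vanish stOnly_one (isHomogeneous_one _ _) 3 0 u (by omega),
    coeff_st_homog_vanish h₂st h₂deg 2 0 u (by omega),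
    coeff_st_homog_vanish h₄st h₄deg 1 0 u (by omega),
    coeff_st_homog_vanish h₆st h₆deg 0 0 u (by omega)]
  rw [coeff_st_homog_val stOnly_one 0 2 u hu2 hu3]
  have : stv u = 0 := by
    apply DFunLike.ext
    apply fin4_all <;> simp [stv_0, stv_1, stv_2, stv_3, hu0, hu1]
  rw [this]
  simp

lemma f_ne_zero : f ≠ 0 := by
  intro hc
  have := coeff_f_y2 h₂deg h₄deg h₆deg h₂st h₄st h₆st hf
  rw [hc, coeff_zero] at this
  exact one_ne_zero this.symm

end FSplitCoeffs

noncomputable section FSplitConstruct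
set_option linter.unusedSectionVars false
variable {k : Type*} [Field k] [CharP k 3] [PerfectRing k 3]

lemma EE_le : ∀ i : Fin 4, EE i ≤ 2 := fun _ => le_refl 2

lemma isFSplit_of_section (f v : MvPolynomial (Fin 4) k)
    (hT : T EE (v * f ^ 2) = 1) :
    IsFSplit (MvPolynomial (Fin 4) k ⧸ Ideal.span {f}) 3 := by
  set I := Ideal.span {f} with hI
  set π := Ideal.Quotient.mk I with hπ
  have hsur : Function.Surjective π := Ideal.Quotient.mk_surjective
  set ℓ : (MvPolynomial (Fin 4) k ⧸ I) → MvPolynomial (Fin 4) k :=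
    fun x => (hsur x).choose with hℓdef
  have hℓ : ∀ x, π (ℓ x) = x := fun x => (hsur x).choose_spec
  have hπf : π f = 0 := by
    rw [Ideal.Quotient.eq_zero_iff_mem]
    exact Ideal.mem_span_singleton_self f
  have W : ∀ g h : MvPolynomial (Fin 4) k, π g = π h →
      π (T EE (v * f ^ 2 * g)) = π (T EE (v * f ^ 2 * h)) := by
    intro g h hgh
    have hmem : g - h ∈ I := by rwa [hπ, Ideal.Quotient.eq] at hgh
    obtain ⟨c, hc⟩ := Ideal.mem_span_singleton'.mp hmem
    have hsplit : v * f ^ 2 * g = v * f ^ 2 * h + f ^ 3 * (v * c) := by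
      linear_combination (-(v * f ^ 2)) * hc
    have hTsplit : T EE (v * f ^ 2 * h + f ^ 3 * (v * c))
        = T EE (v * f ^ 2 * h) + f * T EE (v * c) := by
      rw [map_add, T_cube EE EE_le]
    rw [hsplit, hTsplit, π.map_add, π.map_mul, hπf, zero_mul, add_zero]
  refine ⟨{ toFun := fun x => π (T EE (v * f ^ 2 * ℓ x)),
            map_zero' := ?_, map_add' := ?_ }, ?_, ?_⟩
  · show π (T EE (v * f ^ 2 * ℓ 0)) = 0
    rw [W (ℓ 0) 0 (by rw [hℓ, π.map_zero]), mul_zero, (T EE).map_zero, π.map_zero]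
  · intro x y
    show π (T EE (v * f ^ 2 * ℓ (x + y)))
        = π (T EE (v * f ^ 2 * ℓ x)) + π (T EE (v * f ^ 2 * ℓ y))
    rw [W (ℓ (x + y)) (ℓ x + ℓ y) (by rw [hℓ, π.map_add, hℓ, hℓ]), mul_add,
      (T EE).map_add, π.map_add]
  · show π (T EE (v * f ^ 2 * ℓ 1)) = 1
    rw [W (ℓ 1) 1 (by rw [hℓ, π.map_one]), mul_one, hT, π.map_one]
  · intro a b
    show π (T EE (v * f ^ 2 * ℓ (a ^ 3 * b))) = a * π (T EE (v * f ^ 2 * ℓ b))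
    rw [W (ℓ (a ^ 3 * b)) ((ℓ a) ^ 3 * ℓ b) (by rw [hℓ, π.map_mul, π.map_pow, hℓ, hℓ]),
      show v * f ^ 2 * ((ℓ a) ^ 3 * ℓ b) = (ℓ a) ^ 3 * (v * f ^ 2 * ℓ b) by ring,
      T_cube EE EE_le, π.map_mul, hℓ]

end FSplitConstruct

noncomputable section FSplitEasy
set_option linter.unusedSectionVars false
variable {k : Type*} [Field k] [CharP k 3] [PerfectRing k 3]
variable {a₂ a₄ a₆ f : MvPolynomial (Fin 4) k}
  (h₂deg : a₂.IsHomogeneous 2) (h₄deg : a₄.IsHomogeneous 4) (h₆deg : a₆.IsHomogeneous 6)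
  (h₂st : STOnly a₂) (h₄st : STOnly a₄) (h₆st : STOnly a₆)
  (hf : f = X 3 ^ 2 - (X 2 ^ 3 + a₂ * X 2 ^ 2 + a₄ * X 2 + a₆))

include h₂deg h₄deg h₆deg h₂st h₄st h₆st hf

lemma T_vf2_eq_one (w : Fin 4 →₀ ℕ) (c : k) (hwdeg : wdeg w = 2) (hle : w ≤ EE)
    (hcoeff : c * coeff (EE - w) (f ^ 2) = 1) :
    T EE (monomial w c * f ^ 2) = 1 := by
  apply MvPolynomial.ext
  intro n
  rw [coeff_T]
  by_cases hn : n = 0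
  · subst hn
    have h30 : (3 • (0 : Fin 4 →₀ ℕ) + EE) = EE := by simp
    rw [h30, mul_comm (monomial w c) (f ^ 2), coeff_mul_monomial', if_pos hle,
      mul_comm (coeff (EE - w) (f ^ 2)) c, hcoeff]
    simp [rInv]
  · have hz : coeff (3 • n + EE) (monomial w c * f ^ 2) = 0 := by
      exact coeff_shift_vf_sq h₂deg h₄deg h₆deg h₂st h₄st h₆st hf
        (monomial w c) (wdeg w) (WH_monomial w c) hwdeg n hn
    rw [hz, map_zero, coeff_one, if_neg (fun hc => hn hc.symm)]

lemma exists_v_caseA (hA : a₂ ≠ 0) :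
    ∃ v : MvPolynomial (Fin 4) k, T EE (v * f ^ 2) = 1 := by
  obtain ⟨m₀, hm₀⟩ := MvPolynomial.ne_zero_iff.mp hA
  obtain ⟨hm2, hm3⟩ := h₂st m₀ hm₀
  have hsum : m₀ 0 + m₀ 1 = 2 := by
    have := homog_coeff_ne_zero h₂deg hm₀
    omega
  set w : Fin 4 →₀ ℕ := Finsupp.single 0 (2 - m₀ 0) + Finsupp.single 1 (2 - m₀ 1) with hw
  have hw0 : w 0 = 2 - m₀ 0 := by simp [hw, Finsupp.single_apply]
  have hw1 : w 1 = 2 - m₀ 1 := by simp [hw, Finsupp.single_apply]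
  have hw2 : w 2 = 0 := by simp [hw, Finsupp.single_apply]
  have hw3 : w 3 = 0 := by simp [hw, Finsupp.single_apply]
  have hle : w ≤ EE := by
    rw [Finsupp.le_def]
    apply fin4_all <;> simp only [hw0, hw1, hw2, hw3, EE_apply] <;> omega
  have hEw : EE - w = m₀ + Finsupp.single 2 2 + Finsupp.single 3 2 := by
    apply DFunLike.ext
    apply fin4_all <;>
      simp only [Finsupp.tsub_apply, Finsupp.add_apply, Finsupp.single_apply, hw0, hw1, hw2,
        hw3, EE_apply] <;>
      simp [Finsupp.single_apply, hm2, hm3] <;> omega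
  refine ⟨monomial w (coeff m₀ a₂)⁻¹, T_vf2_eq_one h₂deg h₄deg h₆deg h₂st h₄st h₆st hf
    w _ (by simp only [wdeg, hw0, hw1, hw2, hw3]; omega) hle ?_⟩
  rw [hEw, coeff_f2_caseA h₂deg h₄deg h₆deg h₂st h₄st h₆st hf m₀ hm2 hm3 hsum]
  exact inv_mul_cancel₀ hm₀

lemma exists_v_caseB (hB : coeff (Finsupp.single 0 2 + Finsupp.single 1 2) a₄ ≠ 0) :
    ∃ v : MvPolynomial (Fin 4) k, T EE (v * f ^ 2) = 1 := by
  set w : Fin 4 →₀ ℕ := Finsupp.single 2 1 with hw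
  have hle : w ≤ EE := by
    rw [Finsupp.le_def]
    apply fin4_all <;> simp [hw, Finsupp.single_apply]
  have hEw : EE - w = Finsupp.single 0 2 + Finsupp.single 1 2 + Finsupp.single 2 1
      + Finsupp.single 3 2 := by
    apply DFunLike.ext
    apply fin4_all <;> simp [Finsupp.tsub_apply, hw, Finsupp.single_apply]
  refine ⟨monomial w (coeff (Finsupp.single 0 2 + Finsupp.single 1 2) a₄)⁻¹,
    T_vf2_eq_one h₂deg h₄deg h₆deg h₂st h₄st h₆st hf w _
      (by simp [wdeg, hw, Finsupp.single_apply]) hle ?_⟩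
  rw [hEw, coeff_f2_caseB h₂deg h₄deg h₆deg h₂st h₄st h₆st hf]
  exact inv_mul_cancel₀ hB

end FSplitEasy

noncomputable section FSplitA4
set_option linter.unusedSectionVars false
variable {k : Type*} [Field k] [CharP k 3] [PerfectRing k 3]

lemma monomial_form_e1 (a : k) : (C a * X 0 ^ 4 : MvPolynomial (Fin 4) k)
    = monomial (Finsupp.single 0 4) a := by
  rw [X_pow_eq_monomial, C_mul_monomial, mul_one]

lemma monomial_form_e2 (b : k) : (C b * X 0 ^ 3 * X 1 : MvPolynomial (Fin 4) k)
    = monomial (Finsupp.single 0 3 + Finsupp.single 1 1) b := by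
  rw [X_pow_eq_monomial, C_mul_monomial, mul_one,
    show (X 1 : MvPolynomial (Fin 4) k) = X 1 ^ 1 by ring, X_pow_eq_monomial,
    monomial_mul, mul_one]

lemma monomial_form_e3 (c : k) : (C c * X 0 * X 1 ^ 3 : MvPolynomial (Fin 4) k)
    = monomial (Finsupp.single 0 1 + Finsupp.single 1 3) c := by
  rw [show (X 0 : MvPolynomial (Fin 4) k) = X 0 ^ 1 by ring, X_pow_eq_monomial,
    C_mul_monomial, mul_one, X_pow_eq_monomial, monomial_mul, mul_one]

lemma monomial_form_e4 (d : k) : (C d * X 1 ^ 4 : MvPolynomial (Fin 4) k)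
    = monomial (Finsupp.single 1 4) d := by
  rw [X_pow_eq_monomial, C_mul_monomial, mul_one]

lemma a4_expand {a₄ : MvPolynomial (Fin 4) k} (h₄deg : a₄.IsHomogeneous 4)
    (h₄st : STOnly a₄)
    (he : coeff (Finsupp.single 0 2 + Finsupp.single 1 2) a₄ = 0) :
    a₄ = C (coeff (Finsupp.single 0 4) a₄) * X 0 ^ 4
      + C (coeff (Finsupp.single 0 3 + Finsupp.single 1 1) a₄) * X 0 ^ 3 * X 1
      + C (coeff (Finsupp.single 0 1 + Finsupp.single 1 3) a₄) * X 0 * X 1 ^ 3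
      + C (coeff (Finsupp.single 1 4) a₄) * X 1 ^ 4 := by
  apply MvPolynomial.ext
  intro m
  rw [coeff_add, coeff_add, coeff_add, monomial_form_e1, monomial_form_e2, monomial_form_e3,
    monomial_form_e4, coeff_monomial, coeff_monomial, coeff_monomial, coeff_monomial]
  by_cases hst : m 2 = 0 ∧ m 3 = 0
  · obtain ⟨hm2, hm3⟩ := hst
    by_cases hsum : m 0 + m 1 = 4
    · have h5 : m 0 = 0 ∨ m 0 = 1 ∨ m 0 = 2 ∨ m 0 = 3 ∨ m 0 = 4 := by omega
      rcases h5 with h0 | h0 | h0 | h0 | h0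
      · -- m 0 = 0
        have hm : m = (Finsupp.single 1 4 : Fin 4 →₀ ℕ) := by
          apply DFunLike.ext
          apply fin4_all <;> simp [Finsupp.single_apply, hm2, hm3] <;> omega
        rw [hm]
        rw [if_neg (show ¬ (Finsupp.single 0 4 : Fin 4 →₀ ℕ) = (Finsupp.single 1 4) from fun hc => by
          have := DFunLike.congr_fun hc 0; simp [Finsupp.single_apply] at this)]
        rw [if_neg (show ¬ (Finsupp.single 0 3 + Finsupp.single 1 1 : Fin 4 →₀ ℕ) = (Finsupp.single 1 4) from fun hc => by
          have := DFunLike.congr_fun hc 0; simp [Finsupp.single_apply] at this)]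
        rw [if_neg (show ¬ (Finsupp.single 0 1 + Finsupp.single 1 3 : Fin 4 →₀ ℕ) = (Finsupp.single 1 4) from fun hc => by
          have := DFunLike.congr_fun hc 0; simp [Finsupp.single_apply] at this)]
        rw [if_pos (show (Finsupp.single 1 4 : Fin 4 →₀ ℕ) = Finsupp.single 1 4 from by
          apply DFunLike.ext; apply fin4_all <;> simp [Finsupp.single_apply])]
        norm_num
      · -- m 0 = 1
        have hm : m = (Finsupp.single 0 1 + Finsupp.single 1 3 : Fin 4 →₀ ℕ) := by
          apply DFunLike.ext
          apply fin4_all <;> simp [Finsupp.single_apply, hm2, hm3] <;> omega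
        rw [hm]
        rw [if_neg (show ¬ (Finsupp.single 0 4 : Fin 4 →₀ ℕ) = (Finsupp.single 0 1 + Finsupp.single 1 3) from fun hc => by
          have := DFunLike.congr_fun hc 0; simp [Finsupp.single_apply] at this)]
        rw [if_neg (show ¬ (Finsupp.single 0 3 + Finsupp.single 1 1 : Fin 4 →₀ ℕ) = (Finsupp.single 0 1 + Finsupp.single 1 3) from fun hc => by
          have := DFunLike.congr_fun hc 0; simp [Finsupp.single_apply] at this)]
        rw [if_pos (show (Finsupp.single 0 1 + Finsupp.single 1 3 : Fin 4 →₀ ℕ) = Finsupp.single 0 1 + Finsupp.single 1 3 from by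
          apply DFunLike.ext; apply fin4_all <;> simp [Finsupp.single_apply])]
        rw [if_neg (show ¬ (Finsupp.single 1 4 : Fin 4 →₀ ℕ) = (Finsupp.single 0 1 + Finsupp.single 1 3) from fun hc => by
          have := DFunLike.congr_fun hc 0; simp [Finsupp.single_apply] at this)]
        norm_num
      · -- m 0 = 2
        have hm : m = (Finsupp.single 0 2 + Finsupp.single 1 2 : Fin 4 →₀ ℕ) := by
          apply DFunLike.ext
          apply fin4_all <;> simp [Finsupp.single_apply, hm2, hm3] <;> omega
        rw [hm]
        rw [if_neg (show ¬ (Finsupp.single 0 4 : Fin 4 →₀ ℕ) = (Finsupp.single 0 2 + Finsupp.single 1 2) from fun hc => by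
          have := DFunLike.congr_fun hc 0; simp [Finsupp.single_apply] at this)]
        rw [if_neg (show ¬ (Finsupp.single 0 3 + Finsupp.single 1 1 : Fin 4 →₀ ℕ) = (Finsupp.single 0 2 + Finsupp.single 1 2) from fun hc => by
          have := DFunLike.congr_fun hc 0; simp [Finsupp.single_apply] at this)]
        rw [if_neg (show ¬ (Finsupp.single 0 1 + Finsupp.single 1 3 : Fin 4 →₀ ℕ) = (Finsupp.single 0 2 + Finsupp.single 1 2) from fun hc => by
          have := DFunLike.congr_fun hc 0; simp [Finsupp.single_apply] at this)]
        rw [if_neg (show ¬ (Finsupp.single 1 4 : Fin 4 →₀ ℕ) = (Finsupp.single 0 2 + Finsupp.single 1 2) from fun hc => by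
          have := DFunLike.congr_fun hc 0; simp [Finsupp.single_apply] at this)]
        rw [he]
        norm_num
      · -- m 0 = 3
        have hm : m = (Finsupp.single 0 3 + Finsupp.single 1 1 : Fin 4 →₀ ℕ) := by
          apply DFunLike.ext
          apply fin4_all <;> simp [Finsupp.single_apply, hm2, hm3] <;> omega
        rw [hm]
        rw [if_neg (show ¬ (Finsupp.single 0 4 : Fin 4 →₀ ℕ) = (Finsupp.single 0 3 + Finsupp.single 1 1) from fun hc => by
          have := DFunLike.congr_fun hc 0; simp [Finsupp.single_apply] at this)]
        rw [if_pos (show (Finsupp.single 0 3 + Finsupp.single 1 1 : Fin 4 →₀ ℕ) = Finsupp.single 0 3 + Finsupp.single 1 1 from by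
          apply DFunLike.ext; apply fin4_all <;> simp [Finsupp.single_apply])]
        rw [if_neg (show ¬ (Finsupp.single 0 1 + Finsupp.single 1 3 : Fin 4 →₀ ℕ) = (Finsupp.single 0 3 + Finsupp.single 1 1) from fun hc => by
          have := DFunLike.congr_fun hc 0; simp [Finsupp.single_apply] at this)]
        rw [if_neg (show ¬ (Finsupp.single 1 4 : Fin 4 →₀ ℕ) = (Finsupp.single 0 3 + Finsupp.single 1 1) from fun hc => by
          have := DFunLike.congr_fun hc 0; simp [Finsupp.single_apply] at this)]
        norm_num
      · -- m 0 = 4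
        have hm : m = (Finsupp.single 0 4 : Fin 4 →₀ ℕ) := by
          apply DFunLike.ext
          apply fin4_all <;> simp [Finsupp.single_apply, hm2, hm3] <;> omega
        rw [hm]
        rw [if_pos (show (Finsupp.single 0 4 : Fin 4 →₀ ℕ) = Finsupp.single 0 4 from by
          apply DFunLike.ext; apply fin4_all <;> simp [Finsupp.single_apply])]
        rw [if_neg (show ¬ (Finsupp.single 0 3 + Finsupp.single 1 1 : Fin 4 →₀ ℕ) = (Finsupp.single 0 4) from fun hc => by
          have := DFunLike.congr_fun hc 0; simp [Finsupp.single_apply] at this)]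
        rw [if_neg (show ¬ (Finsupp.single 0 1 + Finsupp.single 1 3 : Fin 4 →₀ ℕ) = (Finsupp.single 0 4) from fun hc => by
          have := DFunLike.congr_fun hc 0; simp [Finsupp.single_apply] at this)]
        rw [if_neg (show ¬ (Finsupp.single 1 4 : Fin 4 →₀ ℕ) = (Finsupp.single 0 4) from fun hc => by
          have := DFunLike.congr_fun hc 0; simp [Finsupp.single_apply] at this)]
        norm_num
    · rw [if_neg, if_neg, if_neg, if_neg]
      · have : coeff m a₄ = 0 := by
          by_contra hne
          have := homog_coeff_ne_zero h₄deg hne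
          omega
        simp [this]
      all_goals
        intro hc
        have h0 := DFunLike.congr_fun hc 0
        have h1 := DFunLike.congr_fun hc 1
        simp [Finsupp.single_apply] at h0 h1
        omega
  · have hLHS : coeff m a₄ = 0 := by
      by_contra hne
      exact hst (h₄st m hne)
    rw [hLHS, if_neg, if_neg, if_neg, if_neg]
    · simp
    all_goals
      intro hc
      have h2 := DFunLike.congr_fun hc 2
      have h3 := DFunLike.congr_fun hc 3
      simp [Finsupp.single_apply] at h2 h3
      omega

end FSplitA4

noncomputable section FSplitHard
set_option linter.unusedSectionVars false
variable {k : Type*} [Field k] [CharP k 3] [PerfectRing k 3]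
variable {a₂ a₄ a₆ f : MvPolynomial (Fin 4) k}
  (h₂deg : a₂.IsHomogeneous 2) (h₄deg : a₄.IsHomogeneous 4) (h₆deg : a₆.IsHomogeneous 6)
  (h₂st : STOnly a₂) (h₄st : STOnly a₄) (h₆st : STOnly a₆)
  (hf : f = X 3 ^ 2 - (X 2 ^ 3 + a₂ * X 2 ^ 2 + a₄ * X 2 + a₆))

include h₂deg h₄deg h₆deg h₂st h₄st h₆st hf

lemma not_fsplit_of_special (ha₂ : a₂ = 0) (a b c d : k)
    (ha₄ : a₄ = C a * X 0 ^ 4 + C b * X 0 ^ 3 * X 1 + C c * X 0 * X 1 ^ 3 + C d * X 1 ^ 4) :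
    ¬ IsFSplit (MvPolynomial (Fin 4) k ⧸ Ideal.span {f}) 3 := by
  rintro ⟨φ, hφ1, hφmul⟩
  set π := Ideal.Quotient.mk (Ideal.span {f}) with hπ
  have hsur : Function.Surjective π := Ideal.Quotient.mk_surjective
  set vfun : (Fin 4 →₀ ℕ) → MvPolynomial (Fin 4) k :=
    fun ε => (hsur (φ (π (monomial ε 1)))).choose with hvdef
  have hvfun : ∀ ε, π (vfun ε) = φ (π (monomial ε 1)) :=
    fun ε => (hsur (φ (π (monomial ε 1)))).choose_spec
  set w : MvPolynomial (Fin 4) k :=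
    ∑ ε ∈ Finset.Iic EE, (vfun ε) ^ 3 * monomial (EE - ε) 1 with hwdef
  -- Claim 1
  have C1 : ∀ g : MvPolynomial (Fin 4) k, π (T EE (w * g)) = φ (π g) := by
    intro g
    induction g using MvPolynomial.induction_on' with
    | add q₁ q₂ ih₁ ih₂ =>
      rw [mul_add, map_add, π.map_add, ih₁, ih₂, π.map_add, φ.map_add]
    | monomial m c =>
      obtain ⟨n₀, ε₀, hε₀, rfl⟩ := mod3_decomp m
      have hsum : w * monomial (3 • n₀ + ε₀) c =
          ∑ ε ∈ Finset.Iic EE, (vfun ε) ^ 3 * monomial ((EE - ε) + (3 • n₀ + ε₀)) c := by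
        rw [hwdef, Finset.sum_mul]
        apply Finset.sum_congr rfl
        intro ε _
        rw [mul_assoc, monomial_mul, one_mul]
      rw [hsum, map_sum]
      have hterm : ∀ ε ∈ Finset.Iic EE, ε ≠ ε₀ →
          T EE ((vfun ε) ^ 3 * monomial ((EE - ε) + (3 • n₀ + ε₀)) c) = 0 := by
        intro ε hε hne
        rw [T_cube EE EE_le, T_monomial_ne, mul_zero]
        intro n hc
        obtain ⟨i, hi⟩ := Finsupp.ne_iff.mp hne
        have h1 := DFunLike.congr_fun hc i
        have h2 := (Finset.mem_Iic.mp hε) i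
        have h3 := hε₀ i
        simp only [Finsupp.add_apply, Finsupp.tsub_apply, Finsupp.smul_apply, smul_eq_mul,
          EE_apply] at h1 h2 h3
        omega
      rw [Finset.sum_eq_single ε₀ hterm (fun hc => absurd (Finset.mem_Iic.mpr hε₀) hc)]
      have hexp : (EE - ε₀) + (3 • n₀ + ε₀) = 3 • n₀ + EE := by
        ext i
        have h3 := hε₀ i
        simp only [Finsupp.add_apply, Finsupp.tsub_apply, Finsupp.smul_apply, smul_eq_mul,
          EE_apply] at h3 ⊢
        omega
      rw [T_cube EE EE_le, hexp, T_monomial_eq, π.map_mul, hvfun]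
      have hmono : monomial (3 • n₀ + ε₀) c
          = (monomial n₀ (rInv k c)) ^ 3 * monomial ε₀ 1 := by
        rw [monomial_pow, cube_rInv, monomial_mul, mul_one]
      rw [hmono, π.map_mul, π.map_pow, hφmul]
      ring
  -- Claim 2
  have C2 : ∀ ε ∈ Finset.Iic EE, T ε (w * f) ∈ Ideal.span {f} := by
    intro ε hε
    have h1 := C1 (f * monomial (EE - ε) 1)
    have hz : π (f * monomial (EE - ε) 1) = 0 := by
      rw [Ideal.Quotient.eq_zero_iff_mem]
      exact Ideal.mem_span_singleton'.mpr ⟨monomial (EE - ε) 1, mul_comm _ _⟩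
    rw [hz, φ.map_zero] at h1
    rw [show w * (f * monomial (EE - ε) 1) = (w * f) * monomial (EE - ε) 1 by ring,
      T_shift ε (Finset.mem_Iic.mp hε)] at h1
    rwa [← Ideal.Quotient.eq_zero_iff_mem]
  -- Claim 3 & 4
  have C3 : ∃ q : MvPolynomial (Fin 4) k, w * f = f ^ 3 * q := by
    have hterm : ∀ ε : Fin 4 →₀ ℕ, ∃ dε : MvPolynomial (Fin 4) k,
        ε ∈ Finset.Iic EE → T ε (w * f) = f * dε := by
      intro ε
      by_cases hε : ε ∈ Finset.Iic EE
      · obtain ⟨dε, hd⟩ := Ideal.mem_span_singleton'.mp (C2 ε hε)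
        exact ⟨dε, fun _ => by rw [← hd]; ring⟩
      · exact ⟨0, fun hc => absurd hc hε⟩
    choose dfun hdfun using hterm
    refine ⟨∑ ε ∈ Finset.Iic EE, (dfun ε) ^ 3 * monomial ε 1, ?_⟩
    have hdec := decomposition (w * f)
    rw [← hdec]
    rw [Finset.mul_sum]
    apply Finset.sum_congr rfl
    intro ε hε
    rw [hdfun ε hε]
    ring
  obtain ⟨q, hq⟩ := C3
  have hfne : f ≠ 0 := f_ne_zero h₂deg h₄deg h₆deg h₂st h₄st h₆st hf
  have C4 : w = f ^ 2 * q := by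
    apply mul_left_cancel₀ hfne
    linear_combination hq
  -- Claim 5
  have C5 : coeff EE (f ^ 2 * q) = 1 := by
    have h1 := C1 1
    rw [mul_one, π.map_one, hφ1] at h1
    have hmem : T EE w - 1 ∈ Ideal.span {f} := by
      rw [← Ideal.Quotient.eq_zero_iff_mem, π.map_sub, π.map_one, h1, sub_self]
    obtain ⟨h, hh⟩ := Ideal.mem_span_singleton'.mp hmem
    have hcc := congrArg (constantCoeff : MvPolynomial (Fin 4) k →+* k) hh
    rw [map_mul, map_sub, map_one] at hcc
    have hccf : constantCoeff f = 0 := by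
      rw [show (constantCoeff : MvPolynomial (Fin 4) k →+* k) f = coeff 0 f from rfl]
      exact constantCoeff_f h₂deg h₄deg h₆deg h₂st h₄st h₆st hf
    rw [hccf, mul_zero] at hcc
    have hccT : constantCoeff (T EE w) = rInv k (coeff EE w) := by
      rw [show (constantCoeff : MvPolynomial (Fin 4) k →+* k) (T EE w) = coeff 0 (T EE w)
        from rfl, coeff_T, show (3 • (0 : Fin 4 →₀ ℕ) + EE) = EE from by simp]
    rw [hccT] at hcc
    have : rInv k (coeff EE w) = 1 := sub_eq_zero.mp hcc.symm
    have := rInv_eq_one this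
    rw [← C4]
    exact this
  -- final contradiction
  have C6 : coeff EE (f ^ 2 * q) = 0 := by
    rw [coeff_mul]
    apply Finset.sum_eq_zero
    intro p hp
    have hsum := Finset.HasAntidiagonal.mem_antidiagonal.mp hp
    have hple : ∀ i : Fin 4, p.1 i ≤ 2 := by
      intro i
      have := DFunLike.congr_fun hsum i
      simp only [Finsupp.add_apply, EE_apply] at this
      omega
    rw [coeff_f2_vanish_le h₂deg h₄deg h₆deg h₂st h₄st h₆st hf ha₂ ha₄ p.1
      (hple 0) (hple 1) (hple 2) (hple 3), zero_mul]
  rw [C5] at C6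
  exact one_ne_zero C6

end FSplitHard

theorem char3_not_Fsplit_iff (k : Type*) [Field k] [IsAlgClosed k] [CharP k 3]
    (a₂ a₄ a₆ : MvPolynomial (Fin 4) k)
    (h₂deg : a₂.IsHomogeneous 2) (h₄deg : a₄.IsHomogeneous 4) (h₆deg : a₆.IsHomogeneous 6)
    (h₂st : a₂ ∈ Set.range (rename (Fin.castLE (by norm_num : 2 ≤ 4)) :
      MvPolynomial (Fin 2) k → MvPolynomial (Fin 4) k))
    (h₄st : a₄ ∈ Set.range (rename (Fin.castLE (by norm_num : 2 ≤ 4)) :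
      MvPolynomial (Fin 2) k → MvPolynomial (Fin 4) k))
    (h₆st : a₆ ∈ Set.range (rename (Fin.castLE (by norm_num : 2 ≤ 4)) :
      MvPolynomial (Fin 2) k → MvPolynomial (Fin 4) k))
    (f : MvPolynomial (Fin 4) k)
    (hf : f = X 3 ^ 2 - (X 2 ^ 3 + a₂ * X 2 ^ 2 + a₄ * X 2 + a₆)) :
    ¬ IsFSplit (MvPolynomial (Fin 4) k ⧸ Ideal.span {f}) 3 ↔
      a₂ = 0 ∧ ∃ a b c d : k,
        a₄ = C a * X 0 ^ 4 + C b * X 0 ^ 3 * X 1 + C c * X 0 * X 1 ^ 3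
            + C d * X 1 ^ 4 := by
  haveI : Fact (Nat.Prime 3) := ⟨by norm_num⟩
  have h₂st' : STOnly a₂ := stOnly_of_mem h₂st
  have h₄st' : STOnly a₄ := stOnly_of_mem h₄st
  have h₆st' : STOnly a₆ := stOnly_of_mem h₆st
  constructor
  · intro hns
    by_contra hrhs
    by_cases hA : a₂ = 0
    · have hB : coeff (Finsupp.single 0 2 + Finsupp.single 1 2) a₄ ≠ 0 := by
        intro he
        exact hrhs ⟨hA, _, _, _, _, a4_expand h₄deg h₄st' he⟩
      obtain ⟨v, hv⟩ := exists_v_caseB h₂deg h₄deg h₆deg h₂st' h₄st' h₆st' hf hB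
      exact hns (isFSplit_of_section f v hv)
    · obtain ⟨v, hv⟩ := exists_v_caseA h₂deg h₄deg h₆deg h₂st' h₄st' h₆st' hf hA
      exact hns (isFSplit_of_section f v hv)
  · rintro ⟨hA2, a, b, c, d, hA4⟩
    exact not_fsplit_of_special h₂deg h₄deg h₆deg h₂st' h₄st' h₆st' hf hA2 a b c d hA4
end

section
/- Let k be an algebraically closed field of characteristic 2, let a₁, a₂, a₃, a₄, a₆ ∈ k[s,t,x,y] be homogeneous polynomials of degrees 1, 2, 3, 4 and 6 respectively involving only the variables s and t, and set f = y² + a₁·x·y + a₃·y − (x³ + a₂·x² + a₄·x + a₆). Then the quotient ring k[s,t,x,y]/(f) is not F-split if and only if a₁ = 0. -/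
open MvPolynomial

namespace FsplitAux

notation "ι4" => Fin.castLE (by norm_num : 2 ≤ 4)

/-! ### Basic combinatorics of exponents -/

noncomputable def uu : Fin 4 →₀ ℕ := Finsupp.equivFunOnFinite.symm (fun _ => 1)

lemma uu_apply (i : Fin 4) : uu i = 1 := rfl

noncomputable def tau (d : Fin 4 →₀ ℕ) : Fin 4 →₀ ℕ := 2 • d + uu

lemma tau_apply (d : Fin 4 →₀ ℕ) (i : Fin 4) : tau d i = 2 * d i + 1 := by
  simp [tau, uu_apply, mul_comm]

lemma tau_inj : Function.Injective tau := by
  intro d e h; ext i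
  have := congrArg (fun v => v i) h
  simp only [tau_apply] at this; omega

lemma fin4_finsupp_ext {p q : Fin 4 →₀ ℕ} (h0 : p 0 = q 0) (h1 : p 1 = q 1)
    (h2 : p 2 = q 2) (h3 : p 3 = q 3) : p = q := by
  ext i
  fin_cases i
  · exact h0
  · exact h1
  · exact h2
  · exact h3

lemma iota_ne_two : (2 : Fin 4) ∉ Set.range ι4 := by
  rintro ⟨j, hj⟩; have := congrArg Fin.val hj; simp at this; omega

lemma iota_ne_three : (3 : Fin 4) ∉ Set.range ι4 := by
  rintro ⟨j, hj⟩; have := congrArg Fin.val hj; simp at this; omega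

section Field

variable {k : Type*} [Field k]

/-! ### Coefficients of polynomials in `s,t` only -/

lemma coeff_st {a : MvPolynomial (Fin 4) k}
    (ha : a ∈ Set.range (rename ι4 : MvPolynomial (Fin 2) k → MvPolynomial (Fin 4) k))
    (d : Fin 4 →₀ ℕ) (hd : d 2 ≠ 0 ∨ d 3 ≠ 0) : coeff d a = 0 := by
  obtain ⟨q, rfl⟩ := ha
  apply coeff_rename_eq_zero
  intro u hu
  exfalso
  rcases hd with hd | hd
  · exact hd (hu ▸ Finsupp.mapDomain_notin_range u 2 iota_ne_two)
  · exact hd (hu ▸ Finsupp.mapDomain_notin_range u 3 iota_ne_three)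

lemma deg4 (d : Fin 4 →₀ ℕ) : d.degree = d 0 + d 1 + d 2 + d 3 := by
  rw [Finsupp.degree, ← Fin.sum_univ_four (fun i => d i)]
  apply Finset.sum_subset (Finset.subset_univ _)
  intro x _ hx
  exact Finsupp.notMem_support_iff.mp hx

lemma coeff_deg {a : MvPolynomial (Fin 4) k} {n : ℕ} (ha : a.IsHomogeneous n)
    (d : Fin 4 →₀ ℕ) (hd : d 0 + d 1 + d 2 + d 3 ≠ n) : coeff d a = 0 :=
  ha.coeff_eq_zero (by rw [deg4]; exact hd)

lemma mem_span_sq {a : MvPolynomial (Fin 4) k} {n : ℕ}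
    (ha : a ∈ Set.range (rename ι4 : MvPolynomial (Fin 2) k → MvPolynomial (Fin 4) k))
    (hdeg : a.IsHomogeneous n) (hn : 3 ≤ n) :
    a ∈ Ideal.span {(X 0 : MvPolynomial (Fin 4) k) ^ 2, (X 1 : MvPolynomial (Fin 4) k) ^ 2} := by
  nth_rewrite 1 [as_sum a]
  apply Ideal.sum_mem
  intro v hv
  have hc : coeff v a ≠ 0 := mem_support_iff.mp hv
  have h23 : v 2 = 0 ∧ v 3 = 0 := by
    by_contra h
    exact hc (coeff_st ha v (by tauto))
  have hsum : v 0 + v 1 + v 2 + v 3 = n := by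
    by_contra h
    exact hc (coeff_deg hdeg v h)
  have hcase : 2 ≤ v 0 ∨ 2 ≤ v 1 := by omega
  rcases hcase with h0 | h0
  · have : monomial v (coeff v a) =
        monomial (v - Finsupp.single 0 2) (coeff v a) * (X 0 : MvPolynomial (Fin 4) k) ^ 2 := by
      rw [X_pow_eq_monomial, monomial_mul, mul_one]
      have hv' : v - Finsupp.single 0 2 + Finsupp.single 0 2 = v := by
        ext i
        simp only [Finsupp.add_apply, Finsupp.tsub_apply, Finsupp.single_apply]
        split_ifs with h
        · subst h; omega
        · omega
      rw [hv']
    rw [this]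
    exact Ideal.mul_mem_left _ _ (Ideal.subset_span (by simp))
  · have : monomial v (coeff v a) =
        monomial (v - Finsupp.single 1 2) (coeff v a) * (X 1 : MvPolynomial (Fin 4) k) ^ 2 := by
      rw [X_pow_eq_monomial, monomial_mul, mul_one]
      have hv' : v - Finsupp.single 1 2 + Finsupp.single 1 2 = v := by
        ext i
        simp only [Finsupp.add_apply, Finsupp.tsub_apply, Finsupp.single_apply]
        split_ifs with h
        · subst h; omega
        · omega
      rw [hv']
    rw [this]
    exact Ideal.mul_mem_left _ _ (Ideal.subset_span (by simp))

/-! ### The evaluation sending `s,t,x ↦ 0`, `y ↦ Y` -/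

noncomputable def evY (k : Type*) [Field k] : MvPolynomial (Fin 4) k →ₐ[k] Polynomial k :=
  aeval (fun i : Fin 4 => if i = 3 then (Polynomial.X : Polynomial k) else 0)

lemma evY_st {a : MvPolynomial (Fin 4) k} {n : ℕ}
    (ha : a ∈ Set.range (rename ι4 : MvPolynomial (Fin 2) k → MvPolynomial (Fin 4) k))
    (hdeg : a.IsHomogeneous n) (hn : n ≠ 0) : evY k a = 0 := by
  obtain ⟨q, rfl⟩ := ha
  have h0 : coeff 0 q = 0 := by
    have := coeff_rename_mapDomain ι4 (Fin.castLE_injective _) q 0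
    rw [Finsupp.mapDomain_zero] at this
    rw [← this]
    exact coeff_deg hdeg 0 (by simp [hn, Ne.symm hn])
  have heq : evY k (rename ι4 q) = aeval ((fun i : Fin 4 =>
      if i = 3 then (Polynomial.X : Polynomial k) else 0) ∘ ι4) q := by
    rw [evY, aeval_rename]
  rw [heq]
  have hcomp : ((fun i : Fin 4 => if i = 3 then (Polynomial.X : Polynomial k) else 0) ∘ ι4)
      = fun _ => 0 := by
    funext j
    have hne : (ι4 j : Fin 4) ≠ 3 := by
      intro h
      have := congrArg Fin.val h
      simp at this
      omega
    simp [Function.comp, hne]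
  rw [hcomp]
  have haev := MvPolynomial.aeval_zero (R := k) (S₁ := Polynomial k) q
  rw [show (fun _ : Fin 2 => (0 : Polynomial k)) = (0 : Fin 2 → Polynomial k) from rfl, haev]
  rw [show constantCoeff q = coeff 0 q from rfl, h0, map_zero]

lemma a1_coeffs {a₁ : MvPolynomial (Fin 4) k} (h₁deg : a₁.IsHomogeneous 1)
    (h₁st : a₁ ∈ Set.range (rename ι4 : MvPolynomial (Fin 2) k → MvPolynomial (Fin 4) k))
    (ha : a₁ ≠ 0) :
    coeff (Finsupp.single 0 1) a₁ ≠ 0 ∨ coeff (Finsupp.single 1 1) a₁ ≠ 0 := by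
  by_contra h
  push_neg at h
  obtain ⟨hα, hβ⟩ := h
  apply ha
  apply MvPolynomial.ext
  intro d
  rw [coeff_zero]
  by_cases hc : coeff d a₁ = 0
  · exact hc
  exfalso
  have h2 : d 2 = 0 ∧ d 3 = 0 := by
    by_contra hh
    exact hc (coeff_st h₁st d (by tauto))
  have hs : d 0 + d 1 + d 2 + d 3 = 1 := by
    by_contra hh
    exact hc (coeff_deg h₁deg d hh)
  rcases (by omega : d 0 = 1 ∧ d 1 = 0 ∨ d 0 = 0 ∧ d 1 = 1) with ⟨h0, h1⟩ | ⟨h0, h1⟩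
  · have hd : d = Finsupp.single 0 1 := by
      ext i
      fin_cases i <;> simp [Finsupp.single_apply] <;> omega
    rw [hd] at hc; exact hc hα
  · have hd : d = Finsupp.single 1 1 := by
      ext i
      fin_cases i <;> simp [Finsupp.single_apply] <;> omega
    rw [hd] at hc; exact hc hβ

/-! ### The key coefficient computation -/

theorem coeff_f_sub
    (a₁ a₂ a₃ a₄ a₆ : MvPolynomial (Fin 4) k)
    (h₁deg : a₁.IsHomogeneous 1)
    (h₃st : a₃ ∈ Set.range (rename ι4 : MvPolynomial (Fin 2) k → MvPolynomial (Fin 4) k))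
    (h₁st : a₁ ∈ Set.range (rename ι4 : MvPolynomial (Fin 2) k → MvPolynomial (Fin 4) k))
    (h₂st : a₂ ∈ Set.range (rename ι4 : MvPolynomial (Fin 2) k → MvPolynomial (Fin 4) k))
    (h₄st : a₄ ∈ Set.range (rename ι4 : MvPolynomial (Fin 2) k → MvPolynomial (Fin 4) k))
    (h₆st : a₆ ∈ Set.range (rename ι4 : MvPolynomial (Fin 2) k → MvPolynomial (Fin 4) k))
    (f : MvPolynomial (Fin 4) k)
    (hf : f = X 3 ^ 2 + a₁ * X 2 * X 3 + a₃ * X 3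
            - (X 2 ^ 3 + a₂ * X 2 ^ 2 + a₄ * X 2 + a₆))
    (w : Fin 4 →₀ ℕ) (j j' : Fin 4)
    (hj : j = 0 ∧ j' = 1 ∨ j = 1 ∧ j' = 0) :
    coeff (tau w - Finsupp.single j 1) f
      = if w = 0 then coeff (Finsupp.single j' 1) a₁ else 0 := by
  classical
  set d : Fin 4 →₀ ℕ := tau w - Finsupp.single j 1 with hdd
  have hd : ∀ i, d i = 2 * w i + (if i = j then 0 else 1) := by
    intro i
    rw [hdd, Finsupp.tsub_apply, tau_apply, Finsupp.single_apply]
    by_cases hij : i = j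
    · subst hij; rw [if_pos rfl, if_pos rfl]; omega
    · rw [if_neg (fun h => hij h.symm), if_neg hij]; omega
  have hj2 : (2 : Fin 4) ≠ j := by rcases hj with ⟨h, _⟩ | ⟨h, _⟩ <;> subst h <;> decide
  have hj3 : (3 : Fin 4) ≠ j := by rcases hj with ⟨h, _⟩ | ⟨h, _⟩ <;> subst h <;> decide
  have hd2 : d 2 = 2 * w 2 + 1 := by rw [hd 2, if_neg hj2]
  have hd3 : d 3 = 2 * w 3 + 1 := by rw [hd 3, if_neg hj3]
  -- individual terms
  have t_yy : coeff d ((X 3 : MvPolynomial (Fin 4) k) ^ 2) = 0 := by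
    rw [X_pow_eq_monomial, coeff_monomial, if_neg]
    intro h
    have := congrArg (fun v => v 2) h
    simp only [Finsupp.single_apply] at this
    rw [hd2] at this
    simp at this
  have t_xxx : coeff d ((X 2 : MvPolynomial (Fin 4) k) ^ 3) = 0 := by
    rw [X_pow_eq_monomial, coeff_monomial, if_neg]
    intro h
    have := congrArg (fun v => v 3) h
    simp only [Finsupp.single_apply] at this
    rw [hd3] at this
    simp at this
  have m3 : (3 : Fin 4) ∈ d.support := by
    rw [Finsupp.mem_support_iff, hd3]; omega
  have m2 : (2 : Fin 4) ∈ d.support := by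
    rw [Finsupp.mem_support_iff, hd2]; omega
  have sub32 : ∀ i : Fin 4, (d - Finsupp.single 3 1 : Fin 4 →₀ ℕ) i
      = if i = 3 then 2 * w 3 else d i := by
    intro i
    rw [Finsupp.tsub_apply, Finsupp.single_apply]
    by_cases h : i = 3
    · subst h; rw [if_pos rfl, if_pos rfl, hd3]; omega
    · rw [if_neg (fun hh => h hh.symm), if_neg h]; omega
  have t_a1 : coeff d (a₁ * X 2 * X 3) = if w = 0 then coeff (Finsupp.single j' 1) a₁ else 0 := by
    rw [coeff_mul_X' d 3 (a₁ * X 2), if_pos m3]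
    have m2' : (2 : Fin 4) ∈ (d - Finsupp.single 3 1).support := by
      rw [Finsupp.mem_support_iff, sub32 2]
      simp [hd2]
    rw [coeff_mul_X' _ 2 a₁, if_pos m2']
    set d' : Fin 4 →₀ ℕ := d - Finsupp.single 3 1 - Finsupp.single 2 1 with hd'd
    have hd'0 : d' 0 = d 0 := by
      rw [hd'd, Finsupp.tsub_apply, sub32 0, if_neg (by decide),
        Finsupp.single_apply, if_neg (by decide)]
      omega
    have hd'1 : d' 1 = d 1 := by
      rw [hd'd, Finsupp.tsub_apply, sub32 1, if_neg (by decide),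
        Finsupp.single_apply, if_neg (by decide)]
      omega
    have hd'2 : d' 2 = 2 * w 2 := by
      rw [hd'd, Finsupp.tsub_apply, sub32 2, if_neg (by decide),
        Finsupp.single_apply, if_pos rfl, hd2]
      omega
    have hd'3 : d' 3 = 2 * w 3 := by
      rw [hd'd, Finsupp.tsub_apply, sub32 3, if_pos rfl,
        Finsupp.single_apply, if_neg (by decide)]
      omega
    by_cases hw : w = 0
    · subst hw
      have hsingle : d' = Finsupp.single j' 1 := by
        rcases hj with ⟨hjj, hjj'⟩ | ⟨hjj, hjj'⟩ <;> subst hjj <;> subst hjj' <;>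
          apply fin4_finsupp_ext <;>
          simp [hd'0, hd'1, hd'2, hd'3, hd, Finsupp.single_apply]
      rw [hsingle, if_pos rfl]
    · rw [if_neg hw]
      by_cases h23 : w 2 ≠ 0 ∨ w 3 ≠ 0
      · apply coeff_st h₁st
        rcases h23 with h | h
        · left; rw [hd'2]; omega
        · right; rw [hd'3]; omega
      · push_neg at h23
        obtain ⟨hw2, hw3⟩ := h23
        apply coeff_deg h₁deg
        have h01 : w 0 ≠ 0 ∨ w 1 ≠ 0 := by
          by_contra hh
          push_neg at hh
          apply hw
          apply fin4_finsupp_ext <;> simp [hh.1, hh.2, hw2, hw3]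
        rw [hd'0, hd'1, hd'2, hd'3, hd 0, hd 1]
        rcases hj with ⟨hjj, _⟩ | ⟨hjj, _⟩ <;> subst hjj <;>
          simp only [if_pos rfl, if_neg (by decide : ¬(0 : Fin 4) = 1),
            if_neg (by decide : ¬(1 : Fin 4) = 0)] <;> omega
  have t_a3 : coeff d (a₃ * X 3) = 0 := by
    rw [coeff_mul_X' d 3 a₃, if_pos m3]
    apply coeff_st h₃st
    left
    rw [sub32 2, if_neg (by decide)]
    rw [hd2]; omega
  have t_a2 : coeff d (a₂ * X 2 ^ 2) = 0 := by
    rw [X_pow_eq_monomial, coeff_mul_monomial']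
    split_ifs with h
    · rw [coeff_st h₂st _ ?_, zero_mul]
      right
      rw [Finsupp.tsub_apply, Finsupp.single_apply, if_neg (by decide), hd3]
      omega
    · rfl
  have t_a4 : coeff d (a₄ * X 2) = 0 := by
    rw [coeff_mul_X' d 2 a₄, if_pos m2]
    apply coeff_st h₄st
    right
    rw [Finsupp.tsub_apply, Finsupp.single_apply, if_neg (by decide), hd3]
    omega
  have t_a6 : coeff d a₆ = 0 := coeff_st h₆st d (by left; rw [hd2]; omega)
  rw [hf, coeff_sub, coeff_add, coeff_add, coeff_add, coeff_add, coeff_add,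
    t_yy, t_xxx, t_a1, t_a3, t_a2, t_a4, t_a6]
  ring

end Field

/-! ### The square-root projection `Phi` -/

section AlgClosed

variable (k : Type*) [Field k] [IsAlgClosed k] [CharP k 2]

noncomputable instance : Fact (Nat.Prime 2) := ⟨by norm_num⟩

noncomputable def rt : k ≃+* k := (frobeniusEquiv k 2).symm

lemma rt_sq (c : k) : rt k (c ^ 2) = c := by
  have := frobeniusEquiv_symm_apply_frobenius k 2 (x := c)
  simpa [rt, frobenius_def] using this

noncomputable def Phi (h : MvPolynomial (Fin 4) k) : MvPolynomial (Fin 4) k :=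
  AddMonoidAlgebra.ofCoeff (Finsupp.comapDomain tau
    (Finsupp.mapRange (rt k) (map_zero _) (AddMonoidAlgebra.coeff h)) tau_inj.injOn)

lemma coeff_Phi (w : Fin 4 →₀ ℕ) (h : MvPolynomial (Fin 4) k) :
    coeff w (Phi k h) = rt k (coeff (tau w) h) := rfl

lemma Phi_add (a b : MvPolynomial (Fin 4) k) : Phi k (a + b) = Phi k a + Phi k b := by
  apply MvPolynomial.ext; intro w; simp [coeff_Phi, coeff_add, map_add]

lemma Phi_sub (a b : MvPolynomial (Fin 4) k) : Phi k (a - b) = Phi k a - Phi k b := by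
  apply MvPolynomial.ext; intro w; simp [coeff_Phi, coeff_sub, map_sub]

lemma Phi_monomial (d : Fin 4 →₀ ℕ) (r : k) :
    Phi k (monomial (tau d) r) = monomial d (rt k r) := by
  apply MvPolynomial.ext; intro w
  rw [coeff_Phi, coeff_monomial, coeff_monomial]
  by_cases h : d = w
  · simp [h]
  · rw [if_neg (fun he => h (tau_inj he)), if_neg h, map_zero]

lemma Phi_monomial_even (e : Fin 4 →₀ ℕ) (i : Fin 4) (hi : e i % 2 = 0) (r : k) :
    Phi k (monomial e r) = 0 := by
  apply MvPolynomial.ext; intro w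
  rw [coeff_Phi, coeff_monomial, if_neg, map_zero, coeff_zero]
  intro he
  have := congrArg (fun v => v i) he
  simp only [tau_apply] at this
  omega

lemma Phi_sq_mul (a h : MvPolynomial (Fin 4) k) : Phi k (a ^ 2 * h) = a * Phi k h := by
  induction a using MvPolynomial.induction_on' generalizing h with
  | add p q hp hq =>
    have : (p + q) ^ 2 = p ^ 2 + q ^ 2 := add_pow_char _ _ _
    rw [this, add_mul, Phi_add, hp, hq, add_mul]
  | monomial d c =>
    induction h using MvPolynomial.induction_on' with
    | add p q hp hq => rw [mul_add, Phi_add, hp, hq, Phi_add, mul_add]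
    | monomial e r =>
      rw [monomial_pow, monomial_mul]
      by_cases hodd : ∀ i, e i % 2 = 1
      · set e' : Fin 4 →₀ ℕ := Finsupp.mapRange (· / 2) (by simp) e with he'def
        have he'app : ∀ i, e' i = e i / 2 := fun i => rfl
        have he' : tau e' = e := by
          ext i; rw [tau_apply, he'app]; have := hodd i; omega
        have hkey : 2 • d + e = tau (d + e') := by
          ext i
          rw [tau_apply]
          simp only [Finsupp.add_apply, Finsupp.smul_apply, smul_eq_mul, he'app]
          have := hodd i; omega
        rw [hkey, Phi_monomial, ← he', Phi_monomial, monomial_mul]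
        congr 1
        rw [map_mul, rt_sq]
      · push_neg at hodd
        obtain ⟨i, hi⟩ := hodd
        have hi' : e i % 2 = 0 := by omega
        rw [Phi_monomial_even k e i hi' r, mul_zero,
          Phi_monomial_even k _ i (by simp [Finsupp.add_apply, Finsupp.smul_apply]; omega) _]

end AlgClosed

end FsplitAux

open FsplitAux

namespace FsplitAux

section Main

variable {k : Type*} [Field k] [IsAlgClosed k] [CharP k 2]

set_option maxHeartbeats 1000000 in
set_option synthInstance.maxHeartbeats 400000 in
theorem dir2
    (a₁ a₂ a₃ a₄ a₆ : MvPolynomial (Fin 4) k)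
    (h₃deg : a₃.IsHomogeneous 3) (h₄deg : a₄.IsHomogeneous 4) (h₆deg : a₆.IsHomogeneous 6)
    (h₃st : a₃ ∈ Set.range (rename ι4 : MvPolynomial (Fin 2) k → MvPolynomial (Fin 4) k))
    (h₄st : a₄ ∈ Set.range (rename ι4 : MvPolynomial (Fin 2) k → MvPolynomial (Fin 4) k))
    (h₆st : a₆ ∈ Set.range (rename ι4 : MvPolynomial (Fin 2) k → MvPolynomial (Fin 4) k))
    (f : MvPolynomial (Fin 4) k)
    (hf : f = X 3 ^ 2 + a₁ * X 2 * X 3 + a₃ * X 3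
            - (X 2 ^ 3 + a₂ * X 2 ^ 2 + a₄ * X 2 + a₆))
    (hA : a₁ = 0) :
    ¬ IsFSplit (MvPolynomial (Fin 4) k ⧸ Ideal.span {f}) 2 := by
  rintro ⟨φ, hφ1, hφ⟩
  let I : Ideal (MvPolynomial (Fin 4) k) := Ideal.span {f}
  let π : MvPolynomial (Fin 4) k →+* MvPolynomial (Fin 4) k ⧸ I := Ideal.Quotient.mk I
  -- X 3 ^ 2 - f lies in the span of squares
  have hJ : ∀ b ∈ ({(X 0 : MvPolynomial (Fin 4) k) ^ 2, X 1 ^ 2} : Set (MvPolynomial (Fin 4) k)),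
      b ∈ Ideal.span {(X 0 : MvPolynomial (Fin 4) k) ^ 2, X 1 ^ 2, X 2 ^ 2} := by
    intro b hb
    apply Ideal.subset_span
    simp only [Set.mem_insert_iff, Set.mem_singleton_iff] at hb ⊢
    tauto
  have hspan : Ideal.span {(X 0 : MvPolynomial (Fin 4) k) ^ 2, X 1 ^ 2}
      ≤ Ideal.span {(X 0 : MvPolynomial (Fin 4) k) ^ 2, X 1 ^ 2, X 2 ^ 2} :=
    Ideal.span_le.mpr hJ
  have hmem : X 3 ^ 2 - f ∈
      Ideal.span {(X 0 : MvPolynomial (Fin 4) k) ^ 2, X 1 ^ 2, X 2 ^ 2} := by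
    have e : X 3 ^ 2 - f = X 2 * X 2 ^ 2 + a₂ * X 2 ^ 2
        + (a₄ * X 2 + a₆) + (-(X 3)) * a₃ := by
      rw [hf, hA]; ring
    rw [e]
    refine Ideal.add_mem _ (Ideal.add_mem _ (Ideal.add_mem _ ?_ ?_) ?_) ?_
    · exact Ideal.mul_mem_left _ _ (Ideal.subset_span (by simp))
    · exact Ideal.mul_mem_left _ _ (Ideal.subset_span (by simp))
    · exact Ideal.add_mem _
        (Ideal.mul_mem_right _ _ (hspan (mem_span_sq h₄st h₄deg (by norm_num))))
        (hspan (mem_span_sq h₆st h₆deg (by norm_num)))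
    · exact Ideal.mul_mem_left _ _ (hspan (mem_span_sq h₃st h₃deg (by norm_num)))
  -- extract a representation
  rw [show ({(X 0 : MvPolynomial (Fin 4) k) ^ 2, X 1 ^ 2, X 2 ^ 2} :
      Set (MvPolynomial (Fin 4) k)) = insert ((X 0 : MvPolynomial (Fin 4) k) ^ 2)
      {(X 1 : MvPolynomial (Fin 4) k) ^ 2, X 2 ^ 2} from rfl] at hmem
  obtain ⟨A, z, hz, he2⟩ := Ideal.mem_span_insert.mp hmem
  obtain ⟨B, C, hBC⟩ := Ideal.mem_span_pair.mp hz
  have hkey : (X 3 : MvPolynomial (Fin 4) k) ^ 2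
      = f + (X 0 ^ 2 * A + (X 1 ^ 2 * B + X 2 ^ 2 * C)) := by
    rw [← hBC] at he2
    linear_combination he2
  -- push to the quotient and apply the splitting
  have hπf : π f = 0 := Ideal.Quotient.eq_zero_iff_mem.mpr (Ideal.subset_span rfl)
  have hq : π (X 3) ^ 2 * 1 = π (X 0) ^ 2 * π A + (π (X 1) ^ 2 * π B + π (X 2) ^ 2 * π C) := by
    rw [mul_one, ← map_pow, hkey]
    simp only [map_add, map_mul, map_pow, hπf]
    ring
  have h3 : π (X 3) = π (X 0) * φ (π A) + (π (X 1) * φ (π B) + π (X 2) * φ (π C)) := by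
    have t1 := hφ (π (X 3)) 1
    rw [hq, map_add, map_add, hφ, hφ, hφ, hφ1, mul_one] at t1
    exact t1.symm
  obtain ⟨A', hA'⟩ := Ideal.Quotient.mk_surjective (I := I) (φ (π A))
  obtain ⟨B', hB'⟩ := Ideal.Quotient.mk_surjective (I := I) (φ (π B))
  obtain ⟨C', hC'⟩ := Ideal.Quotient.mk_surjective (I := I) (φ (π C))
  have h4 : π (X 3 - (X 0 * A' + (X 1 * B' + X 2 * C'))) = 0 := by
    simp only [map_sub, map_add, map_mul, hA', hB', hC']
    rw [sub_eq_zero]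
    rw [show π A' = φ (π A) from hA', show π B' = φ (π B) from hB',
      show π C' = φ (π C) from hC']
    exact h3
  have h5 : X 3 - (X 0 * A' + (X 1 * B' + X 2 * C')) ∈ I :=
    Ideal.Quotient.eq_zero_iff_mem.mp h4
  obtain ⟨G, hG⟩ := Ideal.mem_span_singleton.mp h5
  -- evaluate
  have hev : ∀ (i : Fin 4), i ≠ 3 → evY k (X i) = 0 := by
    intro i hi
    rw [evY, aeval_X, if_neg hi]
  have hev3 : evY k (X 3) = Polynomial.X := by
    rw [evY, aeval_X]; exact if_pos rfl
  have hevf : evY k f = Polynomial.X ^ 2 := by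
    rw [hf, hA]
    simp only [map_sub, map_add, map_mul, map_pow, map_zero, zero_mul,
      hev 2 (by decide), hev3, evY_st h₃st h₃deg (by norm_num),
      evY_st h₄st h₄deg (by norm_num), evY_st h₆st h₆deg (by norm_num)]
    ring
  have hG' := congrArg (evY k) hG
  simp only [map_sub, map_add, map_mul, hev 0 (by decide), hev 1 (by decide),
    hev 2 (by decide), hev3, hevf, zero_mul, add_zero, sub_zero] at hG'
  -- hG' : X = X^2 * evY G
  rw [pow_two, mul_assoc] at hG'
  have hco := congrArg (fun p => Polynomial.coeff p 1) hG'
  simp only [Polynomial.coeff_X_one] at hco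
  rw [show (1 : ℕ) = 0 + 1 from rfl, Polynomial.coeff_X_mul] at hco
  rw [Polynomial.mul_coeff_zero, Polynomial.coeff_X_zero, zero_mul] at hco
  exact one_ne_zero hco

end Main

end FsplitAux

namespace FsplitAux

section Main2

variable {k : Type*} [Field k] [IsAlgClosed k] [CharP k 2]

set_option maxHeartbeats 1000000 in
set_option synthInstance.maxHeartbeats 400000 in
theorem dir1
    (a₁ a₂ a₃ a₄ a₆ : MvPolynomial (Fin 4) k)
    (h₁deg : a₁.IsHomogeneous 1)
    (h₁st : a₁ ∈ Set.range (rename ι4 : MvPolynomial (Fin 2) k → MvPolynomial (Fin 4) k))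
    (h₂st : a₂ ∈ Set.range (rename ι4 : MvPolynomial (Fin 2) k → MvPolynomial (Fin 4) k))
    (h₃st : a₃ ∈ Set.range (rename ι4 : MvPolynomial (Fin 2) k → MvPolynomial (Fin 4) k))
    (h₄st : a₄ ∈ Set.range (rename ι4 : MvPolynomial (Fin 2) k → MvPolynomial (Fin 4) k))
    (h₆st : a₆ ∈ Set.range (rename ι4 : MvPolynomial (Fin 2) k → MvPolynomial (Fin 4) k))
    (f : MvPolynomial (Fin 4) k)
    (hf : f = X 3 ^ 2 + a₁ * X 2 * X 3 + a₃ * X 3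
            - (X 2 ^ 3 + a₂ * X 2 ^ 2 + a₄ * X 2 + a₆))
    (ha : a₁ ≠ 0) :
    IsFSplit (MvPolynomial (Fin 4) k ⧸ Ideal.span {f}) 2 := by
  classical
  obtain ⟨lam, mu, hlm⟩ : ∃ lam mu : k,
      lam * coeff (Finsupp.single 1 1) a₁ + mu * coeff (Finsupp.single 0 1) a₁ = 1 := by
    rcases a1_coeffs h₁deg h₁st ha with hα | hβ
    · exact ⟨0, (coeff (Finsupp.single 0 1) a₁)⁻¹,
        by rw [zero_mul, zero_add, inv_mul_cancel₀ hα]⟩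
    · exact ⟨(coeff (Finsupp.single 1 1) a₁)⁻¹, 0,
        by rw [zero_mul, add_zero, inv_mul_cancel₀ hβ]⟩
  set g : MvPolynomial (Fin 4) k := f * (C lam * X 0 + C mu * X 1) with hg
  -- the key coefficient computation
  have key : ∀ w : Fin 4 →₀ ℕ, coeff (tau w) g = if w = 0 then 1 else 0 := by
    intro w
    have h0 : (0 : Fin 4) ∈ (tau w).support := by
      rw [Finsupp.mem_support_iff, tau_apply]; omega
    have h1 : (1 : Fin 4) ∈ (tau w).support := by
      rw [Finsupp.mem_support_iff, tau_apply]; omega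
    have e0 : f * (C lam * X 0) = C lam * (f * X 0) := by ring
    have e1 : f * (C mu * X 1) = C mu * (f * X 1) := by ring
    rw [hg, mul_add, coeff_add, e0, e1, coeff_C_mul, coeff_C_mul,
      coeff_mul_X' _ 0 f, coeff_mul_X' _ 1 f, if_pos h0, if_pos h1,
      coeff_f_sub a₁ a₂ a₃ a₄ a₆ h₁deg h₃st h₁st h₂st h₄st h₆st f hf w 0 1 (Or.inl ⟨rfl, rfl⟩),
      coeff_f_sub a₁ a₂ a₃ a₄ a₆ h₁deg h₃st h₁st h₂st h₄st h₆st f hf w 1 0 (Or.inr ⟨rfl, rfl⟩)]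
    split_ifs with h
    · exact hlm
    · ring
  have hg1 : Phi k g = 1 := by
    apply MvPolynomial.ext
    intro w
    rw [coeff_Phi, key w, coeff_one]
    by_cases hw : w = 0
    · rw [if_pos hw, if_pos hw.symm, map_one]
    · rw [if_neg hw, if_neg (fun h => hw h.symm), map_zero]
  have hgf : ∃ u, g = f * u := ⟨_, hg⟩
  -- build the splitting
  let I : Ideal (MvPolynomial (Fin 4) k) := Ideal.span {f}
  let π : MvPolynomial (Fin 4) k →+* MvPolynomial (Fin 4) k ⧸ I := Ideal.Quotient.mk I
  let ψ : MvPolynomial (Fin 4) k → MvPolynomial (Fin 4) k := fun h => Phi k (g * h)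
  obtain ⟨u, hu⟩ := hgf
  have hψI : ∀ x ∈ I, ψ x ∈ I := by
    intro x hx
    obtain ⟨v, rfl⟩ := Ideal.mem_span_singleton.mp hx
    show Phi k (g * (f * v)) ∈ I
    have e : g * (f * v) = f ^ 2 * (u * v) := by rw [hu]; ring
    rw [e, Phi_sq_mul]
    exact Ideal.mem_span_singleton.mpr (Dvd.intro _ rfl)
  have W : ∀ x y, π x = π y → π (ψ x) = π (ψ y) := by
    intro x y hxy
    rw [Ideal.Quotient.mk_eq_mk_iff_sub_mem] at hxy ⊢
    have e : ψ x - ψ y = ψ (x - y) := by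
      show Phi k (g * x) - Phi k (g * y) = Phi k (g * (x - y))
      rw [mul_sub, Phi_sub]
    rw [e]
    exact hψI _ hxy
  let σ : MvPolynomial (Fin 4) k ⧸ I → MvPolynomial (Fin 4) k :=
    Function.surjInv (Ideal.Quotient.mk_surjective (I := I))
  have hσ : ∀ r, π (σ r) = r := fun r =>
    Function.surjInv_eq (Ideal.Quotient.mk_surjective (I := I)) r
  refine ⟨AddMonoidHom.mk' (fun r => π (ψ (σ r))) ?_, ?_, ?_⟩
  · intro r s
    show π (ψ (σ (r + s))) = π (ψ (σ r)) + π (ψ (σ s))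
    have h1 : π (σ (r + s)) = π (σ r + σ s) := by rw [map_add, hσ, hσ, hσ]
    rw [W _ _ h1]
    have e : ψ (σ r + σ s) = ψ (σ r) + ψ (σ s) := by
      show Phi k (g * (σ r + σ s)) = Phi k (g * σ r) + Phi k (g * σ s)
      rw [mul_add, Phi_add]
    rw [e, map_add]
  · show π (ψ (σ 1)) = 1
    have h1 : π (σ 1) = π 1 := by rw [hσ, map_one]
    rw [W _ _ h1]
    show π (Phi k (g * 1)) = 1
    rw [mul_one, hg1, map_one]
  · intro a b
    show π (ψ (σ (a ^ 2 * b))) = a * π (ψ (σ b))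
    have h1 : π (σ (a ^ 2 * b)) = π (σ a ^ 2 * σ b) := by
      rw [map_mul, map_pow, hσ, hσ, hσ]
    rw [W _ _ h1]
    show π (Phi k (g * (σ a ^ 2 * σ b))) = a * π (Phi k (g * σ b))
    have h2 : g * (σ a ^ 2 * σ b) = σ a ^ 2 * (g * σ b) := by ring
    rw [h2, Phi_sq_mul, map_mul, hσ]

end Main2

end FsplitAux

theorem char2_not_Fsplit_iff (k : Type*) [Field k] [IsAlgClosed k] [CharP k 2]
    (a₁ a₂ a₃ a₄ a₆ : MvPolynomial (Fin 4) k)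
    (h₁deg : a₁.IsHomogeneous 1) (h₂deg : a₂.IsHomogeneous 2) (h₃deg : a₃.IsHomogeneous 3)
    (h₄deg : a₄.IsHomogeneous 4) (h₆deg : a₆.IsHomogeneous 6)
    (h₁st : a₁ ∈ Set.range (rename (Fin.castLE (by norm_num : 2 ≤ 4)) :
      MvPolynomial (Fin 2) k → MvPolynomial (Fin 4) k))
    (h₂st : a₂ ∈ Set.range (rename (Fin.castLE (by norm_num : 2 ≤ 4)) :
      MvPolynomial (Fin 2) k → MvPolynomial (Fin 4) k))
    (h₃st : a₃ ∈ Set.range (rename (Fin.castLE (by norm_num : 2 ≤ 4)) :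
      MvPolynomial (Fin 2) k → MvPolynomial (Fin 4) k))
    (h₄st : a₄ ∈ Set.range (rename (Fin.castLE (by norm_num : 2 ≤ 4)) :
      MvPolynomial (Fin 2) k → MvPolynomial (Fin 4) k))
    (h₆st : a₆ ∈ Set.range (rename (Fin.castLE (by norm_num : 2 ≤ 4)) :
      MvPolynomial (Fin 2) k → MvPolynomial (Fin 4) k))
    (f : MvPolynomial (Fin 4) k)
    (hf : f = X 3 ^ 2 + a₁ * X 2 * X 3 + a₃ * X 3
            - (X 2 ^ 3 + a₂ * X 2 ^ 2 + a₄ * X 2 + a₆)) :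
    ¬ IsFSplit (MvPolynomial (Fin 4) k ⧸ Ideal.span {f}) 2 ↔ a₁ = 0 := by
  constructor
  · intro hns
    by_contra ha
    exact hns (FsplitAux.dir1 a₁ a₂ a₃ a₄ a₆ h₁deg h₁st h₂st h₃st h₄st h₆st f hf ha)
  · intro ha
    exact FsplitAux.dir2 a₁ a₂ a₃ a₄ a₆ h₃deg h₄deg h₆deg h₃st h₄st h₆st f hf ha
end
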